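/- arXiv:2006.00978 — 5 statements merged into one kernel-verified Lean document; each statement's English description precedes it below -/
import Mathlib

section
/- Let N be a one-layer fully-connected ReLU NN with n0 input neurons and n1 hidden neurons. Then the maximal number of linear regions of N equals Σ_{i=0}^{n0} C(n1, i); that is, R_{N,θ} ≤ Σ_{i=0}^{n0} C(n1, i) for every choice of parameters θ = (w_1,…,w_{n1}, b_1,…,b_{n1}), and there exists θ for which equality holds. -/
open Finset

noncomputable section

/-- Pre-activation `Z_k(x;θ) = ⟨w_k, x⟩ + b_k` of a one-layer fully-connected ReLU NN. -/
def fc1Z {n0 n1 : ℕ} (w : Fin n1 → Fin n0 → ℝ) (b : Fin n1 → ℝ)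
    (x : Fin n0 → ℝ) (k : Fin n1) : ℝ :=
  (∑ c, w k c * x c) + b k

/-- The activation region `R(P;θ)`; `P k = true` encodes the sign `+1` and
`P k = false` the sign `−1`. -/
def fc1Region {n0 n1 : ℕ} (w : Fin n1 → Fin n0 → ℝ) (b : Fin n1 → ℝ)
    (P : Fin n1 → Bool) : Set (Fin n0 → ℝ) :=
  {x | ∀ k, if P k then 0 < fc1Z w b x k else fc1Z w b x k < 0}

/-- `R_{N,θ}`: the number of (distinct) nonempty activation regions. -/
def fc1NumRegions {n0 n1 : ℕ} (w : Fin n1 → Fin n0 → ℝ) (b : Fin n1 → ℝ) : ℕ :=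
  Set.ncard {R : Set (Fin n0 → ℝ) | (∃ P, R = fc1Region w b P) ∧ R.Nonempty}

namespace FC1Aux

attribute [local instance] Classical.propDecidable

variable {E : Type} [AddCommGroup E] [Module ℝ E]

/-- abstract region of a sign pattern for a family of affine functionals -/
def aRegion {m : ℕ} (f : Fin m → E →ᵃ[ℝ] ℝ) (P : Fin m → Bool) : Set E :=
  {x | ∀ k, if P k then 0 < f k x else f k x < 0}

/-- the finset of sign patterns with nonempty region -/
def aPats {m : ℕ} (f : Fin m → E →ᵃ[ℝ] ℝ) : Finset (Fin m → Bool) :=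
  Finset.univ.filter fun P => (aRegion f P).Nonempty

lemma mem_pos {m : ℕ} {f : Fin m → E →ᵃ[ℝ] ℝ} {P : Fin m → Bool} {x : E}
    (hx : x ∈ aRegion f P) {k : Fin m} (h : P k = true) : 0 < f k x := by
  have := hx k; rwa [if_pos h] at this

lemma mem_neg {m : ℕ} {f : Fin m → E →ᵃ[ℝ] ℝ} {P : Fin m → Bool} {x : E}
    (hx : x ∈ aRegion f P) {k : Fin m} (h : P k = false) : f k x < 0 := by
  have := hx k; rwa [if_neg (by simp [h])] at this

lemma mem_aPats {m : ℕ} {f : Fin m → E →ᵃ[ℝ] ℝ} {P : Fin m → Bool} :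
    P ∈ aPats f ↔ (aRegion f P).Nonempty := by simp [aPats]

lemma pattern_eq {m : ℕ} {f : Fin m → E →ᵃ[ℝ] ℝ} {P : Fin m → Bool} {x : E}
    (hx : x ∈ aRegion f P) : P = fun k => decide (0 < f k x) := by
  funext k
  have := hx k
  by_cases h : P k <;> simp [h] at this ⊢ <;> [skip; linarith]
  exact this

lemma ne_zero_of_mem {m : ℕ} {f : Fin m → E →ᵃ[ℝ] ℝ} {P : Fin m → Bool} {x : E}
    (hx : x ∈ aRegion f P) (k : Fin m) : f k x ≠ 0 := by
  have := hx k
  by_cases h : P k <;> simp [h] at this <;> intro hh <;> rw [hh] at this <;> simp at this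

lemma mem_aRegion_decide {m : ℕ} {f : Fin m → E →ᵃ[ℝ] ℝ} {x : E}
    (h : ∀ k, f k x ≠ 0) : x ∈ aRegion f (fun k => decide (0 < f k x)) := by
  intro k
  by_cases hk : 0 < f k x
  · simp [hk]
  · have : f k x < 0 := lt_of_le_of_ne (not_lt.mp hk) (h k)
    simp [hk, this]

lemma mem_aRegion_succ {m : ℕ} {f : Fin (m+1) → E →ᵃ[ℝ] ℝ} {s : Fin (m+1) → Bool} {x : E} :
    x ∈ aRegion f s ↔ x ∈ aRegion (f ∘ Fin.castSucc) (s ∘ Fin.castSucc) ∧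
      (if s (Fin.last m) then 0 < f (Fin.last m) x else f (Fin.last m) x < 0) := by
  constructor
  · intro h; exact ⟨fun k => h _, h _⟩
  · rintro ⟨h1, h2⟩ k
    exact Fin.lastCases h2 (fun k => h1 k) k

lemma eval_add_smul (h : E →ᵃ[ℝ] ℝ) (x v : E) (δ : ℝ) :
    h (δ • v + x) = δ * h.linear v + h x := by
  have := h.map_vadd x (δ • v)
  simpa [map_smul, smul_eq_mul] using this

/-- perturbation: a point of a region can be moved slightly in any direction staying inside -/
lemma aRegion_perturb {m : ℕ} {f : Fin m → E →ᵃ[ℝ] ℝ} {P : Fin m → Bool} {x : E}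
    (hx : x ∈ aRegion f P) (v : E) :
    ∃ ε : ℝ, 0 < ε ∧ ∀ δ : ℝ, |δ| ≤ ε → (δ • v + x) ∈ aRegion f P := by
  have key : ∀ k : Fin m, ∃ e : ℝ, 0 < e ∧
      ∀ δ : ℝ, |δ| ≤ e → |δ * (f k).linear v| < |f k x| := by
    intro k
    have ha : 0 < |f k x| := abs_pos.mpr (ne_zero_of_mem hx k)
    refine ⟨|f k x| / (|(f k).linear v| + 1), by positivity, fun δ hδ => ?_⟩
    have hL : (0:ℝ) ≤ |(f k).linear v| := abs_nonneg _
    calc |δ * (f k).linear v| = |δ| * |(f k).linear v| := abs_mul _ _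
      _ ≤ (|f k x| / (|(f k).linear v| + 1)) * |(f k).linear v| :=
          mul_le_mul_of_nonneg_right hδ hL
      _ < |f k x| := by
          rw [div_mul_eq_mul_div, div_lt_iff₀ (by linarith)]
          nlinarith
  choose εf hpos hbound using key
  classical
  refine ⟨(insert (1:ℝ) (Finset.univ.image εf)).min' (insert_nonempty _ _), ?_, ?_⟩
  · rw [Finset.lt_min'_iff]
    intro b hb
    rcases Finset.mem_insert.mp hb with rfl | hb
    · exact one_pos
    · obtain ⟨k, -, rfl⟩ := Finset.mem_image.mp hb
      exact hpos k
  · intro δ hδ k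
    have hδk : |δ| ≤ εf k := le_trans hδ (Finset.min'_le _ _
      (Finset.mem_insert_of_mem (Finset.mem_image_of_mem εf (Finset.mem_univ k))))
    have hlt := hbound k δ hδk
    have heval := eval_add_smul (f k) x v δ
    show if P k then 0 < f k (δ • v + x) else f k (δ • v + x) < 0
    rcases Bool.eq_false_or_eq_true (P k) with h | h
    · rw [if_pos h]
      have hPk := mem_pos hx h
      rw [abs_of_pos hPk] at hlt
      have := abs_lt.mp hlt
      rw [heval]; linarith [this.1]
    · rw [if_neg (by simp [h])]
      have hPk := mem_neg hx h
      rw [abs_of_neg hPk] at hlt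
      have := abs_lt.mp hlt
      rw [heval]; linarith [this.2]

lemma convex_comb_pos {a b θ : ℝ} (ha : 0 < a) (hb : 0 < b) (h0 : 0 ≤ θ) (h1 : θ ≤ 1) :
    0 < (1 - θ) * a + θ * b := by
  rcases lt_or_ge θ 1 with h | h
  · nlinarith [mul_pos (show (0:ℝ) < 1 - θ by linarith) ha, mul_nonneg h0 hb.le]
  · have hθ : θ = 1 := le_antisymm h1 h
    rw [hθ]; ring_nf; linarith

/-- intermediate value on a segment inside a convex region -/
lemma exists_zero_between {m : ℕ} {f : Fin m → E →ᵃ[ℝ] ℝ} {P : Fin m → Bool} {x y : E}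
    (hx : x ∈ aRegion f P) (hy : y ∈ aRegion f P) (g : E →ᵃ[ℝ] ℝ)
    (hgx : g x < 0) (hgy : 0 < g y) : ∃ z ∈ aRegion f P, g z = 0 := by
  set θ : ℝ := g x / (g x - g y) with hθdef
  have hne : g x - g y ≠ 0 := by linarith
  have hθ0 : 0 ≤ θ := le_of_lt (div_pos_iff.mpr (Or.inr ⟨hgx, by linarith⟩))
  have hθ1 : θ ≤ 1 := by
    rw [hθdef, div_le_iff_of_neg (show g x - g y < 0 by linarith)]; linarith
  refine ⟨AffineMap.lineMap x y θ, ?_, ?_⟩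
  · intro k
    have hk := (f k).apply_lineMap x y θ
    show if P k then 0 < f k (AffineMap.lineMap x y θ) else f k (AffineMap.lineMap x y θ) < 0
    rw [hk, AffineMap.lineMap_apply_module, smul_eq_mul, smul_eq_mul]
    rcases Bool.eq_false_or_eq_true (P k) with h | h
    · rw [if_pos h]
      exact convex_comb_pos (mem_pos hx h) (mem_pos hy h) hθ0 hθ1
    · rw [if_neg (by simp [h])]
      have := convex_comb_pos (neg_pos.mpr (mem_neg hx h)) (neg_pos.mpr (mem_neg hy h)) hθ0 hθ1
      linarith
  · have hz : (1 - θ) * g x + θ * g y = 0 := by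
      rw [hθdef]; field_simp; ring
    rw [g.apply_lineMap, AffineMap.lineMap_apply_module, smul_eq_mul, smul_eq_mul]
    exact hz

/-- affine inclusion of a submodule, translated by `p₀` -/
def inclAff (K : Submodule ℝ E) (p₀ : E) : K →ᵃ[ℝ] E where
  toFun y := p₀ + (y : E)
  linear := K.subtype
  map_vadd' p v := by
    simp only [Submodule.coe_subtype, vadd_eq_add, Submodule.coe_add]
    abel

lemma inclAff_apply (K : Submodule ℝ E) (p₀ : E) (y : K) : inclAff K p₀ y = p₀ + (y : E) := rfl

lemma inclAff_linear (K : Submodule ℝ E) (p₀ : E) : (inclAff K p₀).linear = K.subtype := rfl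

lemma comp_inclAff_apply {m : ℕ} (f : Fin m → E →ᵃ[ℝ] ℝ) (K : Submodule ℝ E) (p₀ : E)
    (k : Fin m) (y : K) : ((f k).comp (inclAff K p₀)) y = f k (p₀ + (y : E)) := rfl

lemma region_incl {m : ℕ} (f : Fin m → E →ᵃ[ℝ] ℝ) (K : Submodule ℝ E) (p₀ : E)
    (t : Fin m → Bool) (y : K) :
    y ∈ aRegion (fun k => (f k).comp (inclAff K p₀)) t ↔ (p₀ + (y : E)) ∈ aRegion f t :=
  Iff.rfl

lemma pascal_sum (m d : ℕ) :
    ∑ i ∈ Finset.range (d+1), (m+1).choose i =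
      ∑ i ∈ Finset.range (d+1), m.choose i + ∑ i ∈ Finset.range d, m.choose i := by
  induction d with
  | zero => simp
  | succ d ih =>
    rw [Finset.sum_range_succ, ih, Finset.sum_range_succ (fun i => m.choose i) (d+1),
      Finset.sum_range_succ (fun i => m.choose i) d, Nat.choose_succ_succ]
    ring

lemma one_le_sum_choose (m d : ℕ) : 1 ≤ ∑ i ∈ Finset.range (d+1), m.choose i :=
  le_trans (by simp) (Finset.single_le_sum (f := fun i => m.choose i)
    (fun _ _ => Nat.zero_le _) (Finset.mem_range.mpr (Nat.succ_pos d)))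

lemma sum_choose_zero (d : ℕ) : ∑ i ∈ Finset.range (d+1), Nat.choose 0 i = 1 := by
  induction d with
  | zero => simp
  | succ d ih => rw [Finset.sum_range_succ, ih, Nat.choose_zero_succ]

lemma fiber_injOn_last {m : ℕ} (t : Fin m → Bool) {s₁ s₂ : Fin (m+1) → Bool}
    (h₁ : s₁ ∘ Fin.castSucc = t) (h₂ : s₂ ∘ Fin.castSucc = t)
    (hlast : s₁ (Fin.last m) = s₂ (Fin.last m)) : s₁ = s₂ := by
  funext j
  refine Fin.lastCases hlast (fun k => ?_) j
  have e₁ := congrFun h₁ k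
  have e₂ := congrFun h₂ k
  simp only [Function.comp_apply] at e₁ e₂
  rw [e₁, e₂]

lemma both_signs {m : ℕ} {f : Fin (m+1) → E →ᵃ[ℝ] ℝ} {t : Fin m → Bool}
    {s₁ s₂ : Fin (m+1) → Bool}
    (h₁ : s₁ ∘ Fin.castSucc = t) (h₂ : s₂ ∘ Fin.castSucc = t)
    (hne : s₁ (Fin.last m) ≠ s₂ (Fin.last m))
    (hr₁ : (aRegion f s₁).Nonempty) (hr₂ : (aRegion f s₂).Nonempty) :
    ∃ x₁ x₂ : E, x₁ ∈ aRegion (f ∘ Fin.castSucc) t ∧ x₂ ∈ aRegion (f ∘ Fin.castSucc) t ∧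
      f (Fin.last m) x₁ < 0 ∧ 0 < f (Fin.last m) x₂ := by
  obtain ⟨y₁, hy₁⟩ := hr₁
  obtain ⟨y₂, hy₂⟩ := hr₂
  have hm₁ := mem_aRegion_succ.mp hy₁
  have hm₂ := mem_aRegion_succ.mp hy₂
  rw [h₁] at hm₁
  rw [h₂] at hm₂
  rcases Bool.eq_false_or_eq_true (s₁ (Fin.last m)) with hb | hb
  · have hb₂ : s₂ (Fin.last m) = false := by
      rcases Bool.eq_false_or_eq_true (s₂ (Fin.last m)) with h' | h'
      · exact absurd (hb.trans h'.symm) hne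
      · exact h'
    exact ⟨y₂, y₁, hm₂.1, hm₁.1, by simpa [hb₂] using hm₂.2, by simpa [hb] using hm₁.2⟩
  · have hb₂ : s₂ (Fin.last m) = true := by
      rcases Bool.eq_false_or_eq_true (s₂ (Fin.last m)) with h' | h'
      · exact h'
      · exact absurd (hb.trans h'.symm) hne
    exact ⟨y₁, y₂, hm₁.1, hm₂.1, by simpa [hb] using hm₁.2, by simpa [hb₂] using hm₂.2⟩

theorem card_aPats_le :
    ∀ (m d : ℕ) (E : Type) [AddCommGroup E] [Module ℝ E] [FiniteDimensional ℝ E]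
      (f : Fin m → E →ᵃ[ℝ] ℝ), Module.finrank ℝ E ≤ d →
      (aPats f).card ≤ ∑ i ∈ Finset.range (d + 1), m.choose i := by
  intro m
  induction m with
  | zero =>
    intro d E _ _ _ f _
    calc (aPats f).card ≤ Fintype.card (Fin 0 → Bool) := Finset.card_le_univ _
      _ = 1 := by simp
      _ ≤ _ := one_le_sum_choose 0 d
  | succ m ih =>
    intro d E _ _ _ f hd
    classical
    set fm : Fin m → E →ᵃ[ℝ] ℝ := f ∘ Fin.castSucc with hfm
    have hmap : ∀ s ∈ aPats f, (s ∘ Fin.castSucc) ∈ aPats fm := by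
      intro s hs
      obtain ⟨x, hx⟩ := mem_aPats.mp hs
      exact mem_aPats.mpr ⟨x, (mem_aRegion_succ.mp hx).1⟩
    have hcard := Finset.card_eq_sum_card_fiberwise hmap
    have fib2 : ∀ t : Fin m → Bool,
        ((aPats f).filter fun s => s ∘ Fin.castSucc = t).card ≤ 2 := by
      intro t
      have h2 : ((aPats f).filter fun s => s ∘ Fin.castSucc = t).card ≤
          (Finset.univ : Finset Bool).card := by
        apply Finset.card_le_card_of_injOn (fun s => s (Fin.last m))
          (fun _ _ => Finset.mem_univ _)
        intro s₁ hs₁ s₂ hs₂ h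
        have h₁ := (Finset.mem_filter.mp (Finset.mem_coe.mp hs₁)).2
        have h₂ := (Finset.mem_filter.mp (Finset.mem_coe.mp hs₂)).2
        exact fiber_injOn_last t h₁ h₂ h
      simpa using h2
    by_cases hlin : (f (Fin.last m)).linear = 0
    · have hconst : ∀ x y : E, f (Fin.last m) x = f (Fin.last m) y := by
        intro x y
        have h := (f (Fin.last m)).map_vadd y (x - y)
        simp only [hlin, LinearMap.zero_apply, vadd_eq_add, zero_add, sub_add_cancel] at h
        exact h
      have fib1 : ∀ t : Fin m → Bool,
          ((aPats f).filter fun s => s ∘ Fin.castSucc = t).card ≤ 1 := by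
        intro t
        apply Finset.card_le_one.mpr
        intro s₁ hs₁ s₂ hs₂
        have h₁ := Finset.mem_filter.mp hs₁
        have h₂ := Finset.mem_filter.mp hs₂
        apply fiber_injOn_last t h₁.2 h₂.2
        by_contra hne
        obtain ⟨x₁, x₂, -, -, hneg, hpos⟩ :=
          both_signs h₁.2 h₂.2 hne (mem_aPats.mp h₁.1) (mem_aPats.mp h₂.1)
        have := hconst x₁ x₂
        linarith
      calc (aPats f).card = _ := hcard
        _ ≤ ∑ t ∈ aPats fm, 1 := Finset.sum_le_sum fun t _ => fib1 t
        _ = (aPats fm).card := by simp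
        _ ≤ ∑ i ∈ Finset.range (d+1), m.choose i := ih d E fm hd
        _ ≤ ∑ i ∈ Finset.range (d+1), (m+1).choose i :=
            Finset.sum_le_sum fun i _ => Nat.choose_le_choose i (Nat.le_succ m)
    · obtain ⟨v, hv⟩ : ∃ v : E, (f (Fin.last m)).linear v ≠ 0 := by
        by_contra h
        push_neg at h
        exact hlin (LinearMap.ext fun v => h v)
      have hnt : Nontrivial E := ⟨v, 0, fun h => hv (by rw [h]; simp)⟩
      have hposrank : 1 ≤ Module.finrank ℝ E := Module.finrank_pos
      obtain ⟨d', rfl⟩ : ∃ d', d = d' + 1 := ⟨d - 1, by omega⟩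
      set L := (f (Fin.last m)).linear with hL
      set p₀ : E := (-(f (Fin.last m) 0) / L v) • v with hp₀def
      have hp₀ : f (Fin.last m) p₀ = 0 := by
        have h := (f (Fin.last m)).map_vadd 0 p₀
        simp only [vadd_eq_add, add_zero] at h
        rw [h, hp₀def, map_smul]
        simp only [smul_eq_mul, vadd_eq_add]
        field_simp
        rw [hL]; ring
      set K := LinearMap.ker L with hK
      set g : Fin m → K →ᵃ[ℝ] ℝ := fun k => (fm k).comp (inclAff K p₀) with hg
      have hKrank : Module.finrank ℝ K ≤ d' := by
        have h2 : Module.finrank ℝ K + 1 = Module.finrank ℝ E := by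
          rw [hK]; exact Module.Dual.finrank_ker_add_one_of_ne_zero (f := L) hlin
        omega
      have hU := ih d' K g hKrank
      have hT := ih (d'+1) E fm hd
      have fib1' : ∀ t ∈ aPats fm, t ∉ aPats g →
          ((aPats f).filter fun s => s ∘ Fin.castSucc = t).card ≤ 1 := by
        intro t ht htg
        apply Finset.card_le_one.mpr
        intro s₁ hs₁ s₂ hs₂
        have h₁ := Finset.mem_filter.mp hs₁
        have h₂ := Finset.mem_filter.mp hs₂
        apply fiber_injOn_last t h₁.2 h₂.2
        by_contra hne
        obtain ⟨x₁, x₂, hx₁, hx₂, hneg, hpos⟩ :=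
          both_signs h₁.2 h₂.2 hne (mem_aPats.mp h₁.1) (mem_aPats.mp h₂.1)
        obtain ⟨z, hz, hz0⟩ := exists_zero_between hx₁ hx₂ (f (Fin.last m)) hneg hpos
        apply htg
        have hzK : z - p₀ ∈ K := by
          rw [hK, LinearMap.mem_ker, hL]
          have h := (f (Fin.last m)).linearMap_vsub z p₀
          simp only [vsub_eq_sub] at h
          rw [h, hz0, hp₀, sub_zero]
        refine mem_aPats.mpr ⟨⟨z - p₀, hzK⟩, ?_⟩
        rw [hg, region_incl]
        simpa [add_sub_cancel] using hz
      calc (aPats f).card = _ := hcard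
        _ ≤ ∑ t ∈ aPats fm, (1 + if t ∈ aPats g then 1 else 0) := by
            apply Finset.sum_le_sum
            intro t ht
            by_cases h : t ∈ aPats g
            · simpa [h] using fib2 t
            · simpa [h] using fib1' t ht h
        _ = (aPats fm).card + ∑ t ∈ aPats fm, (if t ∈ aPats g then 1 else 0) := by
            rw [Finset.sum_add_distrib]; simp
        _ ≤ (aPats fm).card + (aPats g).card := by
            gcongr
            rw [← Finset.card_filter]
            apply Finset.card_le_card
            intro x hx
            exact (Finset.mem_filter.mp hx).2
        _ ≤ ∑ i ∈ Finset.range (d'+1+1), m.choose i + ∑ i ∈ Finset.range (d'+1), m.choose i :=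
            Nat.add_le_add hT hU
        _ = _ := (pascal_sum m (d'+1)).symm

def csEmb (m : ℕ) : Fin m ↪ Fin (m+1) := ⟨Fin.castSucc, Fin.castSucc_injective m⟩

lemma eq_smul_of_vanish {ψ φ : E →ₗ[ℝ] ℝ} {u : E} (hu : ψ u ≠ 0)
    (h : ∀ y : E, ψ y = 0 → φ y = 0) : ∃ c : ℝ, φ = c • ψ := by
  refine ⟨φ u / ψ u, LinearMap.ext fun x => ?_⟩
  have hker : ψ (x - (ψ x / ψ u) • u) = 0 := by
    rw [map_sub, map_smul, smul_eq_mul]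
    field_simp
    ring
  have h2 := h _ hker
  rw [map_sub, map_smul, smul_eq_mul, sub_eq_zero] at h2
  rw [LinearMap.smul_apply, smul_eq_mul, h2]
  field_simp

/-- General position for a family of affine functionals, relative to a dimension `d`. -/
def GenPos {m : ℕ} (d : ℕ) (f : Fin m → E →ᵃ[ℝ] ℝ) : Prop :=
  ∀ S : Finset (Fin m),
    (S.card ≤ d →
      (∃ x : E, ∀ k ∈ S, f k x = 0) ∧
      (∀ c : Fin m → ℝ, (∑ k ∈ S, c k • (f k).linear) = 0 → ∀ k ∈ S, c k = 0)) ∧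
    (d < S.card → ∀ x : E, ∃ k ∈ S, f k x ≠ 0)

theorem le_card_aPats :
    ∀ (m d : ℕ) (E : Type) [AddCommGroup E] [Module ℝ E] [FiniteDimensional ℝ E]
      (f : Fin m → E →ᵃ[ℝ] ℝ), Module.finrank ℝ E = d → GenPos d f →
      ∑ i ∈ Finset.range (d + 1), m.choose i ≤ (aPats f).card := by
  intro m
  induction m with
  | zero =>
    intro d E _ _ _ f _ _
    rw [sum_choose_zero d]
    exact Finset.card_pos.mpr ⟨fun k => k.elim0, mem_aPats.mpr ⟨0, fun k => k.elim0⟩⟩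
  | succ m ih =>
    intro d E _ _ _ f hrank hgp
    classical
    rcases d with _ | d'
    · -- dimension 0 : exactly one region, and the sum is 1
      have hne : ∀ (k : Fin (m+1)) (x : E), f k x ≠ 0 := by
        intro k x h
        obtain ⟨j, hj, hnej⟩ := (hgp {k}).2 (by simp) x
        rw [Finset.mem_singleton] at hj
        exact hnej (hj ▸ h)
      have hpat : (fun k => decide (0 < f k 0)) ∈ aPats f :=
        mem_aPats.mpr ⟨0, mem_aRegion_decide (fun k => hne k 0)⟩
      calc ∑ i ∈ Finset.range 1, (m+1).choose i = 1 := by simp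
        _ ≤ (aPats f).card := Finset.card_pos.mpr ⟨_, hpat⟩
    · set fm : Fin m → E →ᵃ[ℝ] ℝ := f ∘ Fin.castSucc with hfm
      set flast := f (Fin.last m) with hflast
      have hsing := (hgp {Fin.last m}).1 (by simp)
      have hlin : flast.linear ≠ 0 := by
        intro h0
        have := hsing.2 (fun _ => 1) (by simp [← hflast, h0]) (Fin.last m)
          (Finset.mem_singleton_self _)
        norm_num at this
      obtain ⟨p₀, hp₀'⟩ := hsing.1
      have hp₀ : flast p₀ = 0 := hp₀' _ (Finset.mem_singleton_self _)
      obtain ⟨v, hv⟩ : ∃ v, flast.linear v ≠ 0 := by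
        by_contra h; push_neg at h; exact hlin (LinearMap.ext h)
      set K := LinearMap.ker flast.linear with hK
      set g : Fin m → K →ᵃ[ℝ] ℝ := fun k => (fm k).comp (inclAff K p₀) with hg
      have hnotmem : ∀ S : Finset (Fin m), Fin.last m ∉ S.map (csEmb m) := by
        intro S h
        obtain ⟨k, -, hk⟩ := Finset.mem_map.mp h
        exact absurd hk (ne_of_lt (Fin.castSucc_lt_last k))
      have hflast_add : ∀ y : K, flast (p₀ + (y : E)) = 0 := by
        intro y
        have h := flast.map_vadd p₀ (y : E)
        simp only [vadd_eq_add] at h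
        rw [add_comm, h, LinearMap.mem_ker.mp y.2, hp₀, add_zero]
      -- general position of the first m functionals
      have hgp_fm : GenPos (d'+1) fm := by
        intro S
        have h := hgp (S.map (csEmb m))
        constructor
        · intro hcard
          have h1 := h.1 (by rwa [Finset.card_map])
          constructor
          · obtain ⟨x, hx⟩ := h1.1
            exact ⟨x, fun k hk => hx _ (Finset.mem_map_of_mem _ hk)⟩
          · intro c hc k hk
            set C : Fin (m+1) → ℝ := Fin.lastCases 0 c with hC
            have hsum : ∑ j ∈ S.map (csEmb m), C j • (f j).linear = 0 := by
              rw [Finset.sum_map]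
              have he : ∀ k : Fin m, C (csEmb m k) • (f (csEmb m k)).linear
                  = c k • (fm k).linear := by
                intro k
                simp [hC, csEmb, hfm]
              rw [Finset.sum_congr rfl (fun k _ => he k)]
              exact hc
            have := h1.2 C hsum (Fin.castSucc k) (Finset.mem_map_of_mem _ hk)
            simpa [hC] using this
        · intro hcard x
          obtain ⟨j, hj, hnej⟩ := h.2 (by rwa [Finset.card_map]) x
          obtain ⟨k, hk, rfl⟩ := Finset.mem_map.mp hj
          exact ⟨k, hk, hnej⟩
      -- general position of the induced arrangement on the hyperplane
      have hgp_g : GenPos d' g := by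
        intro S
        set S' : Finset (Fin (m+1)) := insert (Fin.last m) (S.map (csEmb m)) with hS'
        have hcardS' : S'.card = S.card + 1 := by
          rw [hS', Finset.card_insert_of_notMem (hnotmem S), Finset.card_map]
        constructor
        · intro hcard
          have h1 := (hgp S').1 (by omega)
          constructor
          · obtain ⟨x, hx⟩ := h1.1
            have hxl : flast x = 0 := hx _ (Finset.mem_insert_self _ _)
            have hxK : x - p₀ ∈ K := by
              rw [hK, LinearMap.mem_ker]
              have h := flast.linearMap_vsub x p₀
              simp only [vsub_eq_sub] at h
              rw [h, hxl, hp₀, sub_zero]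
            refine ⟨⟨x - p₀, hxK⟩, fun k hk => ?_⟩
            show (fm k).comp (inclAff K p₀) _ = 0
            rw [comp_inclAff_apply]
            rw [show p₀ + (x - p₀) = x by abel]
            exact hx _ (Finset.mem_insert_of_mem (Finset.mem_map_of_mem _ hk))
          · intro c hc k hk
            set φ : E →ₗ[ℝ] ℝ := ∑ j ∈ S, c j • (f (Fin.castSucc j)).linear with hφ
            have hφK : ∀ y : E, flast.linear y = 0 → φ y = 0 := by
              intro y hy
              have hyK : y ∈ K := LinearMap.mem_ker.mpr hy
              have h0 := congrArg (fun L : K →ₗ[ℝ] ℝ => L ⟨y, hyK⟩) hc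
              simp only [LinearMap.coe_sum, Finset.sum_apply, LinearMap.smul_apply,
                smul_eq_mul, LinearMap.zero_apply] at h0
              rw [hφ]
              simp only [LinearMap.coe_sum, Finset.sum_apply, LinearMap.smul_apply,
                smul_eq_mul]
              rw [← h0]
              apply Finset.sum_congr rfl
              intro j hj
              congr 1
            obtain ⟨c', hc'⟩ := eq_smul_of_vanish hv hφK
            set C : Fin (m+1) → ℝ := Fin.lastCases (-c') c with hC
            have hsum : ∑ j ∈ S', C j • (f j).linear = 0 := by
              rw [hS', Finset.sum_insert (hnotmem S), Finset.sum_map]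
              have he : ∀ k : Fin m, C (csEmb m k) • (f (csEmb m k)).linear
                  = c k • (f (Fin.castSucc k)).linear := by
                intro k; simp [hC, csEmb]
              rw [Finset.sum_congr rfl (fun k _ => he k), ← hφ, hc']
              simp only [hC, Fin.lastCases_last, ← hflast]
              ext y; simp
            have hall := ((hgp S').1 (by omega)).2 C hsum
            have := hall (Fin.castSucc k) (Finset.mem_insert_of_mem (Finset.mem_map_of_mem _ hk))
            simpa [hC] using this
        · intro hcard y
          obtain ⟨j, hj, hnej⟩ := (hgp S').2 (by omega) (p₀ + (y : E))
          rcases Finset.mem_insert.mp hj with rfl | hj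
          · exact absurd (hflast_add y) hnej
          · obtain ⟨k, hk, rfl⟩ := Finset.mem_map.mp hj
            exact ⟨k, hk, hnej⟩
      have hKrank : Module.finrank ℝ K = d' := by
        have h2 : Module.finrank ℝ K + 1 = Module.finrank ℝ E := by
          rw [hK]; exact Module.Dual.finrank_ker_add_one_of_ne_zero (f := flast.linear) hlin
        omega
      have hU := ih d' K g hKrank hgp_g
      have hT := ih (d'+1) E fm hrank hgp_fm
      have hmap : ∀ s ∈ aPats f, (s ∘ Fin.castSucc) ∈ aPats fm := by
        intro s hs
        obtain ⟨x, hx⟩ := mem_aPats.mp hs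
        exact mem_aPats.mpr ⟨x, (mem_aRegion_succ.mp hx).1⟩
      have hcard := Finset.card_eq_sum_card_fiberwise hmap
      have hsub : aPats g ⊆ aPats fm := by
        intro t ht
        obtain ⟨y, hy⟩ := mem_aPats.mp ht
        exact mem_aPats.mpr ⟨p₀ + (y : E), (region_incl fm K p₀ t y).mp hy⟩
      -- building extensions of a pattern
      have mkfib : ∀ (t : Fin m → Bool) (x' : E), x' ∈ aRegion fm t → flast x' ≠ 0 →
          (fun j => decide (0 < f j x')) ∈ (aPats f).filter (fun s => s ∘ Fin.castSucc = t) := by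
        intro t x' hx' hl
        have hnz : ∀ j, f j x' ≠ 0 := by
          intro j
          refine Fin.lastCases ?_ (fun k => ?_) j
          · exact hl
          · exact ne_zero_of_mem hx' k
        refine Finset.mem_filter.mpr ⟨mem_aPats.mpr ⟨x', mem_aRegion_decide hnz⟩, ?_⟩
        funext k
        rw [pattern_eq hx']
        rfl
      have fib1 : ∀ t ∈ aPats fm,
          1 ≤ ((aPats f).filter fun s => s ∘ Fin.castSucc = t).card := by
        intro t ht
        obtain ⟨x, hx⟩ := mem_aPats.mp ht
        obtain ⟨ε, hε, hεmem⟩ := aRegion_perturb hx v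
        set δ : ℝ := if flast x = 0 then ε else 0 with hδ
        have hδle : |δ| ≤ ε := by
          rw [hδ]; split
          · rw [abs_of_pos hε]
          · rw [abs_zero]; exact le_of_lt hε
        have hx' : δ • v + x ∈ aRegion fm t := hεmem δ hδle
        have hl : flast (δ • v + x) ≠ 0 := by
          rw [eval_add_smul]
          rw [hδ]; split
          · rename_i h0
            rw [h0, add_zero]
            exact mul_ne_zero (ne_of_gt hε) hv
          · rename_i h0
            simpa using h0
        exact Finset.card_pos.mpr ⟨_, mkfib t _ hx' hl⟩
      have fib2 : ∀ t ∈ aPats g,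
          2 ≤ ((aPats f).filter fun s => s ∘ Fin.castSucc = t).card := by
        intro t ht
        obtain ⟨y, hy⟩ := mem_aPats.mp ht
        set x : E := p₀ + (y : E) with hxdef
        have hx : x ∈ aRegion fm t := (region_incl fm K p₀ t y).mp hy
        have hxl : flast x = 0 := hflast_add y
        obtain ⟨ε, hε, hεmem⟩ := aRegion_perturb hx v
        have hmemp : ε • v + x ∈ aRegion fm t := hεmem ε (by rw [abs_of_pos hε])
        have hmemn : (-ε) • v + x ∈ aRegion fm t := hεmem (-ε) (by rw [abs_neg, abs_of_pos hε])
        have ha : flast (ε • v + x) = ε * flast.linear v := by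
          rw [eval_add_smul, hxl, add_zero]
        have hb : flast ((-ε) • v + x) = -(ε * flast.linear v) := by
          rw [eval_add_smul, hxl, add_zero]; ring
        have hne0 : ε * flast.linear v ≠ 0 := mul_ne_zero (ne_of_gt hε) hv
        have hp2 : flast (ε • v + x) ≠ 0 := by rw [ha]; exact hne0
        have hn2 : flast ((-ε) • v + x) ≠ 0 := by rw [hb]; simpa using hne0
        have mp2 := mkfib t _ hmemp hp2
        have mn2 := mkfib t _ hmemn hn2
        apply Finset.one_lt_card.mpr
        refine ⟨_, mp2, _, mn2, ?_⟩
        intro heq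
        have hlasteq := congrFun heq (Fin.last m)
        rw [decide_eq_decide] at hlasteq
        rw [ha, hb] at hlasteq
        rcases lt_or_gt_of_ne hne0 with h | h
        · have := hlasteq.mpr (by linarith)
          linarith
        · have := hlasteq.mp h
          linarith
      calc ∑ i ∈ Finset.range (d'+1+1), (m+1).choose i
          = ∑ i ∈ Finset.range (d'+1+1), m.choose i + ∑ i ∈ Finset.range (d'+1), m.choose i :=
            pascal_sum m (d'+1)
        _ ≤ (aPats fm).card + (aPats g).card := Nat.add_le_add hT hU
        _ = ∑ t ∈ aPats fm, (1 + if t ∈ aPats g then 1 else 0) := by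
            rw [Finset.sum_add_distrib]
            congr 1
            · simp
            · rw [← Finset.card_filter, Finset.filter_mem_eq_inter,
                Finset.inter_eq_right.mpr hsub]
        _ ≤ ∑ t ∈ aPats fm, ((aPats f).filter fun s => s ∘ Fin.castSucc = t).card := by
            apply Finset.sum_le_sum
            intro t ht
            by_cases h : t ∈ aPats g
            · simpa [h] using fib2 t h
            · simpa [h] using fib1 t ht
        _ = (aPats f).card := hcard.symm

/-- the affine functional `x ↦ ⟨v,x⟩ + c` on `Fin n → ℝ` -/
def affOf {n : ℕ} (v : Fin n → ℝ) (c : ℝ) : (Fin n → ℝ) →ᵃ[ℝ] ℝ where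
  toFun x := (∑ i, v i * x i) + c
  linear := ∑ i, v i • (LinearMap.proj i : (Fin n → ℝ) →ₗ[ℝ] ℝ)
  map_vadd' p w := by
    simp only [vadd_eq_add, Pi.add_apply, LinearMap.coe_sum, Finset.sum_apply,
      LinearMap.smul_apply, LinearMap.proj_apply, smul_eq_mul, mul_add,
      Finset.sum_add_distrib]
    ring

lemma affOf_apply {n : ℕ} (v : Fin n → ℝ) (c : ℝ) (x : Fin n → ℝ) :
    affOf v c x = (∑ i, v i * x i) + c := rfl

lemma affOf_linear_apply {n : ℕ} (v : Fin n → ℝ) (c : ℝ) (x : Fin n → ℝ) :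
    (affOf v c).linear x = ∑ i, v i * x i := by
  simp [affOf, LinearMap.coe_sum, Finset.sum_apply, LinearMap.smul_apply,
    LinearMap.proj_apply, smul_eq_mul]

open Polynomial in
theorem genPos_vandermonde (d m : ℕ) :
    GenPos (E := Fin d → ℝ) d
      (fun k : Fin m => affOf (fun c => ((k:ℕ)+1 : ℝ)^(c:ℕ)) (((k:ℕ)+1 : ℝ)^d)) := by
  classical
  set t : Fin m → ℝ := fun k => ((k:ℕ)+1 : ℝ) with ht
  have htinj : Function.Injective t := by
    intro a b h
    simp only [ht] at h
    have : ((a:ℕ):ℝ) = ((b:ℕ):ℝ) := by linarith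
    exact Fin.ext (Nat.cast_injective this)
  intro S
  constructor
  · intro hcard
    constructor
    · -- a common zero, built from a monic polynomial vanishing on `S`
      set q : ℝ[X] := (∏ k ∈ S, (X - C (t k))) * X^(d - S.card) with hq
      have hmonicp : (∏ k ∈ S, (X - C (t k))).Monic :=
        monic_prod_of_monic _ _ (fun k _ => monic_X_sub_C _)
      have hmonic : q.Monic := hmonicp.mul (monic_X_pow _)
      have hdeg : q.natDegree = d := by
        rw [hq, hmonicp.natDegree_mul (monic_X_pow _), natDegree_X_pow]
        rw [natDegree_prod _ _ (fun k _ => X_sub_C_ne_zero _)]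
        simp only [natDegree_X_sub_C]
        rw [Finset.sum_const, smul_eq_mul, mul_one]
        omega
      refine ⟨fun c => q.coeff (c:ℕ), fun k hk => ?_⟩
      have heval : q.eval (t k) = 0 := by
        rw [hq, eval_mul, eval_prod, Finset.prod_eq_zero hk (by simp), zero_mul]
      rw [affOf_apply]
      have hsum : ∑ c : Fin d, (t k)^(c:ℕ) * q.coeff (c:ℕ)
          = ∑ c ∈ Finset.range d, q.coeff c * (t k)^c := by
        rw [Fin.sum_univ_eq_sum_range (fun c => (t k)^c * q.coeff c) d]
        exact Finset.sum_congr rfl fun c _ => mul_comm _ _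
      have heval2 : q.eval (t k) = ∑ c ∈ Finset.range (d+1), q.coeff c * (t k)^c :=
        eval_eq_sum_range' (by omega) _
      rw [Finset.sum_range_succ] at heval2
      have hcd : q.coeff d = 1 := by
        have := hmonic.coeff_natDegree
        rwa [hdeg] at this
      rw [hsum]
      rw [heval, hcd, one_mul] at heval2
      linarith [heval2]
    · -- linear independence via Lagrange interpolation
      intro c hc k hk
      have hScard : 1 ≤ S.card := Finset.card_pos.mpr ⟨k, hk⟩
      have hcoord : ∀ i : ℕ, i < d → ∑ j ∈ S, c j * (t j)^i = 0 := by
        intro i hi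
        have h0 := congrArg (fun L : (Fin d → ℝ) →ₗ[ℝ] ℝ => L (Pi.single ⟨i, hi⟩ 1)) hc
        simp only [LinearMap.coe_sum, Finset.sum_apply, LinearMap.smul_apply,
          smul_eq_mul, LinearMap.zero_apply] at h0
        have hsingle : ∀ j : Fin m,
            (affOf (fun c => (t j)^(c:ℕ)) ((t j)^d)).linear (Pi.single ⟨i, hi⟩ 1)
              = (t j)^i := by
          intro j
          rw [affOf_linear_apply]
          rw [Finset.sum_eq_single (⟨i, hi⟩ : Fin d)]
          · simp
          · intro b _ hb
            rw [Pi.single_apply, if_neg hb, mul_zero]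
          · intro h; exact absurd (Finset.mem_univ _) h
        rw [← h0]
        exact Finset.sum_congr rfl fun j _ => by rw [hsingle j]
      have hinj : Set.InjOn t S := fun a _ b _ h => htinj h
      have hdegL : (Lagrange.basis S t k).natDegree < d := by
        rw [Lagrange.natDegree_basis hinj hk]
        omega
      have hck : c k = ∑ j ∈ S, c j * (Lagrange.basis S t k).eval (t j) := by
        rw [Finset.sum_eq_single k]
        · rw [Lagrange.eval_basis_self hinj hk, mul_one]
        · intro j hj hne
          rw [Lagrange.eval_basis_of_ne (Ne.symm hne) hj, mul_zero]
        · intro h; exact absurd hk h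
      rw [hck]
      calc ∑ j ∈ S, c j * (Lagrange.basis S t k).eval (t j)
          = ∑ j ∈ S, ∑ i ∈ Finset.range d, (Lagrange.basis S t k).coeff i * ((t j)^i * c j) := by
            refine Finset.sum_congr rfl fun j _ => ?_
            rw [eval_eq_sum_range' hdegL, Finset.mul_sum]
            exact Finset.sum_congr rfl fun i _ => by ring
        _ = ∑ i ∈ Finset.range d, (Lagrange.basis S t k).coeff i * ∑ j ∈ S, c j * (t j)^i := by
            rw [Finset.sum_comm]
            refine Finset.sum_congr rfl fun i _ => ?_
            rw [Finset.mul_sum]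
            exact Finset.sum_congr rfl fun j _ => by ring
        _ = 0 := by
            refine Finset.sum_eq_zero fun i hi => ?_
            rw [hcoord i (Finset.mem_range.mp hi), mul_zero]
  · intro hcard x
    by_contra hno
    push_neg at hno
    obtain ⟨S', hS'sub, hS'card⟩ := Finset.exists_subset_card_eq (s := S) (n := d+1) (by omega)
    set q : ℝ[X] := X^d + ∑ c : Fin d, C (x c) * X^(c:ℕ) with hq
    have hcoeffd : q.coeff d = 1 := by
      rw [hq, coeff_add, coeff_X_pow, if_pos rfl, finset_sum_coeff]
      rw [Finset.sum_eq_zero, add_zero]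
      intro i _
      rw [coeff_C_mul, coeff_X_pow, if_neg (by omega : ¬ d = (i:ℕ)), mul_zero]
    have hdeg : q.natDegree ≤ d := by
      refine le_trans (natDegree_add_le _ _) (max_le (le_of_eq (natDegree_X_pow _)) ?_)
      refine natDegree_sum_le_of_forall_le _ _ fun i _ => ?_
      exact le_trans (natDegree_C_mul_X_pow_le _ _) (le_of_lt i.2)
    have heval : ∀ k ∈ S', q.eval (t k) = 0 := by
      intro k hk
      have h0 := hno k (hS'sub hk)
      rw [affOf_apply] at h0
      rw [hq]
      simp only [eval_add, eval_pow, eval_X, eval_finset_sum, eval_mul, eval_C]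
      have hc : ∑ c : Fin d, x c * (t k)^(c:ℕ) = ∑ c : Fin d, (t k)^(c:ℕ) * x c :=
        Finset.sum_congr rfl fun c _ => mul_comm _ _
      rw [hc]
      linarith [h0]
    have hcardim : d < (S'.image t).card := by
      rw [Finset.card_image_of_injOn (fun a _ b _ h => htinj h), hS'card]
      omega
    have hq0 : q = 0 := by
      refine eq_zero_of_natDegree_lt_card_of_eval_eq_zero' q (S'.image t) ?_
        (lt_of_le_of_lt hdeg hcardim)
      intro r hr
      obtain ⟨k, hk, rfl⟩ := Finset.mem_image.mp hr
      exact heval k hk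
    rw [hq0, coeff_zero] at hcoeffd
    norm_num at hcoeffd

end FC1Aux

namespace FC1Aux

lemma fc1NumRegions_eq {n0 n1 : ℕ} (w : Fin n1 → Fin n0 → ℝ) (b : Fin n1 → ℝ) :
    fc1NumRegions w b = (aPats (fun k => affOf (w k) (b k))).card := by
  classical
  set f : Fin n1 → (Fin n0 → ℝ) →ᵃ[ℝ] ℝ := fun k => affOf (w k) (b k) with hf
  have hreg : ∀ P, fc1Region w b P = aRegion f P := fun P => rfl
  have hset : {R : Set (Fin n0 → ℝ) | (∃ P, R = fc1Region w b P) ∧ R.Nonempty}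
      = ↑((aPats f).image (aRegion f)) := by
    ext R
    simp only [Set.mem_setOf_eq, Finset.coe_image, Set.mem_image, Finset.mem_coe, mem_aPats]
    constructor
    · rintro ⟨⟨P, rfl⟩, hne⟩
      rw [hreg] at hne ⊢
      exact ⟨P, hne, rfl⟩
    · rintro ⟨P, hne, rfl⟩
      exact ⟨⟨P, (hreg P).symm⟩, hne⟩
  rw [fc1NumRegions, hset, Set.ncard_coe_finset]
  apply Finset.card_image_of_injOn
  intro P1 h1 P2 h2 heq
  obtain ⟨x, hx⟩ := mem_aPats.mp (Finset.mem_coe.mp h1)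
  have hx2 : x ∈ aRegion f P2 := heq ▸ hx
  exact (pattern_eq hx).trans (pattern_eq hx2).symm

end FC1Aux

open FC1Aux in
/-- For a one-layer fully-connected ReLU NN with `n0` inputs and `n1` hidden
neurons, `R_{N,θ} ≤ ∑_{i=0}^{n0} C(n1,i)` for every `θ`, and equality holds for some `θ`;
i.e. the maximal number of linear regions equals `∑_{i=0}^{n0} C(n1,i)`. -/
theorem statement_2 (n0 n1 : ℕ) :
    (∀ (w : Fin n1 → Fin n0 → ℝ) (b : Fin n1 → ℝ),
      fc1NumRegions w b ≤ ∑ i ∈ Finset.range (n0 + 1), n1.choose i) ∧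
    (∃ (w : Fin n1 → Fin n0 → ℝ) (b : Fin n1 → ℝ),
      fc1NumRegions w b = ∑ i ∈ Finset.range (n0 + 1), n1.choose i) := by
  have hrank : Module.finrank ℝ (Fin n0 → ℝ) = n0 := Module.finrank_fin_fun ℝ
  constructor
  · intro w b
    rw [fc1NumRegions_eq]
    exact card_aPats_le n1 n0 (Fin n0 → ℝ) (fun k => affOf (w k) (b k)) (le_of_eq hrank)
  · refine ⟨fun k c => (((k:ℕ):ℝ)+1)^(c:ℕ), fun k => (((k:ℕ):ℝ)+1)^n0, ?_⟩
    rw [fc1NumRegions_eq]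
    apply le_antisymm
    · exact card_aPats_le n1 n0 (Fin n0 → ℝ) _ (le_of_eq hrank)
    · exact le_card_aPats n1 n0 (Fin n0 → ℝ) _ hrank (genPos_vandermonde n0 n1)

end
end

section
/- Let N be a one-layer ReLU CNN with input dimension n0⁽¹⁾×n0⁽²⁾×d0, hidden layer dimension n1⁽¹⁾×n1⁽²⁾×d1, d1 filters of dimension f1⁽¹⁾×f1⁽²⁾×d0 and stride s1. Then for every choice of parameters θ, the number of nonempty activation regions satisfies R_{N,θ} ≤ Σ_{(t_{i,j}) ∈ K_N} Π_{(i,j) ∈ I_N} C(d1, t_{i,j}). -/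
open Finset

noncomputable section

/-- Extend a finite 3-dimensional array (an element of `ℝ^{p×q×r}`) to all of `ℕ³` by zero. -/
def inputExt {p q r : ℕ} (X : Fin p → Fin q → Fin r → ℝ) : ℕ → ℕ → ℕ → ℝ :=
  fun i j k => if h : i < p ∧ j < q ∧ k < r then X ⟨i, h.1⟩ ⟨j, h.2.1⟩ ⟨k, h.2.2⟩ else 0

/-- Pre-activation `Z_{i,j,k}(X;θ)` of a one-layer CNN with stride `s1`
(0-based spatial indices `i j`). -/
def convZ {f1 f2 d0 d1 : ℕ} (s1 : ℕ)
    (W : Fin d1 → Fin f1 → Fin f2 → Fin d0 → ℝ) (B : Fin d1 → ℝ)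
    (x : ℕ → ℕ → ℕ → ℝ) (i j : ℕ) (k : Fin d1) : ℝ :=
  (∑ a : Fin f1, ∑ b : Fin f2, ∑ c : Fin d0,
    W k a b c * x (a.1 + i * s1) (b.1 + j * s1) c.1) + B k

/-- The activation region `R(P;θ)` of a one-layer ReLU CNN: the hidden layer has spatial
dimensions `n1⁽¹⁾ = ⌊(n01−f1)/s1⌋+1` and `n1⁽²⁾ = ⌊(n02−f2)/s1⌋+1`, and `P i j k = true`
encodes the sign `+1`, `P i j k = false` the sign `−1`. -/
def convRegion (n01 n02 d0 f1 f2 s1 d1 : ℕ)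
    (W : Fin d1 → Fin f1 → Fin f2 → Fin d0 → ℝ) (B : Fin d1 → ℝ)
    (P : ℕ → ℕ → ℕ → Bool) : Set (Fin n01 → Fin n02 → Fin d0 → ℝ) :=
  {X | ∀ i j, i < (n01 - f1) / s1 + 1 → j < (n02 - f2) / s1 + 1 → ∀ k : Fin d1,
    if P i j k.1 then 0 < convZ s1 W B (inputExt X) i j k
    else convZ s1 W B (inputExt X) i j k < 0}

/-- `R_{N,θ}`: the number of (distinct) nonempty activation regions. -/
def convNumRegions (n01 n02 d0 f1 f2 s1 d1 : ℕ)
    (W : Fin d1 → Fin f1 → Fin f2 → Fin d0 → ℝ) (B : Fin d1 → ℝ) : ℕ :=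
  Set.ncard {R : Set (Fin n01 → Fin n02 → Fin d0 → ℝ) |
    (∃ P, R = convRegion n01 n02 d0 f1 f2 s1 d1 W B P) ∧ R.Nonempty}

/-- `R_N = max_θ R_{N,θ}`. -/
def convMaxRegions (n01 n02 d0 f1 f2 s1 d1 : ℕ) : ℕ :=
  sSup {m | ∃ W B, m = convNumRegions n01 n02 d0 f1 f2 s1 d1 W B}

/-- `S_{i,j}`: the set of (0-based) indexes of the input neurons involved in the computation
of the pre-activations at spatial position `p = (i,j)`. -/
def windowSet (f1 f2 d0 s1 : ℕ) (p : ℕ × ℕ) : Finset (ℕ × ℕ × ℕ) :=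
  (Finset.range f1 ×ˢ Finset.range f2 ×ˢ Finset.range d0).image
    (fun q => (q.1 + p.1 * s1, q.2.1 + p.2 * s1, q.2.2))

/-- `K_N`: families `(t_{i,j})_{(i,j) ∈ I_N}` of nonnegative integers such that
`∑_{(i,j)∈J} t_{i,j} ≤ #(∪_{(i,j)∈J} S_{i,j})` for every `J ⊆ I_N`. -/
def convKN (n01 n02 d0 f1 f2 s1 : ℕ) :
    Set (Fin ((n01 - f1) / s1 + 1) × Fin ((n02 - f2) / s1 + 1) → ℕ) :=
  {t | ∀ J : Finset (Fin ((n01 - f1) / s1 + 1) × Fin ((n02 - f2) / s1 + 1)),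
    ∑ p ∈ J, t p ≤ (J.biUnion (fun p => windowSet f1 f2 d0 s1 (p.1.1, p.2.1))).card}

/-- The quantity `∑_{t ∈ K_N} ∏_{(i,j) ∈ I_N} C(d1, t_{i,j})`. -/
def convRNFormula (n01 n02 d0 f1 f2 s1 d1 : ℕ) : ℕ :=
  ∑ᶠ t ∈ convKN n01 n02 d0 f1 f2 s1,
    ∏ p : Fin ((n01 - f1) / s1 + 1) × Fin ((n02 - f2) / s1 + 1), d1.choose (t p)

section Part1
attribute [local instance] Classical.propDecidable
variable {ι : Type} [Fintype ι] [DecidableEq ι]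

def myIndep {E : Type} [AddCommGroup E] [Module ℝ E] (a : ι → E →ₗ[ℝ] ℝ) (S : Finset ι) : Prop :=
  ∀ g : ι → ℝ, (∑ i ∈ S, g i • a i) = 0 → ∀ i ∈ S, g i = 0

def indepF {E : Type} [AddCommGroup E] [Module ℝ E] (a : ι → E →ₗ[ℝ] ℝ) (s : Finset ι) :
    Finset (Finset ι) :=
  s.powerset.filter (myIndep a)

def realizableF {E : Type} [AddCommGroup E] [Module ℝ E] (s : Finset ι)
    (a : ι → E →ₗ[ℝ] ℝ) (b : ι → ℝ) : Finset (ι → Bool) :=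
  Finset.univ.filter (fun P => (∀ i, i ∉ s → P i = false) ∧
    ∃ x : E, ∀ i ∈ s, if P i then 0 < a i x + b i else a i x + b i < 0)

theorem realizable_le_indep : ∀ (s : Finset ι), ∀ (E : Type) [AddCommGroup E] [Module ℝ E],
    ∀ (a : ι → E →ₗ[ℝ] ℝ) (b : ι → ℝ),
    (realizableF s a b).card ≤ (indepF a s).card := by
  intro s
  induction s using Finset.induction_on with
  | empty =>
    intro E _ _ a b
    have h1 : realizableF (∅ : Finset ι) a b ⊆ {fun _ => false} := by
      intro P hP
      simp only [realizableF, mem_filter] at hP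
      simp only [mem_singleton]
      funext i; exact hP.2.1 i (by simp)
    have h2 : (∅ : Finset ι) ∈ indepF a ∅ := by
      simp only [indepF, mem_filter, mem_powerset, Finset.Subset.refl, true_and]
      intro g _ i hi; exact absurd hi (Finset.notMem_empty i)
    calc (realizableF (∅ : Finset ι) a b).card ≤ 1 := by
          simpa using Finset.card_le_card h1
      _ ≤ (indepF a (∅ : Finset ι)).card := Finset.card_pos.mpr ⟨_, h2⟩
  | @insert j s hj IH =>
    intro E _ _ a b
    set T := realizableF (insert j s) a b with hT
    set Rs := realizableF s a b with hRs
    set Tt := T.filter (fun P => P j = true) with hTt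
    set Tf := T.filter (fun P => ¬ P j = true) with hTf
    set St := Tt.image (fun P => Function.update P j false) with hSt
    -- injectivity of update on Tt
    have hSt_card : St.card = Tt.card := by
      apply Finset.card_image_of_injOn
      intro P hP P' hP' hupd
      have hPj : P j = true := (Finset.mem_filter.mp hP).2
      have hP'j : P' j = true := (Finset.mem_filter.mp hP').2
      funext i
      by_cases hij : i = j
      · rw [hij, hPj, hP'j]
      · have := congrFun hupd i
        simpa [Function.update_of_ne hij] using this
    have hTf_sub : Tf ⊆ Rs := by
      intro P hP
      obtain ⟨hPT, hPj⟩ := Finset.mem_filter.mp hP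
      simp only [hT, realizableF, mem_filter, mem_univ, true_and] at hPT
      obtain ⟨hsupp, x, hx⟩ := hPT
      simp only [hRs, realizableF, mem_filter, mem_univ, true_and]
      refine ⟨fun i hi => ?_, x, fun i hi => hx i (Finset.mem_insert_of_mem hi)⟩
      by_cases hij : i = j
      · subst hij; exact Bool.not_eq_true _ |>.mp hPj
      · exact hsupp i (fun hmem => (Finset.mem_insert.mp hmem).elim hij hi)
    have hSt_sub : St ⊆ Rs := by
      intro Q hQ
      obtain ⟨P, hP, rfl⟩ := Finset.mem_image.mp hQ
      have hPT := (Finset.mem_filter.mp hP).1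
      simp only [hT, realizableF, mem_filter, mem_univ, true_and] at hPT
      obtain ⟨hsupp, x, hx⟩ := hPT
      simp only [hRs, realizableF, mem_filter, mem_univ, true_and]
      constructor
      · intro i hi
        by_cases hij : i = j
        · subst hij; simp
        · rw [Function.update_of_ne hij]
          exact hsupp i (fun hmem => (Finset.mem_insert.mp hmem).elim hij hi)
      · refine ⟨x, fun i hi => ?_⟩
        have hij : i ≠ j := fun h => hj (h ▸ hi)
        rw [Function.update_of_ne hij]
        exact hx i (Finset.mem_insert_of_mem hi)
    have card_T : T.card = St.card + Tf.card := by
      rw [hSt_card]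
      exact (Finset.card_filter_add_card_filter_not (s := T) (p := fun P => P j = true)).symm
    have card_T' : T.card ≤ Rs.card + (St ∩ Tf).card := by
      have h := Finset.card_union_add_card_inter St Tf
      have : (St ∪ Tf) ⊆ Rs := Finset.union_subset hSt_sub hTf_sub
      have h2 := Finset.card_le_card this
      omega
    -- sign witnesses for split patterns
    have split_sign : ∀ Q ∈ St ∩ Tf,
        (∃ x : E, (∀ i ∈ s, if Q i then 0 < a i x + b i else a i x + b i < 0) ∧
            0 < a j x + b j) ∧
        (∃ y : E, (∀ i ∈ s, if Q i then 0 < a i y + b i else a i y + b i < 0) ∧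
            a j y + b j < 0) := by
      intro Q hQ
      obtain ⟨hQs, hQf⟩ := Finset.mem_inter.mp hQ
      constructor
      · obtain ⟨P, hP, rfl⟩ := Finset.mem_image.mp hQs
        obtain ⟨hPT, hPj⟩ := Finset.mem_filter.mp hP
        simp only [hT, realizableF, mem_filter, mem_univ, true_and] at hPT
        obtain ⟨-, x, hx⟩ := hPT
        refine ⟨x, fun i hi => ?_, ?_⟩
        · have hij : i ≠ j := fun h => hj (h ▸ hi)
          rw [Function.update_of_ne hij]
          exact hx i (Finset.mem_insert_of_mem hi)
        · have := hx j (Finset.mem_insert_self j s)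
          rwa [hPj, if_pos rfl] at this
      · obtain ⟨hQT, hQj⟩ := Finset.mem_filter.mp hQf
        simp only [hT, realizableF, mem_filter, mem_univ, true_and] at hQT
        obtain ⟨-, y, hy⟩ := hQT
        refine ⟨y, fun i hi => hy i (Finset.mem_insert_of_mem hi), ?_⟩
        have := hy j (Finset.mem_insert_self j s)
        rwa [if_neg hQj] at this
    by_cases haj : a j = 0
    · -- degenerate hyperplane: no splitting
      have hSplit : St ∩ Tf = ∅ := by
        rw [Finset.eq_empty_iff_forall_notMem]
        intro Q hQ
        obtain ⟨⟨x, -, hx⟩, ⟨y, -, hy⟩⟩ := split_sign Q hQ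
        rw [haj] at hx hy
        simp only [LinearMap.zero_apply, zero_add] at hx hy
        linarith
      have hmono : indepF a s ⊆ indepF a (insert j s) := by
        intro S hS
        obtain ⟨h1, h2⟩ := Finset.mem_filter.mp hS
        exact Finset.mem_filter.mpr
          ⟨Finset.mem_powerset.mpr ((Finset.mem_powerset.mp h1).trans (Finset.subset_insert j s)), h2⟩
      calc T.card ≤ Rs.card + (St ∩ Tf).card := card_T'
        _ = Rs.card := by rw [hSplit]; simp
        _ ≤ (indepF a s).card := IH E a b
        _ ≤ (indepF a (insert j s)).card := Finset.card_le_card hmono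
    · -- a j ≠ 0 : restrict to the kernel
      obtain ⟨u0, hu0⟩ : ∃ u0, a j u0 ≠ 0 := by
        by_contra h
        push_neg at h
        exact haj (LinearMap.ext fun u => h u)
      set x0 : E := (-(b j) / (a j u0)) • u0 with hx0def
      have hx0 : a j x0 = -(b j) := by
        rw [hx0def, map_smul, smul_eq_mul, div_mul_cancel₀ _ hu0]
      set V := LinearMap.ker (a j) with hV
      set a' : ι → ↥V →ₗ[ℝ] ℝ := fun i => (a i).comp V.subtype with ha'
      set b' : ι → ℝ := fun i => b i + a i x0 with hb'
      -- split patterns are realizable on the kernel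
      have hSplitSub : St ∩ Tf ⊆ realizableF s a' b' := by
        intro Q hQ
        obtain ⟨⟨x, hx, hxj⟩, ⟨y, hy, hyj⟩⟩ := split_sign Q hQ
        have hsupp : ∀ i, i ∉ s → Q i = false := by
          have := hTf_sub (Finset.mem_inter.mp hQ).2
          simp only [hRs, realizableF, mem_filter, mem_univ, true_and] at this
          exact this.1
        set u := a j x + b j with hu
        set v := a j y + b j with hv
        have huv : 0 < u - v := by linarith
        set t : ℝ := u / (u - v) with htdef
        have ht0 : 0 < t := div_pos hxj huv
        have ht1 : t < 1 := (div_lt_one huv).mpr (by linarith)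
        set z : E := x + t • (y - x) with hzdef
        have haz : ∀ (ℓ : E →ₗ[ℝ] ℝ) (c : ℝ),
            ℓ z + c = (1 - t) * (ℓ x + c) + t * (ℓ y + c) := by
          intro ℓ c
          rw [hzdef, map_add, map_smul, map_sub, smul_eq_mul]
          ring
        have htu : t * (u - v) = u := div_mul_cancel₀ u (ne_of_gt huv)
        have hjz : a j z + b j = 0 := by
          rw [haz (a j) (b j), ← hu, ← hv]
          linear_combination -htu
        have hmem : z - x0 ∈ V := by
          rw [hV, LinearMap.mem_ker, map_sub, hx0]
          have : a j z = -(b j) := by linarith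
          rw [this]; ring
        refine Finset.mem_filter.mpr ⟨Finset.mem_univ _, hsupp, ⟨⟨z - x0, hmem⟩, ?_⟩⟩
        intro i hi
        have hval : a' i ⟨z - x0, hmem⟩ + b' i = a i z + b i := by
          simp only [ha', hb', LinearMap.comp_apply, Submodule.subtype_apply, map_sub]
          ring
        rw [hval, haz (a i) (b i)]
        have hxs := hx i hi
        have hys := hy i hi
        by_cases hQi : Q i = true
        · rw [if_pos hQi] at hxs hys ⊢
          nlinarith
        · rw [if_neg hQi] at hxs hys ⊢
          nlinarith
      -- counting independent sets
      have hkernel_comp : (a j).comp V.subtype = 0 := by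
        apply LinearMap.ext
        intro ⟨v, hv⟩
        simpa using (LinearMap.mem_ker.mp hv : a j v = 0)
      have hmap : (indepF a' s).card ≤
          ((indepF a (insert j s)).filter (fun S => j ∈ S)).card := by
        apply Finset.card_le_card_of_injOn (fun S => insert j S)
        · intro S hS
          obtain ⟨hS1, hS2⟩ := Finset.mem_filter.mp hS
          have hSsub := Finset.mem_powerset.mp hS1
          have hjS : j ∉ S := fun h => hj (hSsub h)
          refine Finset.mem_filter.mpr ⟨Finset.mem_filter.mpr ⟨?_, ?_⟩, Finset.mem_insert_self j S⟩
          · exact Finset.mem_powerset.mpr (Finset.insert_subset_insert j hSsub)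
          · intro g hg i hi
            have hg' : (∑ i ∈ S, g i • a' i) = 0 := by
              apply LinearMap.ext
              intro v
              have hv := LinearMap.congr_fun hg (V.subtype v)
              rw [Finset.sum_insert hjS] at hv
              simp only [LinearMap.add_apply, LinearMap.sum_apply, LinearMap.smul_apply,
                LinearMap.zero_apply, smul_eq_mul] at hv
              have hker : a j (V.subtype v) = 0 := LinearMap.mem_ker.mp v.2
              rw [hker, mul_zero, zero_add] at hv
              simpa only [ha', LinearMap.sum_apply, LinearMap.smul_apply, LinearMap.comp_apply,
                LinearMap.zero_apply, smul_eq_mul] using hv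
            have hzeroS : ∀ i ∈ S, g i = 0 := hS2 g hg'
            have hgj : g j = 0 := by
              rw [Finset.sum_insert hjS] at hg
              have : (∑ i ∈ S, g i • a i) = 0 :=
                Finset.sum_eq_zero fun i hi => by rw [hzeroS i hi, zero_smul]
              rw [this, add_zero] at hg
              rcases smul_eq_zero.mp hg with h | h
              · exact h
              · exact absurd h haj
            rcases Finset.mem_insert.mp hi with h | h
            · rw [h]; exact hgj
            · exact hzeroS i h
        · intro S hS S' hS' heq
          replace hS : S ∈ indepF a' s := hS
          replace hS' : S' ∈ indepF a' s := hS'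
          have hjS : j ∉ S := fun h => hj ((Finset.mem_powerset.mp (Finset.mem_filter.mp hS).1) h)
          have hjS' : j ∉ S' := fun h => hj ((Finset.mem_powerset.mp (Finset.mem_filter.mp hS').1) h)
          have heq' : insert j S = insert j S' := heq
          rw [← Finset.erase_insert hjS, ← Finset.erase_insert hjS', heq']
      have hns : (indepF a s).card ≤
          ((indepF a (insert j s)).filter (fun S => ¬ j ∈ S)).card := by
        apply Finset.card_le_card
        intro S hS
        obtain ⟨h1, h2⟩ := Finset.mem_filter.mp hS
        have hSsub := Finset.mem_powerset.mp h1
        exact Finset.mem_filter.mpr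
          ⟨Finset.mem_filter.mpr ⟨Finset.mem_powerset.mpr (hSsub.trans (Finset.subset_insert j s)), h2⟩,
           fun h => hj (hSsub h)⟩
      have hfinal := Finset.card_filter_add_card_filter_not
        (s := indepF a (insert j s)) (p := fun S => j ∈ S)
      calc T.card ≤ Rs.card + (St ∩ Tf).card := card_T'
        _ ≤ (indepF a s).card + (realizableF s a' b').card :=
            Nat.add_le_add (IH E a b) (Finset.card_le_card hSplitSub)
        _ ≤ ((indepF a (insert j s)).filter (fun S => ¬ j ∈ S)).card
              + ((indepF a (insert j s)).filter (fun S => j ∈ S)).card :=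
            Nat.add_le_add hns ((IH (↥V) a' b').trans hmap)
        _ = (indepF a (insert j s)).card := by omega
      done

end Part1

section CNNAux

attribute [local instance] Classical.propDecidable

abbrev cnnE (n01 n02 d0 : ℕ) : Type := Fin n01 → Fin n02 → Fin d0 → ℝ

def coordL {n01 n02 d0 : ℕ} (u : Fin n01) (v : Fin n02) (w : Fin d0) :
    cnnE n01 n02 d0 →ₗ[ℝ] ℝ :=
  ((LinearMap.proj w : (Fin d0 → ℝ) →ₗ[ℝ] ℝ).comp
    ((LinearMap.proj v : (Fin n02 → Fin d0 → ℝ) →ₗ[ℝ] (Fin d0 → ℝ)).comp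
      (LinearMap.proj u : cnnE n01 n02 d0 →ₗ[ℝ] (Fin n02 → Fin d0 → ℝ))))

@[simp] lemma coordL_apply {n01 n02 d0 : ℕ} (u : Fin n01) (v : Fin n02) (w : Fin d0)
    (X : cnnE n01 n02 d0) : coordL u v w X = X u v w := rfl

lemma idx_lt {n f s : ℕ} (hf : f ≤ n) {a p : ℕ} (ha : a < f) (hp : p < (n - f) / s + 1) :
    a + p * s < n := by
  have h1 : p ≤ (n - f) / s := by omega
  have h2 : p * s ≤ (n - f) / s * s := Nat.mul_le_mul_right s h1
  have h3 : (n - f) / s * s ≤ n - f := Nat.div_mul_le_self _ _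
  omega

def cnnA (n01 n02 d0 f1 f2 s1 d1 : ℕ) (hf1 : f1 ≤ n01) (hf2 : f2 ≤ n02)
    (W : Fin d1 → Fin f1 → Fin f2 → Fin d0 → ℝ)
    (i : (Fin ((n01 - f1) / s1 + 1) × Fin ((n02 - f2) / s1 + 1)) × Fin d1) :
    cnnE n01 n02 d0 →ₗ[ℝ] ℝ :=
  ∑ a : Fin f1, ∑ b : Fin f2, ∑ c : Fin d0,
    W i.2 a b c • coordL ⟨a.1 + i.1.1.1 * s1, idx_lt hf1 a.2 i.1.1.2⟩
      ⟨b.1 + i.1.2.1 * s1, idx_lt hf2 b.2 i.1.2.2⟩ c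

def deltaE {n01 n02 d0 : ℕ} (u : Fin n01) (v : Fin n02) (w : Fin d0) : cnnE n01 n02 d0 :=
  Pi.single u (Pi.single v (Pi.single w (1 : ℝ)))

lemma deltaE_apply {n01 n02 d0 : ℕ} (u u' : Fin n01) (v v' : Fin n02) (w w' : Fin d0) :
    deltaE u v w u' v' w' = if u' = u ∧ v' = v ∧ w' = w then 1 else 0 := by
  by_cases h1 : u' = u <;> by_cases h2 : v' = v <;> by_cases h3 : w' = w <;>
    simp [deltaE, Pi.single_apply, h1, h2, h3]

lemma cnn_decomp {n01 n02 d0 : ℕ} (L : cnnE n01 n02 d0 →ₗ[ℝ] ℝ) (X : cnnE n01 n02 d0) :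
    L X = ∑ u : Fin n01, ∑ v : Fin n02, ∑ w : Fin d0, X u v w * L (deltaE u v w) := by
  have hX : X = ∑ u : Fin n01, ∑ v : Fin n02, ∑ w : Fin d0, X u v w • deltaE u v w := by
    funext u' v' w'
    simp only [Finset.sum_apply, Pi.smul_apply, smul_eq_mul, deltaE_apply,
      mul_ite, mul_one, mul_zero]
    rw [Finset.sum_eq_single u']
    rotate_left
    · intro x _ hx
      apply Finset.sum_eq_zero; intro y _
      apply Finset.sum_eq_zero; intro z _
      simp [Ne.symm hx]
    · intro h; exact absurd (Finset.mem_univ _) h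
    rw [Finset.sum_eq_single v']
    rotate_left
    · intro x _ hx
      apply Finset.sum_eq_zero; intro z _
      simp [Ne.symm hx]
    · intro h; exact absurd (Finset.mem_univ _) h
    rw [Finset.sum_eq_single w']
    rotate_left
    · intro x _ hx; simp [Ne.symm hx]
    · intro h; exact absurd (Finset.mem_univ _) h
    simp
  conv_lhs => rw [hX]
  rw [map_sum]
  refine Finset.sum_congr rfl fun u _ => ?_
  rw [map_sum]
  refine Finset.sum_congr rfl fun v _ => ?_
  rw [map_sum]
  refine Finset.sum_congr rfl fun w _ => ?_
  rw [map_smul, smul_eq_mul]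

lemma mem_windowSet_of {f1 f2 d0 s1 : ℕ} (p1 p2 a b c : ℕ)
    (ha : a < f1) (hb : b < f2) (hc : c < d0) :
    (a + p1 * s1, b + p2 * s1, c) ∈ windowSet f1 f2 d0 s1 (p1, p2) := by
  unfold windowSet
  exact Finset.mem_image.mpr ⟨(a, b, c), by simp [Finset.mem_product, ha, hb, hc], rfl⟩

lemma windowSet_bounds {n01 n02 d0 f1 f2 s1 : ℕ} (hf1 : f1 ≤ n01) (hf2 : f2 ≤ n02)
    (p : Fin ((n01 - f1) / s1 + 1) × Fin ((n02 - f2) / s1 + 1)) (q : ℕ × ℕ × ℕ)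
    (hq : q ∈ windowSet f1 f2 d0 s1 (p.1.1, p.2.1)) :
    q.1 < n01 ∧ q.2.1 < n02 ∧ q.2.2 < d0 := by
  unfold windowSet at hq
  obtain ⟨⟨a, b, c⟩, hm, rfl⟩ := Finset.mem_image.mp hq
  simp only [Finset.mem_product, Finset.mem_range] at hm
  exact ⟨idx_lt hf1 hm.1 p.1.2, idx_lt hf2 hm.2.1 p.2.2, hm.2.2⟩

lemma cnnA_delta_zero (n01 n02 d0 f1 f2 s1 d1 : ℕ) (hf1 : f1 ≤ n01) (hf2 : f2 ≤ n02)
    (W : Fin d1 → Fin f1 → Fin f2 → Fin d0 → ℝ)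
    (i : (Fin ((n01 - f1) / s1 + 1) × Fin ((n02 - f2) / s1 + 1)) × Fin d1)
    (u : Fin n01) (v : Fin n02) (w : Fin d0)
    (h : ((u : ℕ), ((v : ℕ), (w : ℕ))) ∉ windowSet f1 f2 d0 s1 (i.1.1.1, i.1.2.1)) :
    cnnA n01 n02 d0 f1 f2 s1 d1 hf1 hf2 W i (deltaE u v w) = 0 := by
  unfold cnnA
  simp only [LinearMap.sum_apply, LinearMap.smul_apply, smul_eq_mul, coordL_apply]
  apply Finset.sum_eq_zero; intro a _
  apply Finset.sum_eq_zero; intro b _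
  apply Finset.sum_eq_zero; intro c _
  rw [deltaE_apply]
  by_cases hc : (⟨a.1 + i.1.1.1 * s1, idx_lt hf1 a.2 i.1.1.2⟩ : Fin n01) = u ∧
      (⟨b.1 + i.1.2.1 * s1, idx_lt hf2 b.2 i.1.2.2⟩ : Fin n02) = v ∧ c = w
  · exfalso
    apply h
    obtain ⟨h1, h2, h3⟩ := hc
    have e1 : (u : ℕ) = a.1 + i.1.1.1 * s1 := by rw [← h1]
    have e2 : (v : ℕ) = b.1 + i.1.2.1 * s1 := by rw [← h2]
    have e3 : (w : ℕ) = c.1 := by rw [← h3]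
    rw [e1, e2, e3]
    exact mem_windowSet_of _ _ _ _ _ a.2 b.2 c.2
  · rw [if_neg hc, mul_zero]

lemma convZ_eq_cnnA (n01 n02 d0 f1 f2 s1 d1 : ℕ) (hf1 : f1 ≤ n01) (hf2 : f2 ≤ n02)
    (W : Fin d1 → Fin f1 → Fin f2 → Fin d0 → ℝ) (B : Fin d1 → ℝ)
    (X : cnnE n01 n02 d0)
    (i : (Fin ((n01 - f1) / s1 + 1) × Fin ((n02 - f2) / s1 + 1)) × Fin d1) :
    convZ s1 W B (inputExt X) i.1.1.1 i.1.2.1 i.2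
      = cnnA n01 n02 d0 f1 f2 s1 d1 hf1 hf2 W i X + B i.2 := by
  unfold convZ cnnA
  congr 1
  simp only [LinearMap.sum_apply, LinearMap.smul_apply, smul_eq_mul, coordL_apply]
  refine Finset.sum_congr rfl fun a _ => ?_
  refine Finset.sum_congr rfl fun b _ => ?_
  refine Finset.sum_congr rfl fun c _ => ?_
  congr 1
  show inputExt X (a.1 + i.1.1.1 * s1) (b.1 + i.1.2.1 * s1) c.1 = _
  unfold inputExt
  rw [dif_pos ⟨idx_lt hf1 a.2 i.1.1.2, idx_lt hf2 b.2 i.1.2.2, c.2⟩]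

end CNNAux

section Part3
attribute [local instance] Classical.propDecidable
variable {ι : Type} [Fintype ι] [DecidableEq ι]

lemma myIndep_mono {E : Type} [AddCommGroup E] [Module ℝ E] {a : ι → E →ₗ[ℝ] ℝ}
    {S S' : Finset ι} (h : S' ⊆ S) (hS : myIndep a S) : myIndep a S' := by
  intro g hg i hi
  set g' : ι → ℝ := fun i => if i ∈ S' then g i else 0 with hg'def
  have h1 : ∑ i ∈ S', g' i • a i = ∑ i ∈ S, g' i • a i := by
    apply Finset.sum_subset h
    intro x _ hx'
    simp [hg'def, hx']
  have h2 : ∑ i ∈ S', g' i • a i = ∑ i ∈ S', g i • a i :=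
    Finset.sum_congr rfl fun i hi => by simp [hg'def, hi]
  have h3 : ∑ i ∈ S, g' i • a i = 0 := by rw [← h1, h2, hg]
  have := hS g' h3 i (h hi)
  simpa [hg'def, hi] using this

/-- Generic counting: a family of finsets of `α × β` whose fibers over `α` have
prescribed sizes `t` has cardinality at most `∏ C(|β|, t p)`. -/
lemma fiber_card_le {α β : Type} [Fintype α] [Fintype β] [DecidableEq α] [DecidableEq β]
    (t : α → ℕ) (F : Finset (Finset (α × β)))
    (hF : ∀ S ∈ F, ∀ p, (S.filter (fun i => i.1 = p)).card = t p) :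
    F.card ≤ ∏ p : α, (Fintype.card β).choose (t p) := by
  calc F.card ≤ (Fintype.piFinset (fun p : α =>
      (Finset.univ : Finset β).powersetCard (t p))).card := by
        apply Finset.card_le_card_of_injOn
          (fun S => fun p => ((S.filter (fun i => i.1 = p)).image Prod.snd))
        · intro S hS
          simp only [Finset.mem_coe] at hS ⊢
          rw [Fintype.mem_piFinset]
          intro p
          rw [Finset.mem_powersetCard]
          refine ⟨Finset.subset_univ _, ?_⟩
          rw [Finset.card_image_of_injOn, hF S hS p]
          intro x hx y hy hxy
          have hx1 : x.1 = p := (Finset.mem_filter.mp hx).2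
          have hy1 : y.1 = p := (Finset.mem_filter.mp hy).2
          exact Prod.ext (hx1.trans hy1.symm) hxy
        · intro S hS S' hS' heq
          have hmem : ∀ (S : Finset (α × β)) (i : α × β),
              i ∈ S ↔ i.2 ∈ (S.filter (fun j => j.1 = i.1)).image Prod.snd := by
            intro S i
            constructor
            · intro hi
              exact Finset.mem_image.mpr ⟨i, Finset.mem_filter.mpr ⟨hi, rfl⟩, rfl⟩
            · rintro hmem
              obtain ⟨x, hx, hsnd⟩ := Finset.mem_image.mp hmem
              have hx1 : x.1 = i.1 := (Finset.mem_filter.mp hx).2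
              have : x = i := Prod.ext hx1 hsnd
              exact this ▸ (Finset.mem_filter.mp hx).1
          have heq' : ∀ p, (S.filter (fun i => i.1 = p)).image Prod.snd
              = (S'.filter (fun i => i.1 = p)).image Prod.snd := fun p => congrFun heq p
          ext i
          rw [hmem S i, hmem S' i, heq' i.1]
      _ = ∏ p : α, (Fintype.card β).choose (t p) := by
        rw [Fintype.card_piFinset]
        refine Finset.prod_congr rfl fun p _ => ?_
        rw [Finset.card_powersetCard, Finset.card_univ]

end Part3


section Key
attribute [local instance] Classical.propDecidable

lemma cnn_card_filter_le (n01 n02 d0 f1 f2 s1 d1 : ℕ) (hf1 : f1 ≤ n01) (hf2 : f2 ≤ n02)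
    (W : Fin d1 → Fin f1 → Fin f2 → Fin d0 → ℝ)
    (S : Finset ((Fin ((n01 - f1) / s1 + 1) × Fin ((n02 - f2) / s1 + 1)) × Fin d1))
    (hS : myIndep (cnnA n01 n02 d0 f1 f2 s1 d1 hf1 hf2 W) S)
    (J : Finset (Fin ((n01 - f1) / s1 + 1) × Fin ((n02 - f2) / s1 + 1))) :
    (S.filter (fun i => i.1 ∈ J)).card
      ≤ (J.biUnion (fun p => windowSet f1 f2 d0 s1 (p.1.1, p.2.1))).card := by
  classical
  set A := cnnA n01 n02 d0 f1 f2 s1 d1 hf1 hf2 W with hA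
  set S' := S.filter (fun i => i.1 ∈ J) with hS'def
  have hSind : myIndep A S' := myIndep_mono (Finset.filter_subset _ _) hS
  set C := J.biUnion (fun p => windowSet f1 f2 d0 s1 (p.1.1, p.2.1)) with hCdef
  have hCb : ∀ q ∈ C, q.1 < n01 ∧ q.2.1 < n02 ∧ q.2.2 < d0 := by
    intro q hq
    obtain ⟨p, hp, hqp⟩ := Finset.mem_biUnion.mp hq
    exact windowSet_bounds hf1 hf2 p q hqp
  set rows : ↥S' → (↥C → ℝ) := fun i c =>
    A i.1 (deltaE ⟨c.1.1, (hCb c.1 c.2).1⟩ ⟨c.1.2.1, (hCb c.1 c.2).2.1⟩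
      ⟨c.1.2.2, (hCb c.1 c.2).2.2⟩) with hrows
  have hLI : LinearIndependent ℝ rows := by
    rw [Fintype.linearIndependent_iff]
    intro g hg i0
    set g' : ((Fin ((n01 - f1) / s1 + 1) × Fin ((n02 - f2) / s1 + 1)) × Fin d1) → ℝ :=
      fun i => if h : i ∈ S' then g ⟨i, h⟩ else 0 with hg'def
    -- for every basis vector, the combination of functionals vanishes
    have hzero_uvw : ∀ (u : Fin n01) (v : Fin n02) (w : Fin d0),
        ∑ i ∈ S', g' i * A i (deltaE u v w) = 0 := by
      intro u v w
      by_cases hqc : ((u : ℕ), ((v : ℕ), (w : ℕ))) ∈ C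
      · have hrow := congrFun hg ⟨((u : ℕ), ((v : ℕ), (w : ℕ))), hqc⟩
        simp only [Finset.sum_apply, Pi.smul_apply, smul_eq_mul, Pi.zero_apply] at hrow
        -- identify the delta vectors
        have hdelta : ∀ (h1 : _) (h2 : _) (h3 : _),
            deltaE (n01 := n01) (n02 := n02) (d0 := d0) ⟨(u : ℕ), h1⟩ ⟨(v : ℕ), h2⟩
              ⟨(w : ℕ), h3⟩ = deltaE u v w := by
          intro h1 h2 h3
          simp only [Fin.eta]
        rw [show (0:ℝ) = ∑ i : ↥S', g i * rows i
            ⟨((u : ℕ), ((v : ℕ), (w : ℕ))), hqc⟩ from hrow.symm]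
        rw [Finset.univ_eq_attach]
        rw [← Finset.sum_attach S' (fun i => g' i * A i (deltaE u v w))]
        refine Finset.sum_congr rfl fun i _ => ?_
        rw [hrows]
        simp only []
        rw [hdelta]
        congr 1
        rw [hg'def]
        simp [i.2]
      · apply Finset.sum_eq_zero
        intro i hi
        have hiJ : i.1 ∈ J := (Finset.mem_filter.mp hi).2
        have hnw : ((u : ℕ), ((v : ℕ), (w : ℕ))) ∉ windowSet f1 f2 d0 s1 (i.1.1.1, i.1.2.1) := by
          intro hmem
          exact hqc (Finset.mem_biUnion.mpr ⟨i.1, hiJ, hmem⟩)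
        rw [hA, cnnA_delta_zero n01 n02 d0 f1 f2 s1 d1 hf1 hf2 W i u v w hnw, mul_zero]
    have hLzero : ∑ i ∈ S', g' i • A i = 0 := by
      apply LinearMap.ext
      intro X
      rw [LinearMap.zero_apply, cnn_decomp (∑ i ∈ S', g' i • A i) X]
      apply Finset.sum_eq_zero; intro u _
      apply Finset.sum_eq_zero; intro v _
      apply Finset.sum_eq_zero; intro w _
      have : (∑ i ∈ S', g' i • A i) (deltaE u v w) = ∑ i ∈ S', g' i * A i (deltaE u v w) := by
        simp [LinearMap.sum_apply, smul_eq_mul]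
      rw [this, hzero_uvw u v w, mul_zero]
    have hzS' := hSind g' hLzero i0.1 i0.2
    rw [hg'def] at hzS'
    simpa [i0.2] using hzS'
  have hcard := hLI.fintype_card_le_finrank
  rw [Module.finrank_pi] at hcard
  have e1 : Fintype.card ↥S' = S'.card := Fintype.card_coe S'
  have e2 : Fintype.card ↥C = C.card := Fintype.card_coe C
  rw [e1, e2] at hcard
  exact hcard

end Key

/-- (Upper-bound half of Theorem 2(i).) For every choice of parameters
`θ = (W,B)` of a one-layer ReLU CNN, the number of nonempty activation regions satisfies
`R_{N,θ} ≤ ∑_{t ∈ K_N} ∏_{(i,j) ∈ I_N} C(d1, t_{i,j})`. -/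
theorem statement_3 (n01 n02 d0 f1 f2 s1 d1 : ℕ)
    (hd0 : 0 < d0) (hf1p : 0 < f1) (hf2p : 0 < f2) (hs : 0 < s1)
    (hf1 : f1 ≤ n01) (hf2 : f2 ≤ n02)
    (W : Fin d1 → Fin f1 → Fin f2 → Fin d0 → ℝ) (B : Fin d1 → ℝ) :
    convNumRegions n01 n02 d0 f1 f2 s1 d1 W B ≤ convRNFormula n01 n02 d0 f1 f2 s1 d1 := by
  classical
  set A := cnnA n01 n02 d0 f1 f2 s1 d1 hf1 hf2 W with hA
  set Bb : ((Fin ((n01 - f1) / s1 + 1) × Fin ((n02 - f2) / s1 + 1)) × Fin d1) → ℝ :=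
    fun i => B i.2 with hBb
  have key1 : convNumRegions n01 n02 d0 f1 f2 s1 d1 W B
      ≤ (realizableF Finset.univ A Bb).card := by
    have hrfl : convNumRegions n01 n02 d0 f1 f2 s1 d1 W B
        = Set.ncard {R : Set (cnnE n01 n02 d0) |
            (∃ P, R = convRegion n01 n02 d0 f1 f2 s1 d1 W B P) ∧ R.Nonempty} := rfl
    rw [hrfl, ← Set.ncard_coe_finset (realizableF Finset.univ A Bb)]
    set F : Set (cnnE n01 n02 d0) →
        (((Fin ((n01 - f1) / s1 + 1) × Fin ((n02 - f2) / s1 + 1)) × Fin d1) → Bool) :=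
      fun R => if h : ∃ P, R = convRegion n01 n02 d0 f1 f2 s1 d1 W B P then
          (fun i => h.choose i.1.1.1 i.1.2.1 i.2.1) else (fun _ => false) with hF
    apply Set.ncard_le_ncard_of_injOn F
    · rintro R ⟨hex, x, hx⟩
      rw [Finset.mem_coe]
      refine Finset.mem_filter.mpr ⟨Finset.mem_univ _,
        fun i hi => absurd (Finset.mem_univ i) hi, ⟨x, ?_⟩⟩
      intro i _
      have hreg : x ∈ convRegion n01 n02 d0 f1 f2 s1 d1 W B hex.choose :=
        hex.choose_spec ▸ hx
      have hcond := hreg i.1.1.1 i.1.2.1 i.1.1.2 i.1.2.2 i.2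
      rw [convZ_eq_cnnA n01 n02 d0 f1 f2 s1 d1 hf1 hf2 W B x i] at hcond
      rw [hF]
      simp only [dif_pos hex]
      exact hcond
    · rintro R hR R' hR' heq
      obtain ⟨hex, -⟩ := hR
      obtain ⟨hex', -⟩ := hR'
      rw [hF] at heq
      simp only [dif_pos hex, dif_pos hex'] at heq
      have hPP : ∀ (i j : ℕ) (hi : i < (n01 - f1) / s1 + 1) (hj : j < (n02 - f2) / s1 + 1)
          (k : Fin d1), hex.choose i j k.1 = hex'.choose i j k.1 := by
        intro i j hi hj k
        exact congrFun heq ((⟨i, hi⟩, ⟨j, hj⟩), k)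
      rw [hex.choose_spec, hex'.choose_spec]
      unfold convRegion
      ext X
      simp only [Set.mem_setOf_eq]
      constructor
      · intro hX i j hi hj k
        have := hX i j hi hj k
        convert this using 2; exact (hPP i j hi hj k).symm
      · intro hX i j hi hj k
        have := hX i j hi hj k
        convert this using 2; exact hPP i j hi hj k
  have key2 := realizable_le_indep (Finset.univ) (cnnE n01 n02 d0) A Bb
  have key3 : (indepF A Finset.univ).card ≤ convRNFormula n01 n02 d0 f1 f2 s1 d1 := by
    set τ : Finset ((Fin ((n01 - f1) / s1 + 1) × Fin ((n02 - f2) / s1 + 1)) × Fin d1)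
        → (Fin ((n01 - f1) / s1 + 1) × Fin ((n02 - f2) / s1 + 1)) → ℕ :=
      fun S => fun p => (S.filter (fun i => i.1 = p)).card with hτ
    have hτK : ∀ S ∈ indepF A Finset.univ, τ S ∈ convKN n01 n02 d0 f1 f2 s1 := by
      intro S hSmem
      have hind : myIndep A S := (Finset.mem_filter.mp hSmem).2
      intro J
      have hle := cnn_card_filter_le n01 n02 d0 f1 f2 s1 d1 hf1 hf2 W S hind J
      have hsum : (S.filter (fun i => i.1 ∈ J)).card = ∑ p ∈ J, τ S p := by
        rw [Finset.card_eq_sum_card_fiberwise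
          (f := fun i : (Fin ((n01 - f1) / s1 + 1) × Fin ((n02 - f2) / s1 + 1)) × Fin d1 => i.1)
          (s := S.filter (fun i => i.1 ∈ J)) (t := J)
          (fun x hx => (Finset.mem_filter.mp hx).2)]
        refine Finset.sum_congr rfl fun p hp => ?_
        rw [hτ]
        congr 1
        ext i
        simp only [Finset.mem_filter]
        constructor
        · rintro ⟨⟨hiS, -⟩, hip⟩
          exact ⟨hiS, hip⟩
        · rintro ⟨hiS, hip⟩
          exact ⟨⟨hiS, hip ▸ hp⟩, hip⟩
      rw [← hsum]
      exact hle
    set M := ((Finset.univ : Finset (Fin ((n01 - f1) / s1 + 1) × Fin ((n02 - f2) / s1 + 1))).biUnion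
      (fun p => windowSet f1 f2 d0 s1 (p.1.1, p.2.1))).card with hM
    have hKsub : convKN n01 n02 d0 f1 f2 s1 ⊆
        ↑(Fintype.piFinset (fun _ : (Fin ((n01 - f1) / s1 + 1) × Fin ((n02 - f2) / s1 + 1)) =>
          Finset.range (M + 1))) := by
      intro t ht
      rw [Finset.mem_coe, Fintype.mem_piFinset]
      intro p
      rw [Finset.mem_range]
      have h1 := ht {p}
      rw [Finset.sum_singleton] at h1
      have h2 : (({p} : Finset (Fin ((n01 - f1) / s1 + 1) × Fin ((n02 - f2) / s1 + 1))).biUnion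
            (fun p => windowSet f1 f2 d0 s1 (p.1.1, p.2.1))) ⊆
          ((Finset.univ : Finset (Fin ((n01 - f1) / s1 + 1) × Fin ((n02 - f2) / s1 + 1))).biUnion
            (fun p => windowSet f1 f2 d0 s1 (p.1.1, p.2.1))) :=
        Finset.biUnion_subset_biUnion_of_subset_left _ (Finset.subset_univ _)
      have h3 := Finset.card_le_card h2
      omega
    have hKfin : (convKN n01 n02 d0 f1 f2 s1).Finite :=
      Set.Finite.subset (Finset.finite_toSet _) hKsub
    have hform : convRNFormula n01 n02 d0 f1 f2 s1 d1
        = ∑ t ∈ hKfin.toFinset, ∏ p, d1.choose (t p) := by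
      unfold convRNFormula
      exact finsum_mem_eq_finite_toFinset_sum _ hKfin
    rw [hform]
    calc (indepF A Finset.univ).card
        = ∑ t ∈ (indepF A Finset.univ).image τ,
            ((indepF A Finset.univ).filter (fun S => τ S = t)).card :=
          Finset.card_eq_sum_card_image τ _
      _ ≤ ∑ t ∈ (indepF A Finset.univ).image τ, ∏ p, d1.choose (t p) := by
          apply Finset.sum_le_sum
          intro t ht
          have hfib : ∀ S ∈ (indepF A Finset.univ).filter (fun S => τ S = t),
              ∀ p, (S.filter (fun i => i.1 = p)).card = t p := by
            intro S hSm p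
            have hτSt : τ S = t := (Finset.mem_filter.mp hSm).2
            rw [← hτSt]
          have hb := fiber_card_le t ((indepF A Finset.univ).filter (fun S => τ S = t)) hfib
          simp only [Fintype.card_fin] at hb
          exact hb
      _ ≤ ∑ t ∈ hKfin.toFinset, ∏ p, d1.choose (t p) := by
          apply Finset.sum_le_sum_of_subset
          intro t ht
          obtain ⟨S, hSm, rfl⟩ := Finset.mem_image.mp ht
          exact hKfin.mem_toFinset.mpr (hτK S hSm)
  exact key1.trans (key2.trans key3)

end
end

section
/- Let N(d1) denote the one-layer ReLU CNN with fixed input dimension n0⁽¹⁾×n0⁽²⁾×d0, fixed filter spatial dimension f1⁽¹⁾×f1⁽²⁾ and stride s1, and with d1 filters, and let m = #(∪_{(i,j)∈I_N} S_{i,j}). Then there exist constants c1, c2 > 0 and D such that for all d1 ≥ D, c1·d1^m ≤ R_{N(d1)} ≤ c2·d1^m. In particular, if every input neuron is involved in the convolutional calculation, i.e., ∪_{(i,j)∈I_N} S_{i,j} = {(a,b,c) : 1 ≤ a ≤ n0⁽¹⁾, 1 ≤ b ≤ n0⁽²⁾, 1 ≤ c ≤ d0}, then R_{N(d1)} = Θ(d1^{n0⁽¹⁾·n0⁽²⁾·d0}).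 -/
open Finset

noncomputable section

/-- `∪_{(i,j) ∈ I_N} S_{i,j}`: the set of indexes of all input neurons involved in the
convolutional calculation. -/
def windowUnion (n01 n02 d0 f1 f2 s1 : ℕ) : Finset (ℕ × ℕ × ℕ) :=
  (Finset.range ((n01 - f1) / s1 + 1) ×ˢ Finset.range ((n02 - f2) / s1 + 1)).biUnion
    (windowSet f1 f2 d0 s1)


def IsAff {κ : Type*} [Fintype κ] (g : (κ → ℝ) → ℝ) : Prop :=
  ∃ a : κ → ℝ, ∃ c : ℝ, ∀ x, g x = (∑ i, a i * x i) + c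

def Realized {ι κ : Type*} (f : ι → (κ → ℝ) → ℝ) : Set (ι → Bool) :=
  {σ | ∃ x, ∀ q, if σ q then 0 < f q x else f q x < 0}

lemma isAff_const {κ : Type*} [Fintype κ] (c : ℝ) : IsAff (fun _ : κ → ℝ => c) :=
  ⟨fun _ => 0, c, fun x => by simp⟩

lemma isAff_coord {κ : Type*} [Fintype κ] [DecidableEq κ] (u : κ) :
    IsAff (fun x : κ → ℝ => x u) :=
  ⟨fun i => if i = u then 1 else 0, 0, fun x => by simp [ite_mul, Finset.sum_ite_eq']⟩

lemma IsAff.add {κ : Type*} [Fintype κ] {g h : (κ → ℝ) → ℝ} (hg : IsAff g) (hh : IsAff h) :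
    IsAff (fun x => g x + h x) := by
  obtain ⟨a, c, ha⟩ := hg; obtain ⟨b, d, hb⟩ := hh
  exact ⟨fun i => a i + b i, c + d, fun x => by simp [ha, hb, add_mul, Finset.sum_add_distrib]; ring⟩

lemma IsAff.const_mul {κ : Type*} [Fintype κ] {g : (κ → ℝ) → ℝ} (c : ℝ) (hg : IsAff g) :
    IsAff (fun x => c * g x) := by
  obtain ⟨a, d, ha⟩ := hg
  exact ⟨fun i => c * a i, c * d, fun x => by simp [ha, mul_add, Finset.mul_sum, mul_assoc]⟩

lemma isAff_sum {κ β : Type*} [Fintype κ] (s : Finset β) (g : β → (κ → ℝ) → ℝ)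
    (hg : ∀ b ∈ s, IsAff (g b)) : IsAff (fun x => ∑ b ∈ s, g b x) := by
  classical
  induction s using Finset.induction with
  | empty => simpa using isAff_const (κ := κ) 0
  | @insert b s hnot ih =>
    simp only [Finset.sum_insert hnot]
    exact (hg b (Finset.mem_insert_self _ _)).add
      (ih fun b' hb' => hg b' (Finset.mem_insert_of_mem hb'))

lemma IsAff.segment {κ : Type*} [Fintype κ] {g : (κ → ℝ) → ℝ} (hg : IsAff g)
    (x y : κ → ℝ) (t : ℝ) :
    g (fun i => (1 - t) * x i + t * y i) = (1 - t) * g x + t * g y := by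
  obtain ⟨a, c, ha⟩ := hg
  simp only [ha, mul_add, add_mul, Finset.sum_add_distrib, Finset.mul_sum]
  have h1 : ∀ v : κ → ℝ, ∑ i, (1 - t) * (a i * v i) = ∑ i, ((a i * v i) - t * (a i * v i)) :=
    fun v => Finset.sum_congr rfl fun i _ => by ring
  have h2 : ∀ v : κ → ℝ, ∑ i, t * (a i * v i) = ∑ i, (a i * (t * v i)) :=
    fun v => Finset.sum_congr rfl fun i _ => by ring
  have h3 : ∑ i, (a i * ((1 - t) * x i)) = ∑ i, ((a i * x i) - t * (a i * x i)) :=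
    Finset.sum_congr rfl fun i _ => by ring
  rw [h1, h2, h3]
  ring


noncomputable section

lemma realized_m0 {N : ℕ} (f : Fin N → (Fin 0 → ℝ) → ℝ) : (Realized f).ncard ≤ 1 := by
  have hsub : Realized f ⊆ {fun q => decide (0 < f q (fun i => i.elim0))} := by
    intro σ hσ
    obtain ⟨x, hx⟩ := hσ
    have hx0 : x = (fun i => i.elim0) := Subsingleton.elim _ _
    subst hx0
    simp only [Set.mem_singleton_iff]
    funext q
    have hq := hx q
    cases hσq : σ q with
    | true => rw [hσq] at hq; simp only [if_true] at hq; simp [hq]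
    | false =>
      rw [hσq] at hq; simp only [if_neg Bool.false_ne_true] at hq
      simp [not_lt.mpr hq.le]
  calc (Realized f).ncard ≤ ({fun q => decide (0 < f q (fun i => i.elim0))} :
        Set (Fin N → Bool)).ncard := Set.ncard_le_ncard hsub (Set.finite_singleton _)
    _ = 1 := Set.ncard_singleton _

lemma realized_key : ∀ N m : ℕ, ∀ f : Fin N → (Fin m → ℝ) → ℝ,
    (∀ q, IsAff (f q)) → (Realized f).ncard ≤ (N + 1) ^ m := by
  intro N
  induction N with
  | zero =>
    intro m f _
    have h1 : (Realized f).ncard ≤ (Set.univ : Set (Fin 0 → Bool)).ncard :=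
      Set.ncard_le_ncard (Set.subset_univ _) Set.finite_univ
    have h2 : (Set.univ : Set (Fin 0 → Bool)).ncard = 1 := by
      rw [Set.ncard_univ, Nat.card_eq_fintype_card]; simp
    simpa [h2] using h1
  | succ N ih =>
    intro m f hf
    cases m with
    | zero => simpa using realized_m0 f
    | succ m =>
      classical
      set g : Fin N → (Fin (m+1) → ℝ) → ℝ := fun q => f q.castSucc with hgdef
      have hg : ∀ q, IsAff (g q) := fun q => hf _
      obtain ⟨a, c, hac⟩ := hf (Fin.last N)
      by_cases hz : ∀ i, a i = 0
      · have hconst : ∀ x, f (Fin.last N) x = c := fun x => by rw [hac]; simp [hz]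
        by_cases hc : c = 0
        · have hemp : Realized f = ∅ := by
            ext σ
            simp only [Set.mem_empty_iff_false, iff_false]
            rintro ⟨x, hx⟩
            have hlx := hx (Fin.last N)
            rw [hconst x, hc] at hlx
            split at hlx <;> exact lt_irrefl 0 hlx
          rw [hemp]; simp
        · have hsub : ∀ σ ∈ Realized f, σ (Fin.last N) = decide (0 < c) := by
            rintro σ ⟨x, hx⟩
            have hlx := hx (Fin.last N)
            rw [hconst x] at hlx
            cases hσl : σ (Fin.last N) with
            | true => rw [hσl] at hlx; simp only [if_true] at hlx; simp [hlx]
            | false =>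
              rw [hσl] at hlx; simp only [if_neg Bool.false_ne_true] at hlx
              simp [not_lt.mpr hlx.le]
          have hmap : ∀ σ ∈ Realized f, σ ∘ Fin.castSucc ∈ Realized g := by
            rintro σ ⟨x, hx⟩
            exact ⟨x, fun q => hx q.castSucc⟩
          have hinj : Set.InjOn (fun σ : Fin (N+1) → Bool => σ ∘ Fin.castSucc)
              (Realized f) := by
            intro σ hσ τ hτ h
            funext i
            cases i using Fin.lastCases with
            | last => rw [hsub σ hσ, hsub τ hτ]
            | cast i => exact congrFun h i
          calc (Realized f).ncard ≤ (Realized g).ncard :=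
              Set.ncard_le_ncard_of_injOn _ hmap hinj (Set.toFinite _)
            _ ≤ (N+1)^(m+1) := ih _ g hg
            _ ≤ (N+1+1)^(m+1) := Nat.pow_le_pow_left (by omega) _
      · push_neg at hz
        obtain ⟨j, hj⟩ := hz
        set t : (Fin m → ℝ) → ℝ :=
          fun u => (-c - ∑ i, a (j.succAbove i) * u i) / a j with ht
        set ψ : (Fin m → ℝ) → (Fin (m+1) → ℝ) := fun u => j.insertNth (t u) u with hψ
        have hψj : ∀ u, ψ u j = t u := fun u => Fin.insertNth_apply_same j _ _
        have hψs : ∀ u i, ψ u (j.succAbove i) = u i :=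
          fun u i => Fin.insertNth_apply_succAbove j _ _ _
        have hlast : ∀ u, f (Fin.last N) (ψ u) = 0 := by
          intro u
          rw [hac, Fin.sum_univ_succAbove _ j]
          simp only [hψj, hψs, ht]
          field_simp
          ring
        have hpsi_surj : ∀ x, f (Fin.last N) x = 0 →
            ψ (fun i => x (j.succAbove i)) = x := by
          intro x hx
          have hxj : t (fun i => x (j.succAbove i)) = x j := by
            rw [hac, Fin.sum_univ_succAbove _ j] at hx
            rw [ht]
            field_simp
            linarith
          show j.insertNth _ _ = x
          rw [hxj]
          exact Fin.insertNth_self_removeNth j x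
        set gψ : Fin N → (Fin m → ℝ) → ℝ := fun q u => g q (ψ u) with hgψ
        have hgψaff : ∀ q, IsAff (gψ q) := by
          intro q
          obtain ⟨a', c', h'⟩ := hg q
          refine ⟨fun i => a' (j.succAbove i) - a' j * (a (j.succAbove i) / a j),
            c' - a' j * (c / a j), fun u => ?_⟩
          show g q (ψ u) = _
          rw [h', Fin.sum_univ_succAbove _ j]
          simp only [hψj, hψs, ht, sub_mul, Finset.sum_sub_distrib]
          have key : ∑ i, (a' j * (a (j.succAbove i) / a j)) * u i
              = (a' j / a j) * ∑ i, a (j.succAbove i) * u i := by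
            rw [Finset.mul_sum]
            exact Finset.sum_congr rfl fun i _ => by ring
          rw [key]
          field_simp
          ring
        have hseg : ∀ σ τ : Fin (N+1) → Bool, σ ∈ Realized f → τ ∈ Realized f →
            σ ∘ Fin.castSucc = τ ∘ Fin.castSucc → σ (Fin.last N) = true →
            τ (Fin.last N) = false → (σ ∘ Fin.castSucc) ∈ Realized gψ := by
          rintro σ τ ⟨x, hx⟩ ⟨y, hy⟩ hst hσl hτl
          have hfx : 0 < f (Fin.last N) x := by
            have h := hx (Fin.last N); rw [hσl] at h; simpa using h
          have hfy : f (Fin.last N) y < 0 := by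
            have h := hy (Fin.last N); rw [hτl] at h; simpa using h
          have hd : 0 < f (Fin.last N) x - f (Fin.last N) y := by linarith
          set T := f (Fin.last N) x / (f (Fin.last N) x - f (Fin.last N) y) with hT
          have hT0 : 0 < T := div_pos hfx hd
          have hT1 : T < 1 := by rw [hT, div_lt_one hd]; linarith
          set z : Fin (m+1) → ℝ := fun i => (1 - T) * x i + T * y i with hz
          have hz0 : f (Fin.last N) z = 0 := by
            rw [hz, (hf (Fin.last N)).segment x y T, hT]
            field_simp
            ring
          have hzq : ∀ q : Fin N, if σ q.castSucc then 0 < g q z else g q z < 0 := by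
            intro q
            have h1 := hx q.castSucc
            have h2 := hy q.castSucc
            have hseg' := (hg q).segment x y T
            have hστ : σ q.castSucc = τ q.castSucc := congrFun hst q
            have hgz : g q z = (1 - T) * g q x + T * g q y := by rw [hz, hseg']
            cases hb : σ q.castSucc with
            | true =>
              rw [hb] at h1
              rw [← hστ, hb] at h2
              simp only [if_true] at h1 h2
              rw [if_pos rfl, hgz]
              nlinarith
            | false =>
              rw [hb] at h1
              rw [← hστ, hb] at h2
              simp only [if_neg Bool.false_ne_true] at h1 h2
              rw [if_neg Bool.false_ne_true, hgz]
              nlinarith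
          refine ⟨fun i => z (j.succAbove i), fun q => ?_⟩
          show if σ q.castSucc then 0 < g q (ψ fun i => z (j.succAbove i))
            else g q (ψ fun i => z (j.succAbove i)) < 0
          rw [hpsi_surj z hz0]
          exact hzq q
        set Φ : (Fin (N+1) → Bool) → ((Fin N → Bool) ⊕ (Fin N → Bool)) := fun σ =>
          if σ (Fin.last N) = true then Sum.inl (σ ∘ Fin.castSucc)
          else if (σ ∘ Fin.castSucc) ∈ Realized gψ then Sum.inr (σ ∘ Fin.castSucc)
          else Sum.inl (σ ∘ Fin.castSucc) with hΦ
        have hres_mem : ∀ σ ∈ Realized f, σ ∘ Fin.castSucc ∈ Realized g := by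
          rintro σ ⟨x, hx⟩
          exact ⟨x, fun q => hx q.castSucc⟩
        have hmapsto : ∀ σ ∈ Realized f,
            Φ σ ∈ (Sum.inl '' Realized g ∪ Sum.inr '' Realized gψ :
              Set ((Fin N → Bool) ⊕ (Fin N → Bool))) := by
          intro σ hσ
          rw [hΦ]
          dsimp only
          split_ifs with h1 h2
          · exact Or.inl ⟨_, hres_mem σ hσ, rfl⟩
          · exact Or.inr ⟨_, h2, rfl⟩
          · exact Or.inl ⟨_, hres_mem σ hσ, rfl⟩
        have hinj : Set.InjOn Φ (Realized f) := by
          intro σ hσ τ hτ heq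
          rw [hΦ] at heq
          dsimp only at heq
          have hext : σ ∘ Fin.castSucc = τ ∘ Fin.castSucc ∧
              σ (Fin.last N) = τ (Fin.last N) := by
            by_cases h1 : σ (Fin.last N) = true <;> by_cases h2 : τ (Fin.last N) = true
            · rw [if_pos h1, if_pos h2] at heq
              exact ⟨Sum.inl.inj heq, by rw [h1, h2]⟩
            · rw [if_pos h1, if_neg h2] at heq
              by_cases h3 : τ ∘ Fin.castSucc ∈ Realized gψ
              · rw [if_pos h3] at heq; exact absurd heq (by simp)
              · rw [if_neg h3] at heq
                exfalso
                have hres := Sum.inl.inj heq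
                have hτf : τ (Fin.last N) = false := by simpa using h2
                have hmem := hseg σ τ hσ hτ hres h1 hτf
                rw [hres] at hmem
                exact h3 hmem
            · rw [if_neg h1, if_pos h2] at heq
              by_cases h3 : σ ∘ Fin.castSucc ∈ Realized gψ
              · rw [if_pos h3] at heq; exact absurd heq (by simp)
              · rw [if_neg h3] at heq
                exfalso
                have hres := Sum.inl.inj heq
                have hσf : σ (Fin.last N) = false := by simpa using h1
                have hmem := hseg τ σ hτ hσ hres.symm h2 hσf
                rw [hres.symm] at hmem
                exact h3 hmem
            · rw [if_neg h1, if_neg h2] at heq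
              have hσf : σ (Fin.last N) = false := by simpa using h1
              have hτf : τ (Fin.last N) = false := by simpa using h2
              refine ⟨?_, by rw [hσf, hτf]⟩
              by_cases h3 : σ ∘ Fin.castSucc ∈ Realized gψ <;>
                by_cases h4 : τ ∘ Fin.castSucc ∈ Realized gψ
              · rw [if_pos h3, if_pos h4] at heq; exact Sum.inr.inj heq
              · rw [if_pos h3, if_neg h4] at heq; exact absurd heq (by simp)
              · rw [if_neg h3, if_pos h4] at heq; exact absurd heq (by simp)
              · rw [if_neg h3, if_neg h4] at heq; exact Sum.inl.inj heq
          funext i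
          cases i using Fin.lastCases with
          | last => exact hext.2
          | cast i => exact congrFun hext.1 i
        calc (Realized f).ncard
            ≤ (Sum.inl '' Realized g ∪ Sum.inr '' Realized gψ :
                Set ((Fin N → Bool) ⊕ (Fin N → Bool))).ncard :=
              Set.ncard_le_ncard_of_injOn Φ hmapsto hinj (Set.toFinite _)
          _ ≤ (Sum.inl '' Realized g : Set ((Fin N → Bool) ⊕ (Fin N → Bool))).ncard
              + (Sum.inr '' Realized gψ : Set ((Fin N → Bool) ⊕ (Fin N → Bool))).ncard :=
              Set.ncard_union_le _ _
          _ = (Realized g).ncard + (Realized gψ).ncard := by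
              rw [Set.ncard_image_of_injective _ Sum.inl_injective,
                Set.ncard_image_of_injective _ Sum.inr_injective]
          _ ≤ (N+1)^(m+1) + (N+1)^m := Nat.add_le_add (ih _ g hg) (ih _ gψ hgψaff)
          _ ≤ (N+1+1)^(m+1) := by
              calc (N+1)^(m+1) + (N+1)^m = (N+1)^m * (N+1+1) := by ring
                _ ≤ (N+1+1)^m * (N+1+1) :=
                    Nat.mul_le_mul_right _ (Nat.pow_le_pow_left (by omega) m)
                _ = (N+1+1)^(m+1) := by ring

end

lemma realized_card_le {ι κ : Type*} [Fintype ι] [Fintype κ]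
    (f : ι → (κ → ℝ) → ℝ) (hf : ∀ q, IsAff (f q)) :
    (Realized f).ncard ≤ (Fintype.card ι + 1) ^ (Fintype.card κ) := by
  classical
  set eι := Fintype.equivFin ι with heι
  set eκ := Fintype.equivFin κ with heκ
  set f' : Fin (Fintype.card ι) → (Fin (Fintype.card κ) → ℝ) → ℝ :=
    fun q y => f (eι.symm q) (fun i => y (eκ i)) with hf'
  have haff : ∀ q, IsAff (f' q) := by
    intro q
    obtain ⟨a, c, h⟩ := hf (eι.symm q)
    refine ⟨fun i' => a (eκ.symm i'), c, fun y => ?_⟩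
    rw [hf']
    dsimp only
    rw [h]
    congr 1
    exact Fintype.sum_equiv eκ _ _ (fun i => by simp)
  have hmap : ∀ σ ∈ Realized f, σ ∘ eι.symm ∈ Realized f' := by
    rintro σ ⟨x, hx⟩
    refine ⟨fun i' => x (eκ.symm i'), fun q => ?_⟩
    have h2 : f' q (fun i' => x (eκ.symm i')) = f (eι.symm q) x := by
      rw [hf']
      dsimp only
      congr 1
      funext i
      simp
    show if σ (eι.symm q) = true then 0 < f' q (fun i' => x (eκ.symm i'))
      else f' q (fun i' => x (eκ.symm i')) < 0
    rw [h2]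
    exact hx (eι.symm q)
  have hinj : Set.InjOn (fun σ : ι → Bool => σ ∘ eι.symm) (Realized f) := by
    intro σ _ τ _ h
    funext q
    simpa using congrFun h (eι q)
  calc (Realized f).ncard ≤ (Realized f').ncard :=
      Set.ncard_le_ncard_of_injOn _ hmap hinj (Set.toFinite _)
    _ ≤ _ := realized_key _ _ f' haff

lemma windowUnion_bounds {n01 n02 d0 f1 f2 s1 : ℕ} (hf1 : f1 ≤ n01) (hf2 : f2 ≤ n02)
    {u : ℕ × ℕ × ℕ} (hu : u ∈ windowUnion n01 n02 d0 f1 f2 s1) :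
    u.1 < n01 ∧ u.2.1 < n02 ∧ u.2.2 < d0 := by
  rw [windowUnion, Finset.mem_biUnion] at hu
  obtain ⟨p, hp, hu⟩ := hu
  rw [Finset.mem_product, Finset.mem_range, Finset.mem_range] at hp
  rw [windowSet, Finset.mem_image] at hu
  obtain ⟨q, hq, rfl⟩ := hu
  simp only [Finset.mem_product, Finset.mem_range] at hq
  obtain ⟨hq1, hq2, hq3⟩ := hq
  refine ⟨?_, ?_, hq3⟩
  · show q.1 + p.1 * s1 < n01
    have h1 : p.1 ≤ (n01 - f1) / s1 := by omega
    have h0 := Nat.div_mul_le_self (n01 - f1) s1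
    have h2 : p.1 * s1 ≤ n01 - f1 := le_trans (Nat.mul_le_mul_right s1 h1) h0
    omega
  · show q.2.1 + p.2 * s1 < n02
    have h1 : p.2 ≤ (n02 - f2) / s1 := by omega
    have h0 := Nat.div_mul_le_self (n02 - f2) s1
    have h2 : p.2 * s1 ≤ n02 - f2 := le_trans (Nat.mul_le_mul_right s1 h1) h0
    omega

lemma mem_windowUnion {n01 n02 d0 f1 f2 s1 : ℕ} {a b c i j : ℕ}
    (ha : a < f1) (hb : b < f2) (hc : c < d0)
    (hi : i < (n01 - f1) / s1 + 1) (hj : j < (n02 - f2) / s1 + 1) :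
    (a + i * s1, b + j * s1, c) ∈ windowUnion n01 n02 d0 f1 f2 s1 := by
  rw [windowUnion, Finset.mem_biUnion]
  refine ⟨(i, j), ?_, ?_⟩
  · rw [Finset.mem_product]
    exact ⟨Finset.mem_range.2 hi, Finset.mem_range.2 hj⟩
  · rw [windowSet, Finset.mem_image]
    refine ⟨(a, b, c), ?_, rfl⟩
    simp only [Finset.mem_product, Finset.mem_range]
    exact ⟨ha, hb, hc⟩

lemma convRegion_congr {n01 n02 d0 f1 f2 s1 d1 : ℕ}
    (W : Fin d1 → Fin f1 → Fin f2 → Fin d0 → ℝ) (B : Fin d1 → ℝ)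
    {P P' : ℕ → ℕ → ℕ → Bool}
    (h : ∀ i j k, i < (n01 - f1) / s1 + 1 → j < (n02 - f2) / s1 + 1 → k < d1 →
      P i j k = P' i j k) :
    convRegion n01 n02 d0 f1 f2 s1 d1 W B P = convRegion n01 n02 d0 f1 f2 s1 d1 W B P' := by
  ext X
  simp only [convRegion, Set.mem_setOf_eq]
  constructor <;> intro hX i j hi hj k
  · have := hX i j hi hj k
    rwa [h i j k.1 hi hj k.isLt] at this
  · have := hX i j hi hj k
    rwa [← h i j k.1 hi hj k.isLt] at this

lemma convRegions_finite (n01 n02 d0 f1 f2 s1 d1 : ℕ)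
    (W : Fin d1 → Fin f1 → Fin f2 → Fin d0 → ℝ) (B : Fin d1 → ℝ) :
    {R : Set (Fin n01 → Fin n02 → Fin d0 → ℝ) |
      (∃ P, R = convRegion n01 n02 d0 f1 f2 s1 d1 W B P) ∧ R.Nonempty}.Finite := by
  classical
  apply Set.Finite.subset (Set.finite_range
    (fun P' : Fin ((n01 - f1) / s1 + 1) → Fin ((n02 - f2) / s1 + 1) → Fin d1 → Bool =>
      convRegion n01 n02 d0 f1 f2 s1 d1 W B
        (fun i j k => if h : i < (n01 - f1) / s1 + 1 ∧ j < (n02 - f2) / s1 + 1 ∧ k < d1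
          then P' ⟨i, h.1⟩ ⟨j, h.2.1⟩ ⟨k, h.2.2⟩ else true)))
  rintro R ⟨⟨P, rfl⟩, -⟩
  refine ⟨fun i j k => P i.1 j.1 k.1, ?_⟩
  symm
  apply convRegion_congr
  intro i j k hi hj hk
  rw [dif_pos ⟨hi, hj, hk⟩]

section Upper

variable {n01 n02 d0 f1 f2 s1 d1 : ℕ}

/-- extension-by-zero of a function on the window-union coordinates to a full input. -/
def Xof (n01 n02 d0 f1 f2 s1 : ℕ)
    (y : ↥(windowUnion n01 n02 d0 f1 f2 s1) → ℝ) :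
    Fin n01 → Fin n02 → Fin d0 → ℝ := fun a b c =>
  if h : ((a : ℕ), (b : ℕ), (c : ℕ)) ∈ windowUnion n01 n02 d0 f1 f2 s1 then y ⟨_, h⟩ else 0

/-- the hidden-neuron pre-activations as functionals of the window-union coordinates. -/
def convF (n01 n02 d0 f1 f2 s1 d1 : ℕ)
    (W : Fin d1 → Fin f1 → Fin f2 → Fin d0 → ℝ) (B : Fin d1 → ℝ)
    (q : Fin ((n01 - f1) / s1 + 1) × Fin ((n02 - f2) / s1 + 1) × Fin d1)
    (y : ↥(windowUnion n01 n02 d0 f1 f2 s1) → ℝ) : ℝ :=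
  convZ s1 W B (inputExt (Xof n01 n02 d0 f1 f2 s1 y)) q.1.1 q.2.1.1 q.2.2

lemma isAff_inputExt_Xof {n01 n02 d0 f1 f2 s1 : ℕ} (al be ga : ℕ) :
    IsAff (fun y : ↥(windowUnion n01 n02 d0 f1 f2 s1) → ℝ =>
      inputExt (Xof n01 n02 d0 f1 f2 s1 y) al be ga) := by
  classical
  by_cases hb : al < n01 ∧ be < n02 ∧ ga < d0
  · by_cases hm : ((al : ℕ), (be : ℕ), (ga : ℕ)) ∈ windowUnion n01 n02 d0 f1 f2 s1
    · have heq : (fun y : ↥(windowUnion n01 n02 d0 f1 f2 s1) → ℝ =>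
          inputExt (Xof n01 n02 d0 f1 f2 s1 y) al be ga)
          = fun y => y ⟨(al, be, ga), hm⟩ := by
        funext y
        simp only [inputExt, dif_pos hb, Xof]
        rw [dif_pos hm]
      rw [heq]
      exact isAff_coord _
    · have heq : (fun y : ↥(windowUnion n01 n02 d0 f1 f2 s1) → ℝ =>
          inputExt (Xof n01 n02 d0 f1 f2 s1 y) al be ga) = fun _ => 0 := by
        funext y
        simp only [inputExt, dif_pos hb, Xof]
        rw [dif_neg hm]
      rw [heq]
      exact isAff_const 0
  · have heq : (fun y : ↥(windowUnion n01 n02 d0 f1 f2 s1) → ℝ =>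
        inputExt (Xof n01 n02 d0 f1 f2 s1 y) al be ga) = fun _ => 0 := by
      funext y
      simp only [inputExt, dif_neg hb]
    rw [heq]
    exact isAff_const 0

lemma convF_isAff (W : Fin d1 → Fin f1 → Fin f2 → Fin d0 → ℝ) (B : Fin d1 → ℝ)
    (q : Fin ((n01 - f1) / s1 + 1) × Fin ((n02 - f2) / s1 + 1) × Fin d1) :
    IsAff (convF n01 n02 d0 f1 f2 s1 d1 W B q) := by
  classical
  show IsAff (fun y => (∑ a : Fin f1, ∑ b : Fin f2, ∑ c : Fin d0,
    W q.2.2 a b c * inputExt (Xof n01 n02 d0 f1 f2 s1 y)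
      (a.1 + q.1.1 * s1) (b.1 + q.2.1.1 * s1) c.1) + B q.2.2)
  apply IsAff.add _ (isAff_const _)
  apply isAff_sum
  intro a _
  apply isAff_sum
  intro b _
  apply isAff_sum
  intro c _
  exact IsAff.const_mul _ (isAff_inputExt_Xof _ _ _)

lemma convF_eq (hf1 : f1 ≤ n01) (hf2 : f2 ≤ n02)
    (W : Fin d1 → Fin f1 → Fin f2 → Fin d0 → ℝ) (B : Fin d1 → ℝ)
    (q : Fin ((n01 - f1) / s1 + 1) × Fin ((n02 - f2) / s1 + 1) × Fin d1)
    (X : Fin n01 → Fin n02 → Fin d0 → ℝ) :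
    convF n01 n02 d0 f1 f2 s1 d1 W B q
      (fun u => X ⟨u.1.1, (windowUnion_bounds hf1 hf2 u.2).1⟩
        ⟨u.1.2.1, (windowUnion_bounds hf1 hf2 u.2).2.1⟩
        ⟨u.1.2.2, (windowUnion_bounds hf1 hf2 u.2).2.2⟩)
      = convZ s1 W B (inputExt X) q.1.1 q.2.1.1 q.2.2 := by
  show (∑ a : Fin f1, ∑ b : Fin f2, ∑ c : Fin d0,
      W q.2.2 a b c * inputExt (Xof n01 n02 d0 f1 f2 s1 _)
        (a.1 + q.1.1 * s1) (b.1 + q.2.1.1 * s1) c.1) + B q.2.2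
    = (∑ a : Fin f1, ∑ b : Fin f2, ∑ c : Fin d0,
      W q.2.2 a b c * inputExt X
        (a.1 + q.1.1 * s1) (b.1 + q.2.1.1 * s1) c.1) + B q.2.2
  congr 1
  apply Finset.sum_congr rfl
  intro a _
  apply Finset.sum_congr rfl
  intro b _
  apply Finset.sum_congr rfl
  intro c _
  congr 1
  have hm : ((a.1 + q.1.1 * s1 : ℕ), (b.1 + q.2.1.1 * s1 : ℕ), (c.1 : ℕ)) ∈
      windowUnion n01 n02 d0 f1 f2 s1 :=
    mem_windowUnion a.isLt b.isLt c.isLt q.1.isLt q.2.1.isLt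
  have hbd := windowUnion_bounds hf1 hf2 hm
  simp only [inputExt, dif_pos (show a.1 + q.1.1 * s1 < n01 ∧ b.1 + q.2.1.1 * s1 < n02
    ∧ c.1 < d0 from ⟨hbd.1, hbd.2.1, hbd.2.2⟩), Xof]
  rw [dif_pos hm]

/-- extend a pattern on the hidden grid to `ℕ³`. -/
def Pext (n01 n02 f1 f2 s1 d1 : ℕ)
    (σ : Fin ((n01 - f1) / s1 + 1) × Fin ((n02 - f2) / s1 + 1) × Fin d1 → Bool) :
    ℕ → ℕ → ℕ → Bool := fun i j k =>
  if h : i < (n01 - f1) / s1 + 1 ∧ j < (n02 - f2) / s1 + 1 ∧ k < d1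
    then σ (⟨i, h.1⟩, ⟨j, h.2.1⟩, ⟨k, h.2.2⟩) else true

lemma convNumRegions_le (hf1 : f1 ≤ n01) (hf2 : f2 ≤ n02)
    (W : Fin d1 → Fin f1 → Fin f2 → Fin d0 → ℝ) (B : Fin d1 → ℝ) :
    convNumRegions n01 n02 d0 f1 f2 s1 d1 W B ≤
      (((n01 - f1) / s1 + 1) * (((n02 - f2) / s1 + 1) * d1) + 1) ^
        (windowUnion n01 n02 d0 f1 f2 s1).card := by
  classical
  set S := {R : Set (Fin n01 → Fin n02 → Fin d0 → ℝ) |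
    (∃ P, R = convRegion n01 n02 d0 f1 f2 s1 d1 W B P) ∧ R.Nonempty} with hS
  set F := convF n01 n02 d0 f1 f2 s1 d1 W B with hF
  have hch : ∀ R : Set (Fin n01 → Fin n02 → Fin d0 → ℝ),
      ∃ σ : Fin ((n01 - f1) / s1 + 1) × Fin ((n02 - f2) / s1 + 1) × Fin d1 → Bool,
      R ∈ S → σ ∈ Realized F ∧
        R = convRegion n01 n02 d0 f1 f2 s1 d1 W B (Pext n01 n02 f1 f2 s1 d1 σ) := by
    intro R
    by_cases hR : R ∈ S
    · obtain ⟨⟨P, rfl⟩, x, hx⟩ := hR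
      refine ⟨fun q => P q.1.1 q.2.1.1 q.2.2.1, fun _ => ⟨?_, ?_⟩⟩
      · refine ⟨fun u => x ⟨u.1.1, (windowUnion_bounds hf1 hf2 u.2).1⟩
          ⟨u.1.2.1, (windowUnion_bounds hf1 hf2 u.2).2.1⟩
          ⟨u.1.2.2, (windowUnion_bounds hf1 hf2 u.2).2.2⟩, fun q => ?_⟩
        have hFq := convF_eq hf1 hf2 W B q x
        have hcond := hx q.1.1 q.2.1.1 q.1.isLt q.2.1.isLt q.2.2
        show if P q.1.1 q.2.1.1 q.2.2.1 = true then 0 < F q _ else F q _ < 0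
        rw [hF, hFq]
        exact hcond
      · apply convRegion_congr
        intro i j k hi hj hk
        rw [Pext, dif_pos ⟨hi, hj, hk⟩]
    · exact ⟨fun _ => true, fun h => absurd h hR⟩
  choose Φ hΦ using hch
  have hmap : ∀ R ∈ S, Φ R ∈ Realized F := fun R hR => (hΦ R hR).1
  have hinj : Set.InjOn Φ S := by
    intro R hR R' hR' heq
    rw [(hΦ R hR).2, (hΦ R' hR').2, heq]
  calc convNumRegions n01 n02 d0 f1 f2 s1 d1 W B = S.ncard := rfl
    _ ≤ (Realized F).ncard := Set.ncard_le_ncard_of_injOn Φ hmap hinj (Set.toFinite _)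
    _ ≤ (Fintype.card (Fin ((n01 - f1) / s1 + 1) × Fin ((n02 - f2) / s1 + 1) × Fin d1) + 1)
          ^ (Fintype.card ↥(windowUnion n01 n02 d0 f1 f2 s1)) :=
        realized_card_le F (convF_isAff W B)
    _ = _ := by
        rw [Fintype.card_prod, Fintype.card_prod, Fintype.card_fin, Fintype.card_fin,
          Fintype.card_fin, Fintype.card_coe]

end Upper

section Lower

lemma triple_collapse {f1 f2 d0 : ℕ} (E : (Fin f1 × Fin f2 × Fin d0) ≃ Fin (f1 * f2 * d0))
    (κ0 : Fin (f1 * f2 * d0)) (v : Fin f1 → Fin f2 → Fin d0 → ℝ) :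
    ∑ a : Fin f1, ∑ b : Fin f2, ∑ c : Fin d0,
      (if E (a, b, c) = κ0 then (1 : ℝ) else 0) * v a b c
      = v (E.symm κ0).1 (E.symm κ0).2.1 (E.symm κ0).2.2 := by
  classical
  have h0 : ∑ a : Fin f1, ∑ b : Fin f2, ∑ c : Fin d0,
      (if E (a, b, c) = κ0 then (1 : ℝ) else 0) * v a b c
      = ∑ z : Fin f1 × Fin f2 × Fin d0, (if E z = κ0 then (1 : ℝ) else 0) * v z.1 z.2.1 z.2.2 := by
    rw [Fintype.sum_prod_type]
    refine Finset.sum_congr rfl fun a _ => ?_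
    rw [Fintype.sum_prod_type]
  rw [h0]
  have h1 : ∀ z : Fin f1 × Fin f2 × Fin d0, (if E z = κ0 then (1 : ℝ) else 0) * v z.1 z.2.1 z.2.2
      = if z = E.symm κ0 then v z.1 z.2.1 z.2.2 else 0 := by
    intro z
    by_cases h : z = E.symm κ0
    · subst h; simp
    · rw [if_neg (fun hEz => h (by rw [← hEz, Equiv.symm_apply_apply])), zero_mul, if_neg h]
  simp_rw [h1]
  rw [Finset.sum_ite_eq' Finset.univ (E.symm κ0)]
  simp

lemma half_ne (nn kk : ℕ) : ((nn : ℝ) - 1/2 - (kk : ℝ)) ≠ 0 := by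
  intro h
  have h2 : (((2 * nn : ℤ) - 2 * kk : ℤ) : ℝ) = 1 := by push_cast; linarith
  have h3 : (2 * nn : ℤ) - 2 * kk = 1 := by exact_mod_cast h2
  omega


lemma exists_lower {n01 n02 d0 f1 f2 s1 : ℕ}
    (hd0 : 0 < d0) (hf1p : 0 < f1) (hf2p : 0 < f2)
    (hf1 : f1 ≤ n01) (hf2 : f2 ≤ n02) (d1 : ℕ) :
    ∃ (W : Fin d1 → Fin f1 → Fin f2 → Fin d0 → ℝ) (B : Fin d1 → ℝ),
      (d1 / (f1 * f2 * d0) + 1) ^ (windowUnion n01 n02 d0 f1 f2 s1).card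
        ≤ convNumRegions n01 n02 d0 f1 f2 s1 d1 W B := by
  classical
  have hnf : 0 < f1 * f2 * d0 := by positivity
  obtain ⟨E⟩ : Nonempty ((Fin f1 × Fin f2 × Fin d0) ≃ Fin (f1 * f2 * d0)) :=
    ⟨Fintype.equivFinOfCardEq (by simp [mul_assoc])⟩
  have hwit : ∀ u : ↥(windowUnion n01 n02 d0 f1 f2 s1),
      ∃ (op : (Fin f1 × Fin f2 × Fin d0) × (ℕ × ℕ)),
        op.2.1 < (n01 - f1) / s1 + 1 ∧ op.2.2 < (n02 - f2) / s1 + 1 ∧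
        (u : ℕ × ℕ × ℕ) = (op.1.1.1 + op.2.1 * s1, op.1.2.1.1 + op.2.2 * s1, op.1.2.2.1) := by
    rintro ⟨u, hu⟩
    rw [windowUnion, Finset.mem_biUnion] at hu
    obtain ⟨p, hp, hu⟩ := hu
    rw [Finset.mem_product, Finset.mem_range, Finset.mem_range] at hp
    rw [windowSet, Finset.mem_image] at hu
    obtain ⟨q, hq, rfl⟩ := hu
    simp only [Finset.mem_product, Finset.mem_range] at hq
    exact ⟨((⟨q.1, hq.1⟩, ⟨q.2.1, hq.2.1⟩, ⟨q.2.2, hq.2.2⟩), p), hp.1, hp.2, rfl⟩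
  choose op hp1 hp2 ho using hwit
  set o : ↥(windowUnion n01 n02 d0 f1 f2 s1) → Fin f1 × Fin f2 × Fin d0 :=
    fun u => (op u).1 with hodef
  set M := d1 / (f1 * f2 * d0) with hMdef
  set W0 : Fin d1 → Fin f1 → Fin f2 → Fin d0 → ℝ := fun k a b c =>
    if E (a, b, c) = ⟨k.1 % (f1 * f2 * d0), Nat.mod_lt _ hnf⟩ then 1 else 0 with hW0
  set B0 : Fin d1 → ℝ := fun k => -(k.1 : ℝ) with hB0
  set Xg : (↥(windowUnion n01 n02 d0 f1 f2 s1) → Fin (M + 1)) →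
      Fin n01 → Fin n02 → Fin d0 → ℝ := fun g a b c =>
    if h : ((a : ℕ), (b : ℕ), (c : ℕ)) ∈ windowUnion n01 n02 d0 f1 f2 s1
      then ((E (o ⟨_, h⟩)).1 : ℝ) + ((g ⟨_, h⟩).1 : ℝ) * (f1 * f2 * d0) - 1/2 else 0
    with hXg
  -- value of the pre-activations on the inputs Xg g
  have hZ : ∀ (g : ↥(windowUnion n01 n02 d0 f1 f2 s1) → Fin (M + 1)) (i j : ℕ),
      i < (n01 - f1) / s1 + 1 → j < (n02 - f2) / s1 + 1 → ∀ (k : Fin d1)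
      (u : ↥(windowUnion n01 n02 d0 f1 f2 s1)),
      (u : ℕ × ℕ × ℕ) =
        ((E.symm ⟨k.1 % (f1 * f2 * d0), Nat.mod_lt _ hnf⟩).1.1 + i * s1,
         (E.symm ⟨k.1 % (f1 * f2 * d0), Nat.mod_lt _ hnf⟩).2.1.1 + j * s1,
         (E.symm ⟨k.1 % (f1 * f2 * d0), Nat.mod_lt _ hnf⟩).2.2.1) →
      convZ s1 W0 B0 (inputExt (Xg g)) i j k
        = ((E (o u)).1 : ℝ) + ((g u).1 : ℝ) * (f1 * f2 * d0) - 1/2 - (k.1 : ℝ) := by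
    intro g i j hi hj k u hu
    show (∑ a : Fin f1, ∑ b : Fin f2, ∑ c : Fin d0,
      W0 k a b c * inputExt (Xg g) (a.1 + i * s1) (b.1 + j * s1) c.1) + B0 k = _
    have hW0k : ∀ (a : Fin f1) (b : Fin f2) (c : Fin d0), W0 k a b c
        = if E (a, b, c) = (⟨k.1 % (f1 * f2 * d0), Nat.mod_lt _ hnf⟩ : Fin (f1 * f2 * d0))
          then (1 : ℝ) else 0 := fun a b c => rfl
    simp_rw [hW0k]
    rw [triple_collapse E (⟨k.1 % (f1 * f2 * d0), Nat.mod_lt _ hnf⟩ : Fin (f1 * f2 * d0))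
      (fun a b c => inputExt (Xg g) (a.1 + i * s1) (b.1 + j * s1) c.1)]
    have hmemU := u.2
    have hmem' : (((E.symm ⟨k.1 % (f1 * f2 * d0), Nat.mod_lt _ hnf⟩).1.1 + i * s1 : ℕ),
        ((E.symm ⟨k.1 % (f1 * f2 * d0), Nat.mod_lt _ hnf⟩).2.1.1 + j * s1 : ℕ),
        ((E.symm ⟨k.1 % (f1 * f2 * d0), Nat.mod_lt _ hnf⟩).2.2.1 : ℕ)) ∈
        windowUnion n01 n02 d0 f1 f2 s1 := by rw [← hu]; exact hmemU
    obtain ⟨hbd1, hbd2, hbd3⟩ := windowUnion_bounds hf1 hf2 hmem'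
    have hcond : (E.symm ⟨k.1 % (f1 * f2 * d0), Nat.mod_lt _ hnf⟩).1.1 + i * s1 < n01 ∧
        (E.symm ⟨k.1 % (f1 * f2 * d0), Nat.mod_lt _ hnf⟩).2.1.1 + j * s1 < n02 ∧
        (E.symm ⟨k.1 % (f1 * f2 * d0), Nat.mod_lt _ hnf⟩).2.2.1 < d0 := ⟨hbd1, hbd2, hbd3⟩
    have hB0k : B0 k = -(k.1 : ℝ) := rfl
    rw [hB0k]
    simp only [inputExt]
    rw [dif_pos hcond]
    show Xg g ⟨_, _⟩ ⟨_, _⟩ ⟨_, _⟩ + -(k.1 : ℝ) = _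
    rw [hXg]
    dsimp only
    rw [dif_pos hmem']
    have huu : (⟨_, hmem'⟩ : ↥(windowUnion n01 n02 d0 f1 f2 s1)) = u := Subtype.ext hu.symm
    rw [huu]
    ring
  -- the sign pattern of Xg g
  set Pg : (↥(windowUnion n01 n02 d0 f1 f2 s1) → Fin (M + 1)) → ℕ → ℕ → ℕ → Bool :=
    fun g i j k => if h : k < d1
      then decide (0 < convZ s1 W0 B0 (inputExt (Xg g)) i j ⟨k, h⟩) else true with hPg
  have hPgk : ∀ g i j (k : Fin d1), Pg g i j k.1
      = decide (0 < convZ s1 W0 B0 (inputExt (Xg g)) i j k) := by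
    intro g i j k
    rw [hPg]
    dsimp only
    rw [dif_pos k.isLt]
  -- nonvanishing
  have hZne : ∀ (g : ↥(windowUnion n01 n02 d0 f1 f2 s1) → Fin (M + 1)) (i j : ℕ),
      i < (n01 - f1) / s1 + 1 → j < (n02 - f2) / s1 + 1 → ∀ k : Fin d1,
      convZ s1 W0 B0 (inputExt (Xg g)) i j k ≠ 0 := by
    intro g i j hi hj k
    set κ0 : Fin (f1 * f2 * d0) := ⟨k.1 % (f1 * f2 * d0), Nat.mod_lt _ hnf⟩ with hκ0
    have hmem' : (((E.symm κ0).1.1 + i * s1 : ℕ), ((E.symm κ0).2.1.1 + j * s1 : ℕ),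
        ((E.symm κ0).2.2.1 : ℕ)) ∈ windowUnion n01 n02 d0 f1 f2 s1 :=
      mem_windowUnion (E.symm κ0).1.isLt (E.symm κ0).2.1.isLt (E.symm κ0).2.2.isLt hi hj
    rw [hZ g i j hi hj k ⟨_, hmem'⟩ rfl]
    have hcast : ((E (o ⟨_, hmem'⟩)).1 : ℝ) + ((g ⟨_, hmem'⟩).1 : ℝ) * (f1 * f2 * d0)
        - 1/2 - (k.1 : ℝ)
        = ((((E (o ⟨_, hmem'⟩)).1 + (g ⟨_, hmem'⟩).1 * (f1 * f2 * d0) : ℕ) : ℝ))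
          - 1/2 - (k.1 : ℝ) := by push_cast; ring
    rw [hcast]
    exact half_ne _ _
  -- membership of Xg g in its region
  have hmem : ∀ g, Xg g ∈ convRegion n01 n02 d0 f1 f2 s1 d1 W0 B0 (Pg g) := by
    intro g
    simp only [convRegion, Set.mem_setOf_eq]
    intro i j hi hj k
    rw [hPgk g i j k]
    by_cases hp : 0 < convZ s1 W0 B0 (inputExt (Xg g)) i j k
    · rw [if_pos (by simp [hp])]
      exact hp
    · rw [if_neg (by simp [hp])]
      exact lt_of_le_of_ne (not_lt.1 hp) (hZne g i j hi hj k)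
  -- injectivity on one side
  have hkey : ∀ (h1 h2 : ↥(windowUnion n01 n02 d0 f1 f2 s1) → Fin (M + 1))
      (u : ↥(windowUnion n01 n02 d0 f1 f2 s1)),
      convRegion n01 n02 d0 f1 f2 s1 d1 W0 B0 (Pg h1)
        = convRegion n01 n02 d0 f1 f2 s1 d1 W0 B0 (Pg h2) →
      (h1 u).1 < (h2 u).1 → False := by
    intro h1 h2 u hreq hlt
    have hrM : (h1 u).1 < M := by
      have := (h2 u).isLt
      omega
    have hkb : (E (o u)).1 + (h1 u).1 * (f1 * f2 * d0) < d1 := by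
      have hb1 : (E (o u)).1 + (h1 u).1 * (f1 * f2 * d0)
          < ((h1 u).1 + 1) * (f1 * f2 * d0) := by
        have := (E (o u)).isLt
        calc (E (o u)).1 + (h1 u).1 * (f1 * f2 * d0)
            < f1 * f2 * d0 + (h1 u).1 * (f1 * f2 * d0) := by omega
          _ = ((h1 u).1 + 1) * (f1 * f2 * d0) := by ring
      have hb2 : ((h1 u).1 + 1) * (f1 * f2 * d0) ≤ M * (f1 * f2 * d0) :=
        Nat.mul_le_mul_right _ (by omega)
      have hb3 : M * (f1 * f2 * d0) ≤ d1 := by rw [hMdef]; exact Nat.div_mul_le_self d1 _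
      omega
    set k : Fin d1 := ⟨(E (o u)).1 + (h1 u).1 * (f1 * f2 * d0), hkb⟩ with hk
    have hkmod : k.1 % (f1 * f2 * d0) = (E (o u)).1 := by
      rw [hk]
      dsimp only
      rw [Nat.add_mul_mod_self_right]
      exact Nat.mod_eq_of_lt (E (o u)).isLt
    have hκ : (⟨k.1 % (f1 * f2 * d0), Nat.mod_lt _ hnf⟩ : Fin (f1 * f2 * d0)) = E (o u) :=
      Fin.ext hkmod
    have hEs : E.symm ⟨k.1 % (f1 * f2 * d0), Nat.mod_lt _ hnf⟩ = o u := by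
      rw [hκ, Equiv.symm_apply_apply]
    have hueq : (u : ℕ × ℕ × ℕ) =
        ((E.symm ⟨k.1 % (f1 * f2 * d0), Nat.mod_lt _ hnf⟩).1.1 + (op u).2.1 * s1,
         (E.symm ⟨k.1 % (f1 * f2 * d0), Nat.mod_lt _ hnf⟩).2.1.1 + (op u).2.2 * s1,
         (E.symm ⟨k.1 % (f1 * f2 * d0), Nat.mod_lt _ hnf⟩).2.2.1) := by
      rw [hEs]
      exact ho u
    have hZ1 := hZ h1 (op u).2.1 (op u).2.2 (hp1 u) (hp2 u) k u hueq
    have hZ2 := hZ h2 (op u).2.1 (op u).2.2 (hp1 u) (hp2 u) k u hueq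
    have hv1 : convZ s1 W0 B0 (inputExt (Xg h1)) (op u).2.1 (op u).2.2 k = -(1/2 : ℝ) := by
      rw [hZ1, hk]
      push_cast
      ring
    have hv2 : 0 < convZ s1 W0 B0 (inputExt (Xg h2)) (op u).2.1 (op u).2.2 k := by
      rw [hZ2, hk]
      have h12 : (1 : ℝ) ≤ f1 * f2 * d0 := by exact_mod_cast hnf
      have hle : ((h1 u).1 : ℝ) + 1 ≤ ((h2 u).1 : ℝ) := by exact_mod_cast hlt
      push_cast
      nlinarith
    have hX1mem : Xg h1 ∈ convRegion n01 n02 d0 f1 f2 s1 d1 W0 B0 (Pg h2) := by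
      rw [← hreq]
      exact hmem h1
    simp only [convRegion, Set.mem_setOf_eq] at hX1mem
    have hcond := hX1mem (op u).2.1 (op u).2.2 (hp1 u) (hp2 u) k
    have hPtrue : Pg h2 (op u).2.1 (op u).2.2 k.1 = true := by
      rw [hPgk]
      exact decide_eq_true hv2
    rw [hv1, if_pos hPtrue] at hcond
    linarith
  have hinj : Set.InjOn (fun g => convRegion n01 n02 d0 f1 f2 s1 d1 W0 B0 (Pg g))
      (Set.univ : Set (↥(windowUnion n01 n02 d0 f1 f2 s1) → Fin (M + 1))) := by
    intro g _ g' _ heq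
    funext u
    by_contra hne
    have hne' : (g u).1 ≠ (g' u).1 := fun h => hne (Fin.ext h)
    rcases Nat.lt_or_ge (g u).1 (g' u).1 with h | h
    · exact hkey g g' u heq h
    · exact hkey g' g u heq.symm (by omega)
  refine ⟨W0, B0, ?_⟩
  have hmapS : ∀ g : (↥(windowUnion n01 n02 d0 f1 f2 s1) → Fin (M + 1)),
      convRegion n01 n02 d0 f1 f2 s1 d1 W0 B0 (Pg g) ∈
        {R : Set (Fin n01 → Fin n02 → Fin d0 → ℝ) |
          (∃ P, R = convRegion n01 n02 d0 f1 f2 s1 d1 W0 B0 P) ∧ R.Nonempty} := by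
    intro g
    exact ⟨⟨Pg g, rfl⟩, ⟨Xg g, hmem g⟩⟩
  have hcount := Set.ncard_le_ncard_of_injOn
    (fun g => convRegion n01 n02 d0 f1 f2 s1 d1 W0 B0 (Pg g))
    (fun g _ => hmapS g) hinj
    (convRegions_finite n01 n02 d0 f1 f2 s1 d1 W0 B0)
  have huniv : (Set.univ : Set (↥(windowUnion n01 n02 d0 f1 f2 s1) → Fin (M + 1))).ncard
      = (M + 1) ^ (windowUnion n01 n02 d0 f1 f2 s1).card := by
    rw [Set.ncard_univ, Nat.card_eq_fintype_card, Fintype.card_fun, Fintype.card_fin,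
      Fintype.card_coe]
  rw [huniv] at hcount
  exact hcount

end Lower

/-- (Theorem 3.) With `m = #(∪_{(i,j)∈I_N} S_{i,j})`, one has
`R_{N(d1)} = Θ(d1^m)` as the number of filters `d1 → ∞`; in particular, if every input neuron
is involved in the convolutional calculation then `R_{N(d1)} = Θ(d1^{n01·n02·d0})`. -/
theorem statement_7 (n01 n02 d0 f1 f2 s1 : ℕ)
    (hd0 : 0 < d0) (hf1p : 0 < f1) (hf2p : 0 < f2) (hs : 0 < s1)
    (hf1 : f1 ≤ n01) (hf2 : f2 ≤ n02) :
    (∃ c1 c2 : ℝ, 0 < c1 ∧ 0 < c2 ∧ ∃ D : ℕ, ∀ d1 ≥ D,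
      c1 * (d1 : ℝ) ^ (windowUnion n01 n02 d0 f1 f2 s1).card
          ≤ (convMaxRegions n01 n02 d0 f1 f2 s1 d1 : ℝ) ∧
        (convMaxRegions n01 n02 d0 f1 f2 s1 d1 : ℝ)
          ≤ c2 * (d1 : ℝ) ^ (windowUnion n01 n02 d0 f1 f2 s1).card) ∧
    (windowUnion n01 n02 d0 f1 f2 s1
        = Finset.range n01 ×ˢ Finset.range n02 ×ˢ Finset.range d0 →
      ∃ c1 c2 : ℝ, 0 < c1 ∧ 0 < c2 ∧ ∃ D : ℕ, ∀ d1 ≥ D,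
        c1 * (d1 : ℝ) ^ (n01 * n02 * d0)
            ≤ (convMaxRegions n01 n02 d0 f1 f2 s1 d1 : ℝ) ∧
          (convMaxRegions n01 n02 d0 f1 f2 s1 d1 : ℝ)
            ≤ c2 * (d1 : ℝ) ^ (n01 * n02 * d0)) := by
  have hnf : 0 < f1 * f2 * d0 := by positivity
  have hub : ∀ d1 : ℕ, convMaxRegions n01 n02 d0 f1 f2 s1 d1 ≤
      (((n01 - f1) / s1 + 1) * (((n02 - f2) / s1 + 1) * d1) + 1) ^
        (windowUnion n01 n02 d0 f1 f2 s1).card := by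
    intro d1
    apply csSup_le
    · exact ⟨convNumRegions n01 n02 d0 f1 f2 s1 d1 (fun _ _ _ _ => 0) (fun _ => 0),
        fun _ _ _ _ => 0, fun _ => 0, rfl⟩
    · rintro n ⟨W, B, rfl⟩
      exact convNumRegions_le hf1 hf2 W B
  have hlb : ∀ d1 : ℕ,
      (d1 / (f1 * f2 * d0) + 1) ^ (windowUnion n01 n02 d0 f1 f2 s1).card ≤
        convMaxRegions n01 n02 d0 f1 f2 s1 d1 := by
    intro d1
    obtain ⟨W, B, hWB⟩ := exists_lower hd0 hf1p hf2p hf1 hf2 d1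
    refine hWB.trans (le_csSup ⟨(((n01 - f1) / s1 + 1) * (((n02 - f2) / s1 + 1) * d1) + 1) ^
      (windowUnion n01 n02 d0 f1 f2 s1).card, ?_⟩ ⟨W, B, rfl⟩)
    rintro n ⟨W', B', rfl⟩
    exact convNumRegions_le hf1 hf2 W' B'
  have part1 : ∃ c1 c2 : ℝ, 0 < c1 ∧ 0 < c2 ∧ ∃ D : ℕ, ∀ d1 ≥ D,
      c1 * (d1 : ℝ) ^ (windowUnion n01 n02 d0 f1 f2 s1).card
          ≤ (convMaxRegions n01 n02 d0 f1 f2 s1 d1 : ℝ) ∧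
        (convMaxRegions n01 n02 d0 f1 f2 s1 d1 : ℝ)
          ≤ c2 * (d1 : ℝ) ^ (windowUnion n01 n02 d0 f1 f2 s1).card := by
    set m := (windowUnion n01 n02 d0 f1 f2 s1).card with hm
    set K := (n01 - f1) / s1 + 1 with hK
    set L := (n02 - f2) / s1 + 1 with hL
    have hnfR : (0 : ℝ) < (f1 : ℝ) * f2 * d0 := by exact_mod_cast hnf
    refine ⟨((f1 : ℝ) * f2 * d0)⁻¹ ^ m, ((K * L + 1 : ℕ) : ℝ) ^ m, ?_, ?_, 1, ?_⟩
    · exact pow_pos (by rw [inv_pos]; exact hnfR) m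
    · exact pow_pos (by exact_mod_cast Nat.succ_pos (K * L)) m
    · intro d1 hd1
      constructor
      · -- lower bound
        have h1 : ((f1 : ℝ) * f2 * d0)⁻¹ ^ m * (d1 : ℝ) ^ m
            = ((d1 : ℝ) * ((f1 : ℝ) * f2 * d0)⁻¹) ^ m := by
          rw [mul_pow]
          ring
        rw [h1]
        have hdiv : d1 < (d1 / (f1 * f2 * d0) + 1) * (f1 * f2 * d0) := by
          have h := Nat.div_add_mod d1 (f1 * f2 * d0)
          have h2 := Nat.mod_lt d1 hnf
          calc d1 = (f1 * f2 * d0) * (d1 / (f1 * f2 * d0)) + d1 % (f1 * f2 * d0) := h.symm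
            _ < (f1 * f2 * d0) * (d1 / (f1 * f2 * d0)) + (f1 * f2 * d0) := by omega
            _ = (d1 / (f1 * f2 * d0) + 1) * (f1 * f2 * d0) := by ring
        have h2 : (d1 : ℝ) * ((f1 : ℝ) * f2 * d0)⁻¹ ≤ ((d1 / (f1 * f2 * d0) + 1 : ℕ) : ℝ) := by
          rw [← div_eq_mul_inv, div_le_iff₀ hnfR]
          have : (d1 : ℝ) < ((d1 / (f1 * f2 * d0) + 1 : ℕ) : ℝ) * ((f1 : ℝ) * f2 * d0) := by
            have := hdiv
            push_cast
            exact_mod_cast (by push_cast; exact_mod_cast hdiv :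
              (d1 : ℝ) < ((d1 / (f1 * f2 * d0) + 1 : ℕ) : ℝ) * ((f1 : ℝ) * f2 * d0))
          linarith
        calc ((d1 : ℝ) * ((f1 : ℝ) * f2 * d0)⁻¹) ^ m
            ≤ (((d1 / (f1 * f2 * d0) + 1 : ℕ) : ℝ)) ^ m :=
              pow_le_pow_left₀ (by positivity) h2 m
          _ ≤ (convMaxRegions n01 n02 d0 f1 f2 s1 d1 : ℝ) := by exact_mod_cast hlb d1
      · -- upper bound
        have h3 : (K * (L * d1) + 1) ^ m ≤ ((K * L + 1) * d1) ^ m := by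
          apply Nat.pow_le_pow_left
          calc K * (L * d1) + 1 = K * L * d1 + 1 := by ring
            _ ≤ K * L * d1 + d1 := by omega
            _ = (K * L + 1) * d1 := by ring
        have h4 := (hub d1).trans h3
        calc (convMaxRegions n01 n02 d0 f1 f2 s1 d1 : ℝ)
            ≤ ((((K * L + 1) * d1) ^ m : ℕ) : ℝ) := by exact_mod_cast h4
          _ = ((K * L + 1 : ℕ) : ℝ) ^ m * (d1 : ℝ) ^ m := by
              push_cast
              rw [mul_pow]
  refine ⟨part1, fun hU => ?_⟩
  obtain ⟨c1, c2, hc1, hc2, D, hD⟩ := part1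
  have hcard : (windowUnion n01 n02 d0 f1 f2 s1).card = n01 * n02 * d0 := by
    rw [hU, Finset.card_product, Finset.card_product, Finset.card_range, Finset.card_range,
      Finset.card_range]
    ring
  exact ⟨c1, c2, hc1, hc2, D, fun d1 hd => by rw [← hcard]; exact hD d1 hd⟩

end
end

section
/- Let N(d1) be the one-layer ReLU CNN with input dimension n0⁽¹⁾×n0⁽²⁾×d0, stride 1, filter spatial dimensions 1×1 (filters of dimension 1×1×d0) and d1 filters, where n0⁽¹⁾, n0⁽²⁾, d0 are fixed. Then there exist a constant C > 0 and D such that for all d1 ≥ D, |R_{N(d1)} − (d1^{d0}/d0!)^{n0⁽¹⁾·n0⁽²⁾}| ≤ C·d1^{n0⁽¹⁾·n0⁽²⁾·d0 − 1}. -/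
open Finset

noncomputable section

namespace S9

attribute [local instance] Classical.propDecidable

def realizedSet (m n : ℕ) (g : Fin m → (Fin n → ℝ) →ₗ[ℝ] ℝ) (c : Fin m → ℝ)
    (p : Fin n → ℝ) (V : Submodule ℝ (Fin n → ℝ)) : Finset (Fin m → Bool) :=
  univ.filter (fun σ => ∃ x, x - p ∈ V ∧ ∀ k, if σ k then 0 < g k x + c k else g k x + c k < 0)

lemma pascal_sum (m d : ℕ) :
    ∑ i ∈ range (d+1), (m+1).choose i
      = ∑ i ∈ range (d+1), m.choose i + ∑ i ∈ range d, m.choose i := by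
  rw [Finset.sum_range_succ' (fun i => (m+1).choose i)]
  simp only [Nat.choose_succ_succ, Nat.choose_zero_right]
  rw [Finset.sum_add_distrib]
  have : ∑ i ∈ range (d+1), m.choose i
      = ∑ i ∈ range d, m.choose (i+1) + m.choose 0 :=
    Finset.sum_range_succ' (fun i => m.choose i) d
  simp only [Nat.choose_zero_right, Nat.succ_eq_add_one] at this ⊢
  omega

lemma segment_zero {n : ℕ} (l : (Fin n → ℝ) →ₗ[ℝ] ℝ) (c : ℝ) (x y : Fin n → ℝ)
    (hx : l x + c < 0) (hy : 0 < l y + c) :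
    ∃ s : ℝ, 0 ≤ s ∧ s ≤ 1 ∧ l (x + s • (y - x)) + c = 0 := by
  set a := l x + c with ha
  set b := l y + c with hb
  refine ⟨(-a)/(b-a), div_nonneg (by linarith) (by linarith), ?_, ?_⟩
  · rw [div_le_one (by linarith)]; linarith
  · have h1 : l (x + ((-a)/(b-a)) • (y - x)) + c = a + ((-a)/(b-a)) * (b - a) := by
      simp [map_add, map_smul, map_sub, ha, hb]; ring
    rw [h1, div_mul_cancel₀]; · ring
    · linarith

lemma conv_pos {a b s : ℝ} (ha : 0 < a) (hb : 0 < b) (h0 : 0 ≤ s) (h1 : s ≤ 1) :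
    0 < a + s * (b - a) := by
  rcases le_total a b with h | h
  · have := mul_nonneg h0 (sub_nonneg.mpr h); linarith
  · have := mul_nonneg (sub_nonneg.mpr h1) (sub_nonneg.mpr h); nlinarith

lemma conv_neg {a b s : ℝ} (ha : a < 0) (hb : b < 0) (h0 : 0 ≤ s) (h1 : s ≤ 1) :
    a + s * (b - a) < 0 := by
  have := conv_pos (neg_pos.mpr ha) (neg_pos.mpr hb) h0 h1
  nlinarith

lemma card_realized_le : ∀ (m n : ℕ) (g : Fin m → (Fin n → ℝ) →ₗ[ℝ] ℝ) (c : Fin m → ℝ)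
    (p : Fin n → ℝ) (V : Submodule ℝ (Fin n → ℝ)) (d : ℕ),
    Module.finrank ℝ V ≤ d →
    (realizedSet m n g c p V).card ≤ ∑ i ∈ range (d+1), m.choose i := by
  intro m
  induction m with
  | zero =>
    intro n g c p V d _
    have h1 : (realizedSet 0 n g c p V).card ≤ 1 := by
      refine le_trans (Finset.card_le_card (Finset.filter_subset _ _)) ?_
      simp
    calc (realizedSet 0 n g c p V).card ≤ 1 := h1
      _ ≤ ∑ i ∈ range (d+1), Nat.choose 0 i := by
          rw [Finset.sum_range_succ' (fun i => Nat.choose 0 i)]; simp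
  | succ m ih =>
    intro n g c p V d hV
    set A := realizedSet (m+1) n g c p V with hA
    set g' : Fin m → (Fin n → ℝ) →ₗ[ℝ] ℝ := fun k => g k.castSucc with hg'
    set c' : Fin m → ℝ := fun k => c k.castSucc with hc'
    set D : Finset (Fin m → Bool) :=
      univ.filter (fun τ => Fin.snoc τ true ∈ A ∧ Fin.snoc τ false ∈ A) with hD
    -- step 1 : A.card ≤ (image).card + D.card
    have himg : A.image Fin.init ⊆ realizedSet m n g' c' p V := by
      intro τ hτ
      rcases Finset.mem_image.mp hτ with ⟨σ, hσ, rfl⟩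
      rcases Finset.mem_filter.mp hσ with ⟨-, x, hxV, hsx⟩
      exact Finset.mem_filter.mpr ⟨Finset.mem_univ _, x, hxV, fun k => hsx k.castSucc⟩
    have step1 : A.card ≤ (realizedSet m n g' c' p V).card + D.card := by
      rw [Finset.card_eq_sum_card_image Fin.init A]
      have hfib : ∀ τ ∈ A.image Fin.init,
          (A.filter fun σ => Fin.init σ = τ).card ≤ if τ ∈ D then 2 else 1 := by
        intro τ _
        by_cases hτD : τ ∈ D
        · rw [if_pos hτD]
          have hsub : (A.filter fun σ => Fin.init σ = τ) ⊆
              {Fin.snoc τ true, Fin.snoc τ false} := by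
            intro σ hσ
            rcases Finset.mem_filter.mp hσ with ⟨-, hinit⟩
            have heq : σ = Fin.snoc τ (σ (Fin.last m)) := by
              rw [← hinit, Fin.snoc_init_self]
            have hmem : σ = Fin.snoc τ true ∨ σ = Fin.snoc τ false := by
              rcases Bool.dichotomy (σ (Fin.last m)) with hb | hb
              · right; rw [heq, hb]
              · left; rw [heq, hb]
            rcases hmem with h | h <;> simp [h]
          exact le_trans (Finset.card_le_card hsub) (Finset.card_insert_le _ _ |>.trans (by simp))
        · rw [if_neg hτD]
          refine Finset.card_le_one.mpr ?_
          intro σ₁ h₁ σ₂ h₂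
          rcases Finset.mem_filter.mp h₁ with ⟨hA₁, hi₁⟩
          rcases Finset.mem_filter.mp h₂ with ⟨hA₂, hi₂⟩
          have e₁ : σ₁ = Fin.snoc τ (σ₁ (Fin.last m)) := by rw [← hi₁, Fin.snoc_init_self]
          have e₂ : σ₂ = Fin.snoc τ (σ₂ (Fin.last m)) := by rw [← hi₂, Fin.snoc_init_self]
          by_cases hb : σ₁ (Fin.last m) = σ₂ (Fin.last m)
          · rw [e₁, e₂, hb]
          · exfalso
            apply hτD
            have h1 : Fin.snoc τ (σ₁ (Fin.last m)) ∈ A := by rw [← e₁]; exact hA₁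
            have h2 : Fin.snoc τ (σ₂ (Fin.last m)) ∈ A := by rw [← e₂]; exact hA₂
            refine Finset.mem_filter.mpr ⟨Finset.mem_univ _, ?_, ?_⟩
            · rcases Bool.dichotomy (σ₁ (Fin.last m)) with h | h
              · have h' : σ₂ (Fin.last m) = true := by
                  rcases Bool.dichotomy (σ₂ (Fin.last m)) with h'' | h''
                  · exact absurd (h.trans h''.symm) hb
                  · exact h''
                rw [← h']; exact h2
              · rw [← h]; exact h1
            · rcases Bool.dichotomy (σ₁ (Fin.last m)) with h | h
              · rw [← h]; exact h1
              · have h' : σ₂ (Fin.last m) = false := by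
                  rcases Bool.dichotomy (σ₂ (Fin.last m)) with h'' | h''
                  · exact h''
                  · exact absurd (h.trans h''.symm) hb
                rw [← h']; exact h2
      calc ∑ τ ∈ A.image Fin.init, (A.filter fun σ => Fin.init σ = τ).card
          ≤ ∑ τ ∈ A.image Fin.init, (if τ ∈ D then 2 else 1) := Finset.sum_le_sum hfib
        _ = ∑ τ ∈ A.image Fin.init, (1 + if τ ∈ D then 1 else 0) := by
            apply Finset.sum_congr rfl; intro τ _; by_cases h : τ ∈ D <;> simp [h]
        _ = (A.image Fin.init).card + ((A.image Fin.init).filter (· ∈ D)).card := by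
            rw [Finset.sum_add_distrib, Finset.card_filter]; simp
        _ ≤ (realizedSet m n g' c' p V).card + D.card := by
            refine Nat.add_le_add (Finset.card_le_card himg)
              (Finset.card_le_card (fun τ hτ => (Finset.mem_filter.mp hτ).2))
    have step2 : D.card ≤ ∑ i ∈ range d, m.choose i := by
      rcases Finset.eq_empty_or_nonempty D with hDe | ⟨τ₀, hτ₀⟩
      · simp [hDe]
      · set f : (Fin n → ℝ) →ₗ[ℝ] ℝ := g (Fin.last m) with hf
        set cf : ℝ := c (Fin.last m) with hcf
        have extract : ∀ τ ∈ D, ∃ xT xF : Fin n → ℝ, xT - p ∈ V ∧ xF - p ∈ V ∧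
            0 < f xT + cf ∧ f xF + cf < 0 ∧
            (∀ k : Fin m, if τ k then 0 < g' k xT + c' k else g' k xT + c' k < 0) ∧
            (∀ k : Fin m, if τ k then 0 < g' k xF + c' k else g' k xF + c' k < 0) := by
          intro τ hτ
          rcases Finset.mem_filter.mp hτ with ⟨-, ht, hfalse⟩
          rcases Finset.mem_filter.mp ht with ⟨-, xT, hxTV, hxT⟩
          rcases Finset.mem_filter.mp hfalse with ⟨-, xF, hxFV, hxF⟩
          have hpos : 0 < f xT + cf := by
            have := hxT (Fin.last m); simpa [Fin.snoc_last] using this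
          have hneg : f xF + cf < 0 := by
            have := hxF (Fin.last m); simpa [Fin.snoc_last] using this
          refine ⟨xT, xF, hxTV, hxFV, hpos, hneg, ?_, ?_⟩
          · intro k
            have hT := hxT k.castSucc
            rwa [Fin.snoc_castSucc] at hT
          · intro k
            have hF := hxF k.castSucc
            rwa [Fin.snoc_castSucc] at hF
        have key : ∀ τ ∈ D, ∃ y : Fin n → ℝ, y - p ∈ V ∧ f y + cf = 0 ∧
            (∀ k : Fin m, if τ k then 0 < g' k y + c' k else g' k y + c' k < 0) := by
          intro τ hτ
          obtain ⟨xT, xF, hxTV, hxFV, hpos, hneg, hsT, hsF⟩ := extract τ hτ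
          obtain ⟨s, hs0, hs1, hzero⟩ := segment_zero f cf xF xT hneg hpos
          refine ⟨xF + s • (xT - xF), ?_, hzero, ?_⟩
          · have hrw : xF + s • (xT - xF) - p = (xF - p) + s • ((xT - p) - (xF - p)) := by
              module
            rw [hrw]; exact V.add_mem hxFV (V.smul_mem _ (V.sub_mem hxTV hxFV))
          · intro k
            have hT := hsT k
            have hF := hsF k
            have hval : g' k (xF + s • (xT - xF)) + c' k
                = (g' k xF + c' k) + s * ((g' k xT + c' k) - (g' k xF + c' k)) := by
              simp [map_add, map_smul, map_sub, smul_eq_mul]; ring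
            by_cases hτk : τ k
            · rw [if_pos hτk] at hT hF ⊢
              rw [hval]; exact conv_pos hF hT hs0 hs1
            · rw [if_neg hτk] at hT hF ⊢
              rw [hval]; exact conv_neg hF hT hs0 hs1
        obtain ⟨y₀, hy₀V, hy₀zero, -⟩ := key τ₀ hτ₀
        set V' : Submodule ℝ (Fin n → ℝ) := V ⊓ LinearMap.ker f with hV'
        have hDsub : D ⊆ realizedSet m n g' c' y₀ V' := by
          intro τ hτ
          obtain ⟨y, hyV, hyzero, hsig⟩ := key τ hτ
          refine Finset.mem_filter.mpr ⟨Finset.mem_univ _, y, ?_, hsig⟩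
          refine Submodule.mem_inf.mpr ⟨?_, ?_⟩
          · have hrw : y - y₀ = (y - p) - (y₀ - p) := by abel
            rw [hrw]; exact V.sub_mem hyV hy₀V
          · simp only [LinearMap.mem_ker, map_sub]; linarith
        have hv : ∃ v ∈ V, f v ≠ 0 := by
          obtain ⟨xT, xF, hxTV, hxFV, hpos, hneg, -, -⟩ := extract τ₀ hτ₀
          refine ⟨xT - xF, ?_, ?_⟩
          · have hrw : xT - xF = (xT - p) - (xF - p) := by abel
            rw [hrw]; exact V.sub_mem hxTV hxFV
          · rw [map_sub]; intro h0; linarith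
        obtain ⟨v₀, hv₀V, hv₀f⟩ := hv
        have hlt : V' < V := by
          refine lt_of_le_of_ne inf_le_left (fun hEq => ?_)
          have : v₀ ∈ V' := hEq ▸ hv₀V
          exact hv₀f ((Submodule.mem_inf.mp this).2)
        have hrk : Module.finrank ℝ V' < Module.finrank ℝ V :=
          Submodule.finrank_lt_finrank_of_lt hlt
        obtain ⟨e, rfl⟩ : ∃ e, d = e + 1 := ⟨d - 1, by omega⟩
        calc D.card ≤ (realizedSet m n g' c' y₀ V').card := Finset.card_le_card hDsub
          _ ≤ ∑ i ∈ range (e+1), m.choose i := ih n g' c' y₀ V' e (by omega)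
    calc A.card ≤ (realizedSet m n g' c' p V).card + D.card := step1
      _ ≤ ∑ i ∈ range (d+1), m.choose i + ∑ i ∈ range d, m.choose i :=
          Nat.add_le_add (ih n g' c' p V d hV) step2
      _ = ∑ i ∈ range (d+1), (m+1).choose i := (pascal_sum m d).symm

/-! ### sign regions of a `1×1` arrangement -/

def sgnVal {d1 d0 : ℕ} (W : Fin d1 → Fin d0 → ℝ) (B : Fin d1 → ℝ) (k : Fin d1)
    (v : Fin d0 → ℝ) : ℝ := (∑ c, W k c * v c) + B k

def sgnRegion {d1 d0 : ℕ} (W : Fin d1 → Fin d0 → ℝ) (B : Fin d1 → ℝ) (s : Fin d1 → Bool) :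
    Set (Fin d0 → ℝ) :=
  {v | ∀ k, if s k then 0 < sgnVal W B k v else sgnVal W B k v < 0}

def goodS {d1 d0 : ℕ} (W : Fin d1 → Fin d0 → ℝ) (B : Fin d1 → ℝ) : Finset (Fin d1 → Bool) :=
  univ.filter (fun s => (sgnRegion W B s).Nonempty)

def lmap {d0 : ℕ} (w : Fin d0 → ℝ) : (Fin d0 → ℝ) →ₗ[ℝ] ℝ where
  toFun v := ∑ c, w c * v c
  map_add' x y := by simp [mul_add, Finset.sum_add_distrib]
  map_smul' r x := by simp [smul_eq_mul, Finset.mul_sum, mul_left_comm]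

lemma goodS_card_le {d1 d0 : ℕ} (W : Fin d1 → Fin d0 → ℝ) (B : Fin d1 → ℝ) :
    (goodS W B).card ≤ ∑ i ∈ range (d0+1), d1.choose i := by
  have heq : goodS W B = realizedSet d1 d0 (fun k => lmap (W k)) B 0 ⊤ := by
    unfold goodS realizedSet sgnRegion sgnVal lmap
    ext s
    rw [Finset.mem_filter, Finset.mem_filter]
    simp [Set.Nonempty, Set.mem_setOf_eq]
  rw [heq]
  refine card_realized_le d1 d0 _ B 0 ⊤ d0 ?_
  rw [finrank_top, Module.finrank_fin_fun]

/-! ### the lower-bound construction -/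

def wStar (d1 d0 : ℕ) : Fin d1 → Fin d0 → ℝ := fun k c => ((k:ℕ)+1:ℝ)^((c:ℕ)+1)

def bStar (d1 : ℕ) : Fin d1 → ℝ := fun _ => (-1 : ℝ)

def sigmaOf {d1 : ℕ} (S : Finset (Fin d1)) : Fin d1 → Bool :=
  fun k => decide (Odd ((S.filter (fun j => j ≤ k)).card))

lemma filter_le_card {d1 : ℕ} (S : Finset (Fin d1)) (k : Fin d1) :
    (S.filter (fun j => j ≤ k)).card
      = (S.filter (fun j => j < k)).card + (if k ∈ S then 1 else 0) := by
  have h1 : S.filter (fun j => j ≤ k) = S.filter (fun j => j < k ∨ j = k) := by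
    apply Finset.filter_congr; intro j _; simp [le_iff_lt_or_eq]
  rw [h1, Finset.filter_or, Finset.filter_eq']
  rw [Finset.card_union_of_disjoint]
  · by_cases h : k ∈ S <;> simp [h]
  · refine Finset.disjoint_left.mpr ?_
    intro j hj hj2
    have hlt := (Finset.mem_filter.mp hj).2
    by_cases h : k ∈ S
    · rw [if_pos h, Finset.mem_singleton] at hj2
      rw [hj2] at hlt; exact lt_irrefl _ hlt
    · rw [if_neg h] at hj2; exact absurd hj2 (Finset.notMem_empty j)

lemma sigmaOf_inj {d1 : ℕ} : Function.Injective (fun S : Finset (Fin d1) => sigmaOf S) := by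
  intro S S' h
  by_contra hne
  have hsd : (symmDiff S S').Nonempty := by
    rw [Finset.nonempty_iff_ne_empty]
    intro h0
    exact hne (symmDiff_eq_bot.mp h0)
  set k := hsd.choose with hk
  have hkmem : k ∈ symmDiff S S' := hsd.choose_spec
  -- replace k with a minimal element
  obtain ⟨k, hkmem, hkmin⟩ : ∃ k ∈ symmDiff S S', ∀ j ∈ symmDiff S S', ¬ j < k :=
    by
      obtain ⟨k, hk⟩ := Finset.exists_minimal hsd
      exact ⟨k, hk.1, fun j hj hjk => lt_irrefl k (lt_of_le_of_lt (hk.2 hj hjk.le) hjk)⟩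
  have hflt : S.filter (fun j => j < k) = S'.filter (fun j => j < k) := by
    ext j
    simp only [Finset.mem_filter, and_congr_left_iff]
    intro hj
    have hjn : j ∉ symmDiff S S' := fun hjm => hkmin j hjm hj
    rw [Finset.mem_symmDiff] at hjn
    push_neg at hjn
    exact ⟨fun hjS => hjn.1 hjS, fun hjS' => hjn.2 hjS'⟩
  have hkk : (k ∈ S ∧ k ∉ S') ∨ (k ∈ S' ∧ k ∉ S) := Finset.mem_symmDiff.mp hkmem
  have hval := congrFun h k
  simp only [sigmaOf, decide_eq_decide] at hval
  rw [filter_le_card, filter_le_card, hflt] at hval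
  rcases hkk with ⟨h1, h2⟩ | ⟨h1, h2⟩ <;> rw [if_pos h1, if_neg h2] at hval <;>
    · rcases Nat.even_or_odd ((S'.filter (fun j => j < k)).card) with he | he
      · simp [Nat.odd_add_one, Nat.even_iff, Nat.odd_iff] at hval he ⊢ <;> omega
      · simp [Nat.odd_add_one, Nat.even_iff, Nat.odd_iff] at hval he ⊢ <;> omega

lemma prod_neg_pos {ι : Type*} (T : Finset ι) (f : ι → ℝ) (h : ∀ j ∈ T, f j < 0) :
    0 < (-1:ℝ)^T.card * ∏ j ∈ T, f j := by
  have h1 : ∏ j ∈ T, f j = (-1:ℝ)^T.card * ∏ j ∈ T, (-(f j)) := by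
    calc ∏ j ∈ T, f j = ∏ j ∈ T, (-1) * (-(f j)) := by simp
      _ = (∏ _j ∈ T, (-1:ℝ)) * ∏ j ∈ T, (-(f j)) := Finset.prod_mul_distrib
      _ = (-1:ℝ)^T.card * ∏ j ∈ T, (-(f j)) := by rw [Finset.prod_const]
  rw [h1, ← mul_assoc]
  have h2 : (-1:ℝ)^T.card * (-1:ℝ)^T.card = 1 := by
    rw [← pow_add]; exact Even.neg_one_pow ⟨T.card, rfl⟩
  rw [h2, one_mul]
  exact Finset.prod_pos (fun j hj => neg_pos.mpr (h j hj))

lemma sigmaOf_realized {d1 d0 : ℕ} (S : Finset (Fin d1)) (hS : S.card ≤ d0) :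
    (sgnRegion (wStar d1 d0) (bStar d1) (sigmaOf S)).Nonempty := by
  set q : Polynomial ℝ :=
    1 - ∏ j ∈ S, (1 - Polynomial.C (((j:ℕ):ℝ) + 1/2)⁻¹ * Polynomial.X) with hq
  have hdeg : q.natDegree ≤ d0 := by
    refine le_trans (Polynomial.natDegree_sub_le _ _) ?_
    rw [Polynomial.natDegree_one, max_le_iff]
    refine ⟨Nat.zero_le _, ?_⟩
    refine le_trans (Polynomial.natDegree_prod_le _ _) ?_
    refine le_trans (Finset.sum_le_card_nsmul S _ 1 ?_) (by simpa using hS)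
    intro j _
    refine le_trans (Polynomial.natDegree_sub_le _ _) ?_
    rw [Polynomial.natDegree_one, max_le_iff]
    exact ⟨Nat.zero_le _,
      le_trans (Polynomial.natDegree_C_mul_le _ _) (le_of_eq Polynomial.natDegree_X)⟩
  have hc0 : q.coeff 0 = 0 := by
    rw [Polynomial.coeff_zero_eq_eval_zero, hq]
    simp [Polynomial.eval_prod]
  set x : Fin d0 → ℝ := fun c => q.coeff (c.1 + 1) with hx
  have hval : ∀ k : Fin d1, sgnVal (wStar d1 d0) (bStar d1) k x
      = q.eval (((k:ℕ):ℝ)+1) - 1 := by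
    intro k
    have heval : q.eval (((k:ℕ):ℝ)+1)
        = ∑ i ∈ range (d0+1), q.coeff i * (((k:ℕ):ℝ)+1)^i :=
      Polynomial.eval_eq_sum_range' (lt_of_le_of_lt hdeg (Nat.lt_succ_self d0)) _
    rw [heval, Finset.sum_range_succ' (fun i => q.coeff i * (((k:ℕ):ℝ)+1)^i), hc0]
    unfold sgnVal wStar bStar
    rw [Fin.sum_univ_eq_sum_range
      (fun i => (((k:ℕ):ℝ)+1)^(i+1) * q.coeff (i+1)) d0]
    rw [Finset.sum_congr rfl (fun i _ => mul_comm ((((k:ℕ):ℝ)+1)^(i+1)) (q.coeff (i+1)))]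
    ring
  have hevalprod : ∀ k : Fin d1, q.eval (((k:ℕ):ℝ)+1) - 1
      = - ∏ j ∈ S, (1 - (((k:ℕ):ℝ)+1) * (((j:ℕ):ℝ) + 1/2)⁻¹) := by
    intro k
    rw [hq, Polynomial.eval_sub, Polynomial.eval_one, Polynomial.eval_prod]
    rw [Finset.prod_congr rfl (fun j _ => by
      rw [Polynomial.eval_sub, Polynomial.eval_one, Polynomial.eval_mul,
        Polynomial.eval_C, Polynomial.eval_X, mul_comm])]
    ring
  refine ⟨x, ?_⟩
  intro k
  have hpos2 : 0 < ∏ j ∈ S.filter (fun j => ¬ j ≤ k),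
      (1 - (((k:ℕ):ℝ)+1) * (((j:ℕ):ℝ) + 1/2)⁻¹) := by
    refine Finset.prod_pos ?_
    intro j hj
    have hjk : ¬ j ≤ k := (Finset.mem_filter.mp hj).2
    have hkj : (k:ℕ) < (j:ℕ) := by
      rw [Fin.not_le] at hjk; exact hjk
    have hj2 : (0:ℝ) < ((j:ℕ):ℝ) + 1/2 := by positivity
    rw [sub_pos, mul_inv_lt_iff₀ hj2, one_mul]
    have : ((k:ℕ):ℝ) + 1 ≤ ((j:ℕ):ℝ) := by exact_mod_cast hkj
    linarith
  have hneg1 : ∀ j ∈ S.filter (fun j => j ≤ k),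
      (1 - (((k:ℕ):ℝ)+1) * (((j:ℕ):ℝ) + 1/2)⁻¹) < 0 := by
    intro j hj
    have hjk : j ≤ k := (Finset.mem_filter.mp hj).2
    have hjk' : (j:ℕ) ≤ (k:ℕ) := hjk
    have hj2 : (0:ℝ) < ((j:ℕ):ℝ) + 1/2 := by positivity
    rw [sub_neg, lt_mul_inv_iff₀ hj2, one_mul]
    have : ((j:ℕ):ℝ) ≤ ((k:ℕ):ℝ) := by exact_mod_cast hjk'
    linarith
  have hsplit : (∏ j ∈ S, (1 - (((k:ℕ):ℝ)+1) * (((j:ℕ):ℝ) + 1/2)⁻¹))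
      = (∏ j ∈ S.filter (fun j => j ≤ k), (1 - (((k:ℕ):ℝ)+1) * (((j:ℕ):ℝ) + 1/2)⁻¹))
        * ∏ j ∈ S.filter (fun j => ¬ j ≤ k), (1 - (((k:ℕ):ℝ)+1) * (((j:ℕ):ℝ) + 1/2)⁻¹) :=
    (Finset.prod_filter_mul_prod_filter_not S _ _).symm
  have hp := prod_neg_pos _ _ hneg1
  have hv : sgnVal (wStar d1 d0) (bStar d1) k x
      = - ((∏ j ∈ S.filter (fun j => j ≤ k), (1 - (((k:ℕ):ℝ)+1) * (((j:ℕ):ℝ) + 1/2)⁻¹))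
        * ∏ j ∈ S.filter (fun j => ¬ j ≤ k), (1 - (((k:ℕ):ℝ)+1) * (((j:ℕ):ℝ) + 1/2)⁻¹)) := by
    rw [hval k, hevalprod k, hsplit]
  by_cases hodd : Odd ((S.filter (fun j => j ≤ k)).card)
  · have hsig : sigmaOf S k = true := by simp [sigmaOf, hodd]
    have hm1 : ((-1:ℝ))^((S.filter (fun j => j ≤ k)).card) = -1 := Odd.neg_one_pow hodd
    rw [hm1] at hp
    have hP1 : (∏ j ∈ S.filter (fun j => j ≤ k),
        (1 - (((k:ℕ):ℝ)+1) * (((j:ℕ):ℝ) + 1/2)⁻¹)) < 0 := by linarith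
    show if sigmaOf S k then _ else _
    rw [hsig, if_pos rfl]
    have := mul_neg_of_neg_of_pos hP1 hpos2
    rw [hv]; linarith
  · have hsig : sigmaOf S k = false := by simp [sigmaOf, hodd]
    have hm1 : ((-1:ℝ))^((S.filter (fun j => j ≤ k)).card) = 1 :=
      Even.neg_one_pow (Nat.not_odd_iff_even.mp hodd)
    rw [hm1, one_mul] at hp
    show if sigmaOf S k then _ else _
    rw [hsig]
    simp only [Bool.false_eq_true, if_false]
    have := mul_pos hp hpos2
    rw [hv]; linarith

lemma goodS_card_ge (d1 d0 : ℕ) :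
    ∑ i ∈ range (d0+1), d1.choose i ≤ (goodS (wStar d1 d0) (bStar d1)).card := by
  set T : Finset (Finset (Fin d1)) := univ.filter (fun S => S.card ≤ d0) with hT
  have hTeq : T = (range (d0+1)).biUnion (fun i => Finset.powersetCard i univ) := by
    ext S
    simp only [hT, Finset.mem_filter, Finset.mem_univ, true_and, Finset.mem_biUnion,
      Finset.mem_range, Finset.mem_powersetCard, Nat.lt_succ_iff]
    constructor
    · intro h; exact ⟨S.card, h, Finset.subset_univ S, rfl⟩
    · rintro ⟨i, hi, -, rfl⟩; exact hi
  have hTcard : T.card = ∑ i ∈ range (d0+1), d1.choose i := by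
    rw [hTeq, Finset.card_biUnion]
    · refine Finset.sum_congr rfl (fun i _ => ?_)
      rw [Finset.card_powersetCard, Finset.card_univ, Fintype.card_fin]
    · intro i hi j hj hij
      refine Finset.disjoint_left.mpr ?_
      intro S hSi hSj
      have h1 := (Finset.mem_powersetCard.mp hSi).2
      have h2 := (Finset.mem_powersetCard.mp hSj).2
      exact hij (h1.symm.trans h2)
  have himg : T.image sigmaOf ⊆ goodS (wStar d1 d0) (bStar d1) := by
    intro s hs
    rcases Finset.mem_image.mp hs with ⟨S, hSmem, rfl⟩
    exact Finset.mem_filter.mpr ⟨Finset.mem_univ _,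
      sigmaOf_realized S (Finset.mem_filter.mp hSmem).2⟩
  calc ∑ i ∈ range (d0+1), d1.choose i = T.card := hTcard.symm
    _ = (T.image sigmaOf).card := (Finset.card_image_of_injective T sigmaOf_inj).symm
    _ ≤ _ := Finset.card_le_card himg

/-! ### product structure of `1×1` CNN regions -/

lemma convZ_eq {n01 n02 d0 d1 : ℕ}
    (W : Fin d1 → Fin 1 → Fin 1 → Fin d0 → ℝ) (B : Fin d1 → ℝ)
    (X : Fin n01 → Fin n02 → Fin d0 → ℝ) {i j : ℕ} (hi : i < n01) (hj : j < n02)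
    (k : Fin d1) :
    convZ 1 W B (inputExt X) i j k
      = sgnVal (fun k c => W k 0 0 c) B k (X ⟨i,hi⟩ ⟨j,hj⟩) := by
  unfold convZ sgnVal
  congr 1
  rw [Fin.sum_univ_one, Fin.sum_univ_one]
  refine Finset.sum_congr rfl (fun c _ => ?_)
  congr 1
  show inputExt X ((0:Fin 1).1 + i*1) ((0:Fin 1).1 + j*1) c.1 = X ⟨i,hi⟩ ⟨j,hj⟩ c
  have h1 : (0:Fin 1).1 + i*1 = i := by simp
  have h2 : (0:Fin 1).1 + j*1 = j := by simp
  rw [h1, h2]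
  unfold inputExt
  rw [dif_pos ⟨hi, hj, c.isLt⟩]

lemma convRegion_eq {n01 n02 d0 d1 : ℕ} (h01 : 0 < n01) (h02 : 0 < n02)
    (W : Fin d1 → Fin 1 → Fin 1 → Fin d0 → ℝ) (B : Fin d1 → ℝ) (P : ℕ → ℕ → ℕ → Bool) :
    convRegion n01 n02 d0 1 1 1 d1 W B P
      = {X | ∀ (i : Fin n01) (j : Fin n02),
          X i j ∈ sgnRegion (fun k c => W k 0 0 c) B (fun k : Fin d1 => P i.1 j.1 k.1)} := by
  have hn1 : (n01 - 1) / 1 + 1 = n01 := by omega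
  have hn2 : (n02 - 1) / 1 + 1 = n02 := by omega
  ext X
  simp only [convRegion, Set.mem_setOf_eq, hn1, hn2]
  constructor
  · intro h i j k
    have hh := h i.1 j.1 i.isLt j.isLt k
    rw [convZ_eq W B X i.isLt j.isLt k] at hh
    simpa using hh
  · intro h i j hi hj k
    have hh := h ⟨i, hi⟩ ⟨j, hj⟩ k
    rw [convZ_eq W B X hi hj k]
    exact hh

lemma convNumRegions_eq {n01 n02 d0 d1 : ℕ} (h01 : 0 < n01) (h02 : 0 < n02)
    (W : Fin d1 → Fin 1 → Fin 1 → Fin d0 → ℝ) (B : Fin d1 → ℝ) :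
    convNumRegions n01 n02 d0 1 1 1 d1 W B
      = (goodS (fun k c => W k 0 0 c) B).card ^ (n01 * n02) := by
  set W' : Fin d1 → Fin d0 → ℝ := fun k c => W k 0 0 c with hW'
  set Q : Set (Fin n01 → Fin n02 → (Fin d1 → Bool)) :=
    {q | ∀ i j, q i j ∈ goodS W' B} with hQ
  set Φ : (Fin n01 → Fin n02 → (Fin d1 → Bool)) → Set (Fin n01 → Fin n02 → Fin d0 → ℝ) :=
    fun q => {X | ∀ i j, X i j ∈ sgnRegion W' B (q i j)} with hΦ
  have key : {R : Set (Fin n01 → Fin n02 → Fin d0 → ℝ) |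
      (∃ P, R = convRegion n01 n02 d0 1 1 1 d1 W B P) ∧ R.Nonempty} = Φ '' Q := by
    ext R
    constructor
    · rintro ⟨⟨P, rfl⟩, hne⟩
      refine ⟨fun i j => fun k : Fin d1 => P i.1 j.1 k.1, ?_, ?_⟩
      · intro i j
        obtain ⟨X, hX⟩ := hne
        rw [convRegion_eq h01 h02 W B P] at hX
        exact Finset.mem_filter.mpr ⟨Finset.mem_univ _, ⟨X i j, hX i j⟩⟩
      · rw [convRegion_eq h01 h02 W B P]
    · rintro ⟨q, hq, rfl⟩
      constructor
      · refine ⟨fun i j k => if h : i < n01 ∧ j < n02 ∧ k < d1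
            then q ⟨i,h.1⟩ ⟨j,h.2.1⟩ ⟨k,h.2.2⟩ else true, ?_⟩
        rw [convRegion_eq h01 h02 W B _]
        have : ∀ (i : Fin n01) (j : Fin n02),
            (fun k : Fin d1 => (if h : i.1 < n01 ∧ j.1 < n02 ∧ k.1 < d1
              then q ⟨i.1,h.1⟩ ⟨j.1,h.2.1⟩ ⟨k.1,h.2.2⟩ else true)) = q i j := by
          intro i j
          funext k
          rw [dif_pos ⟨i.isLt, j.isLt, k.isLt⟩]
        simp only [this]
        rfl
      · have hne : ∀ i j, (sgnRegion W' B (q i j)).Nonempty :=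
          fun i j => (Finset.mem_filter.mp (hq i j)).2
        choose w hw using hne
        exact ⟨fun i j => w i j, fun i j => hw i j⟩
  have hinj : Set.InjOn Φ Q := by
    intro q hq q' hq' hEq
    have hne : ∀ i j, (sgnRegion W' B (q i j)).Nonempty :=
      fun i j => (Finset.mem_filter.mp (hq i j)).2
    choose w hw using hne
    have hX : (fun i j => w i j) ∈ Φ q := fun i j => hw i j
    have hX' : (fun i j => w i j) ∈ Φ q' := hEq ▸ hX
    funext i j
    by_contra hne2
    obtain ⟨k, hk⟩ : ∃ k, q i j k ≠ q' i j k := by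
      by_contra hall; push_neg at hall; exact hne2 (funext hall)
    have h1 := hX i j k
    have h2 := hX' i j k
    rcases Bool.dichotomy (q i j k) with hb | hb <;>
      rcases Bool.dichotomy (q' i j k) with hb' | hb'
    · exact hk (hb.trans hb'.symm)
    · rw [hb] at h1; rw [hb'] at h2
      simp only [Bool.false_eq_true, if_false, if_true] at h1 h2
      linarith
    · rw [hb] at h1; rw [hb'] at h2
      simp only [Bool.false_eq_true, if_false, if_true] at h1 h2
      linarith
    · exact hk (hb.trans hb'.symm)
  rw [convNumRegions, key, Set.ncard_image_of_injOn hinj]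
  have e : Q ≃ (Fin n01 → Fin n02 → {s : Fin d1 → Bool // s ∈ goodS W' B}) :=
    { toFun := fun q i j => ⟨q.1 i j, q.2 i j⟩
      invFun := fun f => ⟨fun i j => (f i j).1, fun i j => (f i j).2⟩
      left_inv := fun q => rfl
      right_inv := fun f => rfl }
  calc Q.ncard = Nat.card Q := (Nat.card_coe_set_eq Q).symm
    _ = Nat.card (Fin n01 → Fin n02 → {s : Fin d1 → Bool // s ∈ goodS W' B}) :=
        Nat.card_congr e
    _ = (goodS W' B).card ^ (n01 * n02) := by
        rw [Nat.card_fun, Nat.card_fun]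
        rw [Nat.card_eq_fintype_card (α := {s : Fin d1 → Bool // s ∈ goodS W' B}),
          Fintype.card_coe]
        rw [Nat.card_eq_fintype_card (α := Fin n01), Fintype.card_fin,
          Nat.card_eq_fintype_card (α := Fin n02), Fintype.card_fin]
        rw [← pow_mul, mul_comm n02 n01]

lemma convMaxRegions_eq {n01 n02 d0 : ℕ} (h01 : 0 < n01) (h02 : 0 < n02) (d1 : ℕ) :
    convMaxRegions n01 n02 d0 1 1 1 d1
      = (∑ i ∈ range (d0+1), d1.choose i) ^ (n01 * n02) := by
  have hbest : (goodS (wStar d1 d0) (bStar d1)).card = ∑ i ∈ range (d0+1), d1.choose i :=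
    le_antisymm (goodS_card_le _ _) (goodS_card_ge d1 d0)
  refine IsGreatest.csSup_eq ⟨?_, ?_⟩
  · refine ⟨fun k _ _ c => wStar d1 d0 k c, bStar d1, ?_⟩
    rw [convNumRegions_eq h01 h02, hbest]
  · rintro m ⟨W, B, rfl⟩
    rw [convNumRegions_eq h01 h02]
    exact Nat.pow_le_pow_left (goodS_card_le _ _) _

/-! ### asymptotics -/

lemma abs_pow_sub_pow_le (x y M : ℝ) (hM : 0 ≤ M) (hx : |x| ≤ M) (hy : |y| ≤ M) (m : ℕ) :
    |x^(m+1) - y^(m+1)| ≤ (m+1) * M^m * |x - y| := by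
  induction m with
  | zero => simp
  | succ m ih =>
    have h1 : x^(m+1+1) - y^(m+1+1) = x*(x^(m+1) - y^(m+1)) + (x - y)*y^(m+1) := by ring
    have h2 : |x^(m+1+1) - y^(m+1+1)| ≤ |x| * |x^(m+1) - y^(m+1)| + |x - y| * |y|^(m+1) := by
      rw [h1]
      refine le_trans (abs_add_le _ _) ?_
      rw [abs_mul, abs_mul, abs_pow]
    refine le_trans h2 ?_
    have hyM : |y|^(m+1) ≤ M^(m+1) := pow_le_pow_left₀ (abs_nonneg y) hy (m+1)
    have t1 : |x| * |x^(m+1) - y^(m+1)| ≤ M * (((m:ℝ)+1) * M^m * |x-y|) :=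
      mul_le_mul hx ih (abs_nonneg _) hM
    have t2 : |x - y| * |y|^(m+1) ≤ |x-y| * M^(m+1) :=
      mul_le_mul_of_nonneg_left hyM (abs_nonneg _)
    calc |x| * |x^(m+1) - y^(m+1)| + |x - y| * |y|^(m+1)
        ≤ M * (((m:ℝ)+1) * M^m * |x-y|) + |x-y| * M^(m+1) := add_le_add t1 t2
      _ = ((m:ℝ)+1+1) * M^(m+1) * |x - y| := by ring
      _ = (↑(m+1)+1) * M^(m+1) * |x - y| := by push_cast; ring

lemma abs_A_sub_a_le (d0 d1 : ℕ) (hd0 : 0 < d0) (hd1 : d0 + 1 ≤ d1) :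
    |((∑ i ∈ range (d0+1), d1.choose i : ℕ) : ℝ) - (d1:ℝ)^d0 / (d0.factorial : ℝ)|
      ≤ ((d0:ℝ) + (d0:ℝ)^2) * (d1:ℝ)^(d0-1) := by
  set A : ℝ := ((∑ i ∈ range (d0+1), d1.choose i : ℕ) : ℝ) with hA
  set a : ℝ := (d1:ℝ)^d0 / (d0.factorial : ℝ) with ha
  have hd1R : (1:ℝ) ≤ (d1:ℝ) := by exact_mod_cast Nat.one_le_iff_ne_zero.mpr (by omega)
  have hd0d1 : (d0:ℝ) ≤ (d1:ℝ) := by exact_mod_cast (by omega : d0 ≤ d1)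
  have hpow_nonneg : (0:ℝ) ≤ (d1:ℝ)^(d0-1) := by positivity
  -- upper bound on A
  have hAsplit : A = (∑ i ∈ range d0, (d1.choose i : ℝ)) + (d1.choose d0 : ℝ) := by
    rw [hA]
    push_cast
    rw [Finset.sum_range_succ]
  have hchoose_le : (d1.choose d0 : ℝ) ≤ a := by
    rw [ha]; exact Nat.choose_le_pow_div d0 d1
  have hsum_le : (∑ i ∈ range d0, (d1.choose i : ℝ)) ≤ (d0:ℝ) * (d1:ℝ)^(d0-1) := by
    have hterm : ∀ i ∈ range d0, (d1.choose i : ℝ) ≤ (d1:ℝ)^(d0-1) := by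
      intro i hi
      have h1 : (d1.choose i : ℝ) ≤ (d1:ℝ)^i := by
        have := Nat.choose_le_pow d1 i
        exact_mod_cast this
      refine le_trans h1 (pow_le_pow_right₀ hd1R ?_)
      have := Finset.mem_range.mp hi
      omega
    calc (∑ i ∈ range d0, (d1.choose i : ℝ)) ≤ ∑ _i ∈ range d0, (d1:ℝ)^(d0-1) :=
          Finset.sum_le_sum hterm
      _ = (d0:ℝ) * (d1:ℝ)^(d0-1) := by rw [Finset.sum_const, Finset.card_range,
          nsmul_eq_mul]
  have hupper : A - a ≤ (d0:ℝ) * (d1:ℝ)^(d0-1) := by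
    rw [hAsplit]; linarith
  -- lower bound on A
  have hAge : (d1.choose d0 : ℝ) ≤ A := by
    rw [hA]
    have : d1.choose d0 ≤ ∑ i ∈ range (d0+1), d1.choose i :=
      Finset.single_le_sum (fun i _ => Nat.zero_le _) (Finset.self_mem_range_succ d0)
    exact_mod_cast this
  obtain ⟨e, he⟩ : ∃ e, d0 = e + 1 := ⟨d0 - 1, by omega⟩
  have hdiff : (d1:ℝ)^d0 - ((d1:ℝ) - (d0:ℝ))^d0 ≤ (d0:ℝ)^2 * (d1:ℝ)^(d0-1) := by
    have hy : |(d1:ℝ) - (d0:ℝ)| ≤ (d1:ℝ) := by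
      rw [abs_of_nonneg (by linarith)]
      have : (0:ℝ) ≤ (d0:ℝ) := Nat.cast_nonneg _
      linarith
    have hx : |(d1:ℝ)| ≤ (d1:ℝ) := by rw [abs_of_nonneg (by linarith)]
    have := abs_pow_sub_pow_le (d1:ℝ) ((d1:ℝ) - (d0:ℝ)) (d1:ℝ) (by linarith) hx hy e
    rw [← he] at this
    have habs : (d1:ℝ)^d0 - ((d1:ℝ) - (d0:ℝ))^d0
        ≤ |(d1:ℝ)^d0 - ((d1:ℝ) - (d0:ℝ))^d0| := le_abs_self _
    have hsimp : |(d1:ℝ) - ((d1:ℝ) - (d0:ℝ))| = (d0:ℝ) := by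
      rw [show (d1:ℝ) - ((d1:ℝ) - (d0:ℝ)) = (d0:ℝ) by ring,
        abs_of_nonneg (Nat.cast_nonneg _)]
    rw [hsimp] at this
    have hee : (e:ℝ) + 1 = (d0:ℝ) := by rw [he]; push_cast; ring
    have hde : d0 - 1 = e := by omega
    rw [hee] at this
    calc (d1:ℝ)^d0 - ((d1:ℝ) - (d0:ℝ))^d0 ≤ (d0:ℝ) * (d1:ℝ)^e * (d0:ℝ) := by
          refine le_trans habs ?_
          refine le_trans ?_ this
          exact le_of_eq rfl
      _ = (d0:ℝ)^2 * (d1:ℝ)^(d0-1) := by rw [hde]; ring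
  have hfact1 : (1:ℝ) ≤ (d0.factorial : ℝ) := by
    exact_mod_cast Nat.one_le_iff_ne_zero.mpr d0.factorial_pos.ne'
  have hlow2 : ((d1:ℝ) - (d0:ℝ))^d0 / (d0.factorial : ℝ) ≤ (d1.choose d0 : ℝ) := by
    have hple := Nat.pow_le_choose d0 d1 (α := ℝ)
    have hcast : (((d1 + 1 - d0 : ℕ)):ℝ) = (d1:ℝ) + 1 - (d0:ℝ) := by
      rw [Nat.cast_sub (by omega)]; push_cast; ring
    have hbase : (d1:ℝ) - (d0:ℝ) ≤ ((d1 + 1 - d0 : ℕ) : ℝ) := by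
      rw [hcast]; linarith
    have hbase0 : (0:ℝ) ≤ (d1:ℝ) - (d0:ℝ) := by linarith
    have hpw : ((d1:ℝ) - (d0:ℝ))^d0 ≤ ((d1 + 1 - d0 : ℕ) : ℝ)^d0 :=
      pow_le_pow_left₀ hbase0 hbase d0
    calc ((d1:ℝ) - (d0:ℝ))^d0 / (d0.factorial : ℝ)
        ≤ ((d1 + 1 - d0 : ℕ) : ℝ)^d0 / (d0.factorial : ℝ) := by gcongr
      _ ≤ (d1.choose d0 : ℝ) := by
          refine le_trans (le_of_eq ?_) hple
          push_cast
          ring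
  have hlower : a - A ≤ (d0:ℝ)^2 * (d1:ℝ)^(d0-1) := by
    have h3 : a - (d1.choose d0 : ℝ)
        ≤ ((d1:ℝ)^d0 - ((d1:ℝ) - (d0:ℝ))^d0) / (d0.factorial : ℝ) := by
      rw [ha, sub_div]
      have h5 : ((d1:ℝ) - (d0:ℝ))^d0 / (d0.factorial : ℝ) ≤ (d1.choose d0 : ℝ) := hlow2
      linarith
    have h4 : ((d1:ℝ)^d0 - ((d1:ℝ) - (d0:ℝ))^d0) / (d0.factorial : ℝ)
        ≤ (d1:ℝ)^d0 - ((d1:ℝ) - (d0:ℝ))^d0 := by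
      refine div_le_self ?_ hfact1
      have hbase0 : (0:ℝ) ≤ (d1:ℝ) - (d0:ℝ) := by linarith
      have : ((d1:ℝ) - (d0:ℝ))^d0 ≤ (d1:ℝ)^d0 :=
        pow_le_pow_left₀ hbase0 (by linarith) d0
      linarith
    linarith
  have hsq : (0:ℝ) ≤ (d0:ℝ)^2 * (d1:ℝ)^(d0-1) := by positivity
  have hl : (0:ℝ) ≤ (d0:ℝ) * (d1:ℝ)^(d0-1) := by positivity
  rw [abs_le]
  constructor
  · have : -(((d0:ℝ) + (d0:ℝ)^2) * (d1:ℝ)^(d0-1)) ≤ -((d0:ℝ)^2 * (d1:ℝ)^(d0-1)) := by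
      nlinarith
    nlinarith
  · nlinarith

theorem statement9_aux (n01 n02 d0 : ℕ) (h01 : 0 < n01) (h02 : 0 < n02) (hd0 : 0 < d0) :
    ∃ C : ℝ, 0 < C ∧ ∃ D : ℕ, ∀ d1 ≥ D,
      |(convMaxRegions n01 n02 d0 1 1 1 d1 : ℝ)
          - ((d1 : ℝ) ^ d0 / (Nat.factorial d0 : ℝ)) ^ (n01 * n02)|
        ≤ C * (d1 : ℝ) ^ (n01 * n02 * d0 - 1) := by
  obtain ⟨e, he⟩ : ∃ e, n01 * n02 = e + 1 := ⟨n01 * n02 - 1, by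
    have := Nat.mul_pos h01 h02; omega⟩
  set C : ℝ := ((e:ℝ)+1) * ((d0:ℝ)+1)^e * ((d0:ℝ) + (d0:ℝ)^2) with hC
  have hd0R : (1:ℝ) ≤ (d0:ℝ) := by exact_mod_cast hd0
  have hCpos : 0 < C := by
    rw [hC]
    have h1 : (0:ℝ) < (e:ℝ)+1 := by positivity
    have h2 : (0:ℝ) < ((d0:ℝ)+1)^e := by positivity
    have h3 : (0:ℝ) < (d0:ℝ) + (d0:ℝ)^2 := by nlinarith
    positivity
  refine ⟨C, hCpos, d0 + 1, ?_⟩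
  intro d1 hd1
  rw [convMaxRegions_eq h01 h02 d1]
  set A : ℝ := ((∑ i ∈ range (d0+1), d1.choose i : ℕ) : ℝ) with hA
  set a : ℝ := (d1:ℝ)^d0 / (d0.factorial : ℝ) with ha
  rw [Nat.cast_pow]
  have hd1R : (1:ℝ) ≤ (d1:ℝ) := by exact_mod_cast (by omega : 1 ≤ d1)
  have hdiff : |A - a| ≤ ((d0:ℝ) + (d0:ℝ)^2) * (d1:ℝ)^(d0-1) :=
    abs_A_sub_a_le d0 d1 hd0 hd1
  -- bounds |A| ≤ M, |a| ≤ M with M = (d0+1) * d1^d0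
  set M : ℝ := ((d0:ℝ)+1) * (d1:ℝ)^d0 with hM
  have hMpos : (0:ℝ) ≤ M := by positivity
  have hAM : |A| ≤ M := by
    rw [abs_of_nonneg (by rw [hA]; positivity)]
    rw [hA, hM]
    push_cast
    have hterm : ∀ i ∈ range (d0+1), (d1.choose i : ℝ) ≤ (d1:ℝ)^d0 := by
      intro i hi
      have h1 : (d1.choose i : ℝ) ≤ (d1:ℝ)^i := by
        exact_mod_cast Nat.choose_le_pow d1 i
      refine le_trans h1 (pow_le_pow_right₀ hd1R ?_)
      exact Nat.lt_succ_iff.mp (Finset.mem_range.mp hi)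
    calc (∑ i ∈ range (d0+1), (d1.choose i : ℝ)) ≤ ∑ _i ∈ range (d0+1), (d1:ℝ)^d0 :=
          Finset.sum_le_sum hterm
      _ = ((d0:ℝ)+1) * (d1:ℝ)^d0 := by
          rw [Finset.sum_const, Finset.card_range, nsmul_eq_mul]; push_cast; ring
  have haM : |a| ≤ M := by
    have hfact1 : (1:ℝ) ≤ (d0.factorial : ℝ) := by
      exact_mod_cast Nat.one_le_iff_ne_zero.mpr d0.factorial_pos.ne'
    have ha0 : (0:ℝ) ≤ a := by rw [ha]; positivity
    rw [abs_of_nonneg ha0, ha, hM]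
    have h1 : (d1:ℝ)^d0 / (d0.factorial : ℝ) ≤ (d1:ℝ)^d0 :=
      div_le_self (by positivity) hfact1
    have h2 : (d1:ℝ)^d0 ≤ ((d0:ℝ)+1) * (d1:ℝ)^d0 := by nlinarith [pow_nonneg (by linarith : (0:ℝ) ≤ (d1:ℝ)) d0]
    linarith
  have hmain := abs_pow_sub_pow_le A a M hMpos hAM haM e
  rw [he]
  refine le_trans hmain ?_
  have hstep : ((e:ℝ)+1) * M^e * |A - a|
      ≤ ((e:ℝ)+1) * M^e * (((d0:ℝ) + (d0:ℝ)^2) * (d1:ℝ)^(d0-1)) := by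
    refine mul_le_mul_of_nonneg_left hdiff ?_
    positivity
  refine le_trans hstep (le_of_eq ?_)
  have hMe : M^e = ((d0:ℝ)+1)^e * (d1:ℝ)^(d0*e) := by
    rw [hM, mul_pow, ← pow_mul]
  have hexp : d0*e + (d0-1) = (e+1)*d0 - 1 := by
    obtain ⟨f, rfl⟩ : ∃ f, d0 = f+1 := ⟨d0-1, by omega⟩
    have hkey : (e+1)*(f+1) = e*f+e+f+1 := by ring
    have hkey2 : (f+1)*e = e*f + e := by ring
    omega
  have hpows : (d1:ℝ)^(d0*e) * (d1:ℝ)^(d0-1) = (d1:ℝ)^((e+1)*d0 - 1) := by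
    rw [← pow_add, hexp]
  rw [hMe, hC, ← hpows]
  ring

end S9

/-- For the one-layer ReLU CNN with stride `1` and `1×1×d0` filters,
`R_{N(d1)} = (d1^{d0}/d0!)^{n0⁽¹⁾·n0⁽²⁾} + O(d1^{n0⁽¹⁾·n0⁽²⁾·d0 − 1})` as `d1 → ∞`. -/
theorem statement_9 (n01 n02 d0 : ℕ) (h01 : 0 < n01) (h02 : 0 < n02) (hd0 : 0 < d0) :
    ∃ C : ℝ, 0 < C ∧ ∃ D : ℕ, ∀ d1 ≥ D,
      |(convMaxRegions n01 n02 d0 1 1 1 d1 : ℝ)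
          - ((d1 : ℝ) ^ d0 / (Nat.factorial d0 : ℝ)) ^ (n01 * n02)|
        ≤ C * (d1 : ℝ) ^ (n01 * n02 * d0 - 1) :=
  S9.statement9_aux n01 n02 d0 h01 h02 hd0

end
end

section
/- Let g1 : ℝ^{n0⁽¹⁾×n0⁽²⁾×d0} → ℝ^{n1⁽¹⁾×n1⁽²⁾×d1} and g2 : ℝ^{n1⁽¹⁾×n1⁽²⁾×d1} → ℝ^{n2⁽¹⁾×n2⁽²⁾×d2} be affine convolution maps with filter dimensions f1⁽¹⁾×f1⁽²⁾×d0 and f2⁽¹⁾×f2⁽²⁾×d1, strides s1 and s2, and arbitrary weights and biases. Then there exist weights and biases for d2 filters of dimension (f1⁽¹⁾+(f2⁽¹⁾−1)s1) × (f1⁽²⁾+(f2⁽²⁾−1)s1) × d0 with stride s1·s2 whose corresponding affine convolution map g : ℝ^{n0⁽¹⁾×n0⁽²⁾×d0} → ℝ^{n2⁽¹⁾×n2⁽²⁾×d2} satisfies g = g2 ∘ g1. In particular, if f1⁽¹⁾ = f1⁽²⁾ = s1 = 1, the composed map is a convolution with filter dimension f2⁽¹⁾×f2⁽²⁾×d0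 and stride s2. -/
open Finset

noncomputable section

/-- The affine convolution map given by filters of spatial dimension `f1 × f2`, input depth
`din`, stride `s`, weights `W` and biases `B` (no activation function, 0-based indices):
`(g X)_{i,j,k} = ∑_{a<f1} ∑_{b<f2} ∑_{c<din} W k a b c · X_{a+i·s, b+j·s, c} + B k`. -/
def convMapN (f1 f2 din s : ℕ) (W : ℕ → ℕ → ℕ → ℕ → ℝ) (B : ℕ → ℝ)
    (x : ℕ → ℕ → ℕ → ℝ) : ℕ → ℕ → ℕ → ℝ :=
  fun i j k =>
    (∑ a ∈ Finset.range f1, ∑ b ∈ Finset.range f2, ∑ c ∈ Finset.range din,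
      W k a b c * x (a + i * s) (b + j * s) c) + B k

lemma collapse1 {β : Type*} (F : ℕ) (s : Finset β) (v : β → ℕ) (hv : ∀ p ∈ s, v p < F)
    (g : ℕ → β → ℝ) :
    ∑ a ∈ Finset.range F, ∑ p ∈ s, (if a = v p then g a p else 0)
      = ∑ p ∈ s, g (v p) p := by
  rw [Finset.sum_comm]
  refine Finset.sum_congr rfl fun p hp => ?_
  rw [Finset.sum_ite_eq' (Finset.range F) (v p)]
  simp [hv p hp]

lemma sum_ite_const {β : Type*} (s : Finset β) (P : Prop) [Decidable P] (f : β → ℝ) :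
    ∑ x ∈ s, (if P then f x else 0) = if P then ∑ x ∈ s, f x else 0 := by
  split_ifs <;> simp

lemma reorder5 {β γ : Type*} (A B C : Finset ℕ) (T : Finset β) (U : Finset γ)
    (F : ℕ → ℕ → ℕ → β → γ → ℝ) :
    (∑ a ∈ A, ∑ b ∈ B, ∑ c ∈ C, ∑ t ∈ T, ∑ u ∈ U, F a b c t u)
      = ∑ a ∈ A, ∑ t ∈ T, ∑ b ∈ B, ∑ u ∈ U, ∑ c ∈ C, F a b c t u := by
  refine Finset.sum_congr rfl fun a _ => ?_
  refine ((Finset.sum_congr rfl fun b _ => Finset.sum_comm)).trans ?_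
  refine ((Finset.sum_congr rfl fun b _ => Finset.sum_congr rfl fun t _ => Finset.sum_comm)).trans ?_
  exact Finset.sum_comm

lemma reorder6 (A B C D E G : Finset ℕ) (F : ℕ → ℕ → ℕ → ℕ → ℕ → ℕ → ℝ) :
    (∑ p ∈ A, ∑ a1 ∈ B, ∑ q ∈ C, ∑ b1 ∈ D, ∑ c ∈ E, ∑ c1 ∈ G, F p a1 q b1 c c1)
      = ∑ p ∈ A, ∑ q ∈ C, ∑ c1 ∈ G, ∑ a1 ∈ B, ∑ b1 ∈ D, ∑ c ∈ E, F p a1 q b1 c c1 := by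
  refine Finset.sum_congr rfl fun p _ => ?_
  refine Finset.sum_comm.trans ?_
  refine Finset.sum_congr rfl fun q _ => ?_
  refine ((Finset.sum_congr rfl fun a1 _ => Finset.sum_congr rfl fun b1 _ => Finset.sum_comm)).trans ?_
  refine ((Finset.sum_congr rfl fun a1 _ => Finset.sum_comm)).trans ?_
  exact Finset.sum_comm

set_option maxHeartbeats 1000000 in
/-- (Theorem 4.) The composition of two affine convolution maps, with filter
dimensions `f11×f12×d0` and `f21×f22×d1` and strides `s1` and `s2`, can be realized by a single
affine convolution map with `d2` filters of dimension
`(f11+(f21−1)·s1) × (f12+(f22−1)·s1) × d0` and stride `s1·s2` (on the output of dimension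
`n2⁽¹⁾ × n2⁽²⁾ × d2`, where `n1⁽¹⁾ = ⌊(n01−f11)/s1⌋+1`, `n2⁽¹⁾ = ⌊(n1⁽¹⁾−f21)/s2⌋+1`, etc.). -/
theorem statement_10 (n01 n02 d0 d1 d2 f11 f12 f21 f22 s1 s2 : ℕ)
    (hs1 : 0 < s1) (hs2 : 0 < s2)
    (hf11 : f11 ≤ n01) (hf12 : f12 ≤ n02)
    (hf21 : f21 ≤ (n01 - f11) / s1 + 1) (hf22 : f22 ≤ (n02 - f12) / s1 + 1)
    (W1 : ℕ → ℕ → ℕ → ℕ → ℝ) (B1 : ℕ → ℝ) (W2 : ℕ → ℕ → ℕ → ℕ → ℝ) (B2 : ℕ → ℝ) :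
    ∃ (W : ℕ → ℕ → ℕ → ℕ → ℝ) (B : ℕ → ℝ),
      ∀ (X : Fin n01 → Fin n02 → Fin d0 → ℝ) (i j k : ℕ),
        i < ((n01 - f11) / s1 + 1 - f21) / s2 + 1 →
        j < ((n02 - f12) / s1 + 1 - f22) / s2 + 1 →
        k < d2 →
          convMapN (f11 + (f21 - 1) * s1) (f12 + (f22 - 1) * s1) d0 (s1 * s2)
              W B (inputExt X) i j k
            = convMapN f21 f22 d1 s2 W2 B2
                (convMapN f11 f12 d0 s1 W1 B1 (inputExt X)) i j k := by
  classical
  refine ⟨fun k a b c =>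
      ∑ t ∈ Finset.range f21 ×ˢ Finset.range f11,
        ∑ u ∈ Finset.range f22 ×ˢ Finset.range f12,
          if a = t.2 + t.1 * s1 ∧ b = u.2 + u.1 * s1 then
            ∑ c1 ∈ Finset.range d1, W2 k t.1 u.1 c1 * W1 c1 t.2 u.2 c
          else 0,
    fun k => (∑ p ∈ Finset.range f21, ∑ q ∈ Finset.range f22,
      ∑ c1 ∈ Finset.range d1, W2 k p q c1 * B1 c1) + B2 k, ?_⟩
  intro X i j k _ _ _
  simp only [convMapN]
  set x := inputExt X with hxdef
  have hv1 : ∀ t ∈ Finset.range f21 ×ˢ Finset.range f11,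
      t.2 + t.1 * s1 < f11 + (f21 - 1) * s1 := by
    rintro ⟨p, a1⟩ ht
    rw [Finset.mem_product, Finset.mem_range, Finset.mem_range] at ht
    have h1 : p * s1 ≤ (f21 - 1) * s1 := Nat.mul_le_mul_right _ (by omega)
    simp only
    omega
  have hv2 : ∀ u ∈ Finset.range f22 ×ˢ Finset.range f12,
      u.2 + u.1 * s1 < f12 + (f22 - 1) * s1 := by
    rintro ⟨q, b1⟩ ht
    rw [Finset.mem_product, Finset.mem_range, Finset.mem_range] at ht
    have h1 : q * s1 ≤ (f22 - 1) * s1 := Nat.mul_le_mul_right _ (by omega)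
    simp only
    omega
  have hL : (∑ a ∈ Finset.range (f11 + (f21 - 1) * s1),
      ∑ b ∈ Finset.range (f12 + (f22 - 1) * s1),
      ∑ c ∈ Finset.range d0,
        (∑ t ∈ Finset.range f21 ×ˢ Finset.range f11,
          ∑ u ∈ Finset.range f22 ×ˢ Finset.range f12,
            if a = t.2 + t.1 * s1 ∧ b = u.2 + u.1 * s1 then
              ∑ c1 ∈ Finset.range d1, W2 k t.1 u.1 c1 * W1 c1 t.2 u.2 c
            else 0) * x (a + i * (s1 * s2)) (b + j * (s1 * s2)) c)
      = ∑ t ∈ Finset.range f21 ×ˢ Finset.range f11,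
          ∑ u ∈ Finset.range f22 ×ˢ Finset.range f12,
            ∑ c ∈ Finset.range d0,
              (∑ c1 ∈ Finset.range d1, W2 k t.1 u.1 c1 * W1 c1 t.2 u.2 c) *
                x (t.2 + t.1 * s1 + i * (s1 * s2)) (u.2 + u.1 * s1 + j * (s1 * s2)) c := by
    simp only [Finset.sum_mul, ite_mul, zero_mul, ite_and]
    rw [reorder5]
    simp only [sum_ite_const]
    rw [collapse1 _ _ _ hv1]
    refine Finset.sum_congr rfl fun t _ => ?_
    rw [collapse1 _ _ _ hv2]
  rw [hL]
  simp only [Finset.sum_product]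
  simp only [Finset.sum_mul, mul_add, Finset.mul_sum, Finset.sum_add_distrib]
  rw [reorder6, ← add_assoc]
  refine congrArg₂ (· + ·) (congrArg₂ (· + ·) ?_ rfl) rfl
  refine Finset.sum_congr rfl fun p _ => Finset.sum_congr rfl fun q _ =>
    Finset.sum_congr rfl fun c1 _ => Finset.sum_congr rfl fun a1 _ =>
    Finset.sum_congr rfl fun b1 _ => Finset.sum_congr rfl fun c _ => ?_
  have e1 : a1 + p * s1 + i * (s1 * s2) = a1 + (p + i * s2) * s1 := by ring
  have e2 : b1 + q * s1 + j * (s1 * s2) = b1 + (q + j * s2) * s1 := by ring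
  rw [e1, e2, mul_assoc]


end
end
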